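/- arXiv:2004.04365 — 4 statements merged into one kernel-verified Lean document; each statement's English description precedes it below -/
import Mathlib

section
/- Let ω be an axis-aligned closed rectangle, regarded as a rectilinearly-convex obstacle. Then the singleton set consisting of either diagonal of ω is a minimum skeleton for ω. -/
set_option maxHeartbeats 1000000


open Set

/-- A point in the plane. -/
abbrev Pt : Type := ℝ × ℝ

/-- The union of a finite set of closed line segments, given by their endpoint pairs. -/
def segUnion (S : Finset (Pt × Pt)) : Set Pt := ⋃ s ∈ S, segment ℝ s.1 s.2

/-- The two candidate corner points for a shortest rectilinear path with at most one
corner point from `p` to `q`.  (If `p` and `q` are axis-aligned both candidates give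
the straight segment `pq`.) -/
def cornerPts (p q : Pt) : Set Pt := {(p.1, q.2), (q.1, p.2)}

/-- The rectilinear path from `p` to `q` through the corner point `c`. -/
def lpath (p c q : Pt) : Set Pt := segment ℝ p c ∪ segment ℝ c q

/-- The axis-aligned bounding box of a set of points. -/
noncomputable def bboxOf (X : Set Pt) : Set Pt :=
  Icc (sInf (Prod.fst '' X)) (sSup (Prod.fst '' X)) ×ˢ
    Icc (sInf (Prod.snd '' X)) (sSup (Prod.snd '' X))

/-- A compact simple rectilinear polygon in the plane that is rectilinearly convex:
it is compact, connected, has nonempty interior, every axis-parallel segment with both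
endpoints in it lies inside it (ortho-convexity; for connected rectilinear polygons this
is equivalent to rectilinear convexity), and its boundary is a finite union of
axis-parallel edges. -/
structure RectObstacle where
  carrier : Set Pt
  edges : Finset (Pt × Pt)
  compact' : IsCompact carrier
  connected' : IsConnected carrier
  interior_ne : (interior carrier).Nonempty
  ortho : ∀ a ∈ carrier, ∀ b ∈ carrier, (a.1 = b.1 ∨ a.2 = b.2) → segment ℝ a b ⊆ carrier
  boundary_eq : frontier carrier = ⋃ e ∈ edges, segment ℝ e.1 e.2
  edges_axis : ∀ e ∈ edges, e.1.1 = e.2.1 ∨ e.1.2 = e.2.2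

namespace RectObstacle

noncomputable def xmin (ω : RectObstacle) : ℝ := sInf (Prod.fst '' ω.carrier)
noncomputable def xmax (ω : RectObstacle) : ℝ := sSup (Prod.fst '' ω.carrier)
noncomputable def ymin (ω : RectObstacle) : ℝ := sInf (Prod.snd '' ω.carrier)
noncomputable def ymax (ω : RectObstacle) : ℝ := sSup (Prod.snd '' ω.carrier)

/-- The segment `s` lies inside the obstacle. -/
def InOb (ω : RectObstacle) (s : Pt × Pt) : Prop := segment ℝ s.1 s.2 ⊆ ω.carrier

/-- `S` is a skeleton for `ω`: its segments lie in `ω`, and for any two points outside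
the interior of `ω`, if every shortest rectilinear path with at most one corner point
between them meets the interior of `ω`, then each such path intersects the union of `S`. -/
def IsSkeleton (ω : RectObstacle) (S : Finset (Pt × Pt)) : Prop :=
  segUnion S ⊆ ω.carrier ∧
  ∀ p q : Pt, p ∉ interior ω.carrier → q ∉ interior ω.carrier →
    (∀ c ∈ cornerPts p q, (lpath p c q ∩ interior ω.carrier).Nonempty) →
    ∀ c ∈ cornerPts p q, (lpath p c q ∩ segUnion S).Nonempty

/-- A minimum skeleton: a skeleton with the least possible number of segments. -/
def IsMinSkeleton (ω : RectObstacle) (S : Finset (Pt × Pt)) : Prop :=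
  ω.IsSkeleton S ∧ ∀ T : Finset (Pt × Pt), ω.IsSkeleton T → S.card ≤ T.card

/-- A set `A ⊆ ω` intersects the four extreme edges of `ω` (equivalently, it contains
points at each of the four extreme coordinates of `ω`). -/
def TouchesExtremes (ω : RectObstacle) (A : Set Pt) : Prop :=
  (∃ p ∈ A, p.1 = ω.xmin) ∧ (∃ p ∈ A, p.1 = ω.xmax) ∧
  (∃ p ∈ A, p.2 = ω.ymin) ∧ (∃ p ∈ A, p.2 = ω.ymax)

/-- The set of extreme corners of `ω`: corners of its bounding box belonging to `ω`. -/
def extremeCornerSet (ω : RectObstacle) : Set Pt :=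
  ω.carrier ∩ {(ω.xmin, ω.ymin), (ω.xmax, ω.ymin), (ω.xmin, ω.ymax), (ω.xmax, ω.ymax)}

/-- `ω` has a diagonal: a segment inside `ω` joining two opposite extreme corners. -/
def HasDiagonal (ω : RectObstacle) : Prop :=
  segment ℝ (ω.xmin, ω.ymin) (ω.xmax, ω.ymax) ⊆ ω.carrier ∨
  segment ℝ (ω.xmax, ω.ymin) (ω.xmin, ω.ymax) ⊆ ω.carrier

/-- A cross: `sH` is a segment in `ω` with one endpoint on each horizontal extreme edge
and `sV` a segment in `ω` with one endpoint on each vertical extreme edge. -/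
def IsCross (ω : RectObstacle) (sH sV : Pt × Pt) : Prop :=
  ω.InOb sH ∧ ω.InOb sV ∧
  sH.1.2 = ω.ymin ∧ sH.2.2 = ω.ymax ∧ sV.1.1 = ω.xmin ∧ sV.2.1 = ω.xmax

/-- `e` is the left extreme edge of `ω`. -/
def IsLeftExtreme (ω : RectObstacle) (e : Pt × Pt) : Prop :=
  e ∈ ω.edges ∧ e.1.1 = ω.xmin ∧ e.2.1 = ω.xmin

def IsRightExtreme (ω : RectObstacle) (e : Pt × Pt) : Prop :=
  e ∈ ω.edges ∧ e.1.1 = ω.xmax ∧ e.2.1 = ω.xmax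

def IsBottomExtreme (ω : RectObstacle) (e : Pt × Pt) : Prop :=
  e ∈ ω.edges ∧ e.1.2 = ω.ymin ∧ e.2.2 = ω.ymin

def IsTopExtreme (ω : RectObstacle) (e : Pt × Pt) : Prop :=
  e ∈ ω.edges ∧ e.1.2 = ω.ymax ∧ e.2.2 = ω.ymax

/-- `e` is one of the four extreme edges of `ω`. -/
def IsExtremeEdge (ω : RectObstacle) (e : Pt × Pt) : Prop :=
  ω.IsLeftExtreme e ∨ ω.IsRightExtreme e ∨ ω.IsBottomExtreme e ∨ ω.IsTopExtreme e

/-- `s` is a maximum-length visibility edge: a segment inside `ω` that cannot be properly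
extended within `ω`. -/
def MaxLenSeg (ω : RectObstacle) (s : Pt × Pt) : Prop :=
  ω.InOb s ∧ ∀ t : Pt × Pt, segment ℝ s.1 s.2 ⊆ segment ℝ t.1 t.2 → ω.InOb t →
    segment ℝ t.1 t.2 = segment ℝ s.1 s.2

end RectObstacle

/-- The set `A` is weakly connected: treating each maximal connected component as a
vertex, with components `C`, `D` adjacent whenever `C` meets the bounding box of `D`
and `D` meets the bounding box of `C`, the resulting graph is connected. -/
def WeaklyConnected (A : Set Pt) : Prop :=
  ∀ x ∈ A, ∀ y ∈ A,
    Relation.ReflTransGen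
      (fun C D : Set Pt =>
        (∃ a ∈ A, C = connectedComponentIn A a) ∧
        (∃ b ∈ A, D = connectedComponentIn A b) ∧
        (C ∩ bboxOf D).Nonempty ∧ (D ∩ bboxOf C).Nonempty)
      (connectedComponentIn A x) (connectedComponentIn A y)

section Aux

lemma seg_fst {u v w : Pt} (h : w ∈ segment ℝ u v) : w.1 ∈ segment ℝ u.1 v.1 := by
  obtain ⟨s, t, hs, ht, hst, hw⟩ := h
  exact ⟨s, t, hs, ht, hst, by rw [← hw]; simp [smul_eq_mul]⟩

lemma seg_snd {u v w : Pt} (h : w ∈ segment ℝ u v) : w.2 ∈ segment ℝ u.2 v.2 := by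
  obtain ⟨s, t, hs, ht, hst, hw⟩ := h
  exact ⟨s, t, hs, ht, hst, by rw [← hw]; simp [smul_eq_mul]⟩

lemma seg_fst_const {u v w : Pt} (h : w ∈ segment ℝ u v) (he : u.1 = v.1) : w.1 = u.1 := by
  have h1 := seg_fst h
  rw [← he, segment_same] at h1
  exact h1

lemma seg_snd_const {u v w : Pt} (h : w ∈ segment ℝ u v) (he : u.2 = v.2) : w.2 = u.2 := by
  have h1 := seg_snd h
  rw [← he, segment_same] at h1
  exact h1

lemma mem_seg_vert {x y1 y2 y : ℝ} (h : y ∈ segment ℝ y1 y2) :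
    ((x, y) : Pt) ∈ segment ℝ (x, y1) (x, y2) := by
  obtain ⟨s, t, hs, ht, hst, hy⟩ := h
  simp only [smul_eq_mul] at hy
  refine ⟨s, t, hs, ht, hst, ?_⟩
  apply Prod.ext <;> simp [smul_eq_mul]
  · linear_combination x * hst
  · linear_combination hy

lemma mem_seg_horiz {y x1 x2 x : ℝ} (h : x ∈ segment ℝ x1 x2) :
    ((x, y) : Pt) ∈ segment ℝ (x1, y) (x2, y) := by
  obtain ⟨s, t, hs, ht, hst, hx⟩ := h
  simp only [smul_eq_mul] at hx
  refine ⟨s, t, hs, ht, hst, ?_⟩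
  apply Prod.ext <;> simp [smul_eq_mul]
  · linear_combination hx
  · linear_combination y * hst

lemma seg_refl_y {k : ℝ} {u v w : Pt} (h : w ∈ segment ℝ u v) :
    ((w.1, k - w.2) : Pt) ∈ segment ℝ (u.1, k - u.2) (v.1, k - v.2) := by
  obtain ⟨s, t, hs, ht, hst, hw⟩ := h
  have h1 : s * u.1 + t * v.1 = w.1 := by rw [← hw]; simp [smul_eq_mul]
  have h2 : s * u.2 + t * v.2 = w.2 := by rw [← hw]; simp [smul_eq_mul]
  refine ⟨s, t, hs, ht, hst, ?_⟩
  apply Prod.ext <;> simp [smul_eq_mul]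
  · exact h1
  · linear_combination k * hst - h2

lemma diag_mem {a b c d x y : ℝ} (hab : a < b) (hx : a ≤ x) (hx' : x ≤ b)
    (h : (y - c) * (b - a) = (x - a) * (d - c)) :
    ((x, y) : Pt) ∈ segment ℝ (a, c) (b, d) := by
  have hba : (0:ℝ) < b - a := by linarith
  have hba' : b - a ≠ 0 := hba.ne'
  refine ⟨1 - (x - a)/(b - a), (x - a)/(b - a), ?_, ?_, by ring, ?_⟩
  · have : (x - a)/(b - a) ≤ 1 := by rw [div_le_one hba]; linarith
    linarith
  · exact div_nonneg (by linarith) hba.le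
  · apply Prod.ext <;> simp [smul_eq_mul]
    · field_simp
      ring
    · field_simp
      linarith [h]

lemma P2_miss {a b c d : ℝ} {p q : Pt}
    (hx : q.1 ≤ a ∨ b ≤ q.1) (hy : p.2 ≤ c ∨ d ≤ p.2)
    (h2 : ((lpath p (q.1, p.2) q) ∩ Ioo a b ×ˢ Ioo c d).Nonempty) : False := by
  obtain ⟨w, hw, hw1, hw2⟩ := h2
  cases hw with
  | inl hw =>
    have hwy : w.2 = p.2 := seg_snd_const hw rfl
    rcases hy with h | h
    · exact absurd hw2.1 (by rw [hwy]; linarith)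
    · exact absurd hw2.2 (by rw [hwy]; linarith)
  | inr hw =>
    have hwx : w.1 = q.1 := by simpa using seg_fst_const hw rfl
    rcases hx with h | h
    · exact absurd hw1.1 (by rw [hwx]; linarith)
    · exact absurd hw1.2 (by rw [hwx]; linarith)

lemma key {a b c d : ℝ} (hab : a < b) (hcd : c < d) (p q : Pt)
    (hp : p ∉ Ioo a b ×ˢ Ioo c d) (hq : q ∉ Ioo a b ×ˢ Ioo c d)
    (h1 : ((lpath p (p.1, q.2) q) ∩ Ioo a b ×ˢ Ioo c d).Nonempty)
    (h2 : ((lpath p (q.1, p.2) q) ∩ Ioo a b ×ˢ Ioo c d).Nonempty) :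
    ((lpath p (p.1, q.2) q) ∩ segment ℝ (a, c) (b, d)).Nonempty := by
  have hba : (0:ℝ) < b - a := by linarith
  have hdc : (0:ℝ) < d - c := by linarith
  have hba' : b - a ≠ 0 := hba.ne'
  have hdc' : d - c ≠ 0 := hdc.ne'
  obtain ⟨w, hw, hw1, hw2⟩ := h1
  cases hw with
  | inl hv =>
    -- vertical piece: w.1 = p.1
    have hwx : w.1 = p.1 := seg_fst_const hv rfl
    have hwy : w.2 ∈ uIcc p.2 q.2 := by
      have := seg_snd hv; rwa [segment_eq_uIcc] at this
    rw [Set.uIcc, Set.mem_Icc] at hwy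
    have hp1a : a < p.1 := hwx ▸ hw1.1
    have hp1b : p.1 < b := hwx ▸ hw1.2
    have hp2 : p.2 ≤ c ∨ d ≤ p.2 := by
      by_contra hcon; push_neg at hcon
      exact hp ⟨⟨hp1a, hp1b⟩, hcon.1, hcon.2⟩
    set y0 := c + (p.1 - a) * (d - c) / (b - a) with hy0def
    have hy0 : (y0 - c) * (b - a) = (p.1 - a) * (d - c) := by
      rw [hy0def]; field_simp; ring
    have hy0c : c < y0 := by nlinarith [mul_pos (sub_pos.mpr hp1a) hdc]
    have hy0d : y0 < d := by nlinarith [mul_pos (sub_pos.mpr (show p.1 < b from hp1b)) hdc]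
    by_cases hy0in : y0 ∈ uIcc p.2 q.2
    · refine ⟨(p.1, y0), Or.inl ?_, diag_mem hab hp1a.le hp1b.le hy0⟩
      have := mem_seg_vert (x := p.1) (by rw [segment_eq_uIcc]; exact hy0in)
      rwa [Prod.mk.eta] at this
    · rw [Set.uIcc, Set.mem_Icc] at hy0in; push_neg at hy0in
      rcases hp2 with hp2c | hp2d
      · -- p below: q.2 ∈ (c, y0)
        have hq2y0 : q.2 < y0 := by
          have hinf : p.2 ⊓ q.2 ≤ y0 := le_trans inf_le_left (by linarith)
          exact lt_of_le_of_lt le_sup_right (hy0in hinf)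
        have hq2c : c < q.2 := by
          have : c < p.2 ⊔ q.2 := lt_of_lt_of_le hw2.1 hwy.2
          rcases lt_sup_iff.mp this with h | h
          · linarith
          · exact h
        have hq1 : q.1 ≤ a ∨ b ≤ q.1 := by
          by_contra hcon; push_neg at hcon
          exact hq ⟨⟨hcon.1, hcon.2⟩, hq2c, by linarith⟩
        rcases hq1 with hq1a | hq1b
        · set x0 := a + (q.2 - c) * (b - a) / (d - c) with hx0def
          have hx0 : (x0 - a) * (d - c) = (q.2 - c) * (b - a) := by
            rw [hx0def]; field_simp; ring
          have hx0a : a < x0 := by nlinarith [mul_pos (sub_pos.mpr hq2c) hba]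
          have hx0p1 : x0 < p.1 := by
            nlinarith [mul_lt_mul_of_pos_right hq2y0 hba]
          refine ⟨(x0, q.2), Or.inr ?_, diag_mem hab hx0a.le (by linarith) hx0.symm⟩
          have := mem_seg_horiz (y := q.2) (x1 := p.1) (x2 := q.1) (x := x0)
            (by rw [segment_eq_uIcc]; exact Set.mem_uIcc.mpr (Or.inr ⟨by linarith, hx0p1.le⟩))
          rwa [Prod.mk.eta] at this
        · exact absurd h2 (fun h => P2_miss (Or.inr hq1b) (Or.inl hp2c) h)
      · -- p above: q.2 ∈ (y0, d)
        have hy0q2 : y0 < q.2 := by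
          rcases lt_or_ge y0 (p.2 ⊓ q.2) with h | h
          · exact lt_of_lt_of_le h inf_le_right
          · exact absurd (hy0in h) (by push_neg; exact le_trans (by linarith : y0 ≤ p.2) le_sup_left)
        have hq2d : q.2 < d := by
          have : p.2 ⊓ q.2 < d := lt_of_le_of_lt hwy.1 hw2.2
          rcases inf_lt_iff.mp this with h | h
          · linarith
          · exact h
        have hq1 : q.1 ≤ a ∨ b ≤ q.1 := by
          by_contra hcon; push_neg at hcon
          exact hq ⟨⟨hcon.1, hcon.2⟩, by linarith, hq2d⟩
        rcases hq1 with hq1a | hq1b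
        · exact absurd h2 (fun h => P2_miss (Or.inl hq1a) (Or.inr hp2d) h)
        · set x0 := a + (q.2 - c) * (b - a) / (d - c) with hx0def
          have hx0 : (x0 - a) * (d - c) = (q.2 - c) * (b - a) := by
            rw [hx0def]; field_simp; ring
          have hx0b : x0 < b := by
            nlinarith [mul_lt_mul_of_pos_right hq2d hba]
          have hp1x0 : p.1 < x0 := by
            nlinarith [mul_lt_mul_of_pos_right hy0q2 hba]
          refine ⟨(x0, q.2), Or.inr ?_, diag_mem hab (by linarith) hx0b.le hx0.symm⟩
          have := mem_seg_horiz (y := q.2) (x1 := p.1) (x2 := q.1) (x := x0)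
            (by rw [segment_eq_uIcc]; exact Set.mem_uIcc.mpr (Or.inl ⟨hp1x0.le, by linarith⟩))
          rwa [Prod.mk.eta] at this
  | inr hh =>
    -- horizontal piece: w.2 = q.2
    have hwy : w.2 = q.2 := by simpa using seg_snd_const hh rfl
    have hwx : w.1 ∈ uIcc p.1 q.1 := by
      have := seg_fst hh; rwa [segment_eq_uIcc] at this
    rw [Set.uIcc, Set.mem_Icc] at hwx
    have hq2c : c < q.2 := hwy ▸ hw2.1
    have hq2d : q.2 < d := hwy ▸ hw2.2
    have hq1 : q.1 ≤ a ∨ b ≤ q.1 := by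
      by_contra hcon; push_neg at hcon
      exact hq ⟨⟨hcon.1, hcon.2⟩, hq2c, hq2d⟩
    set x0 := a + (q.2 - c) * (b - a) / (d - c) with hx0def
    have hx0 : (x0 - a) * (d - c) = (q.2 - c) * (b - a) := by
      rw [hx0def]; field_simp; ring
    have hx0a : a < x0 := by nlinarith [mul_pos (sub_pos.mpr hq2c) hba]
    have hx0b : x0 < b := by nlinarith [mul_lt_mul_of_pos_right hq2d hba]
    by_cases hx0in : x0 ∈ uIcc p.1 q.1
    · refine ⟨(x0, q.2), Or.inr ?_, diag_mem hab hx0a.le hx0b.le hx0.symm⟩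
      have := mem_seg_horiz (y := q.2) (by rw [segment_eq_uIcc]; exact hx0in)
      rwa [Prod.mk.eta] at this
    · rw [Set.uIcc, Set.mem_Icc] at hx0in; push_neg at hx0in
      rcases hq1 with hq1a | hq1b
      · -- q left: p.1 ∈ (a, x0)
        have hp1x0 : p.1 < x0 := by
          have hinf : p.1 ⊓ q.1 ≤ x0 := le_trans inf_le_right (by linarith)
          exact lt_of_le_of_lt le_sup_left (hx0in hinf)
        have hp1a : a < p.1 := by
          have : a < p.1 ⊔ q.1 := lt_of_lt_of_le hw1.1 hwx.2
          rcases lt_sup_iff.mp this with h | h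
          · exact h
          · linarith
        set y0 := c + (p.1 - a) * (d - c) / (b - a) with hy0def
        have hy0 : (y0 - c) * (b - a) = (p.1 - a) * (d - c) := by
          rw [hy0def]; field_simp; ring
        have hy0c : c < y0 := by nlinarith [mul_pos (sub_pos.mpr hp1a) hdc]
        have hy0q2 : y0 < q.2 := by
          nlinarith [mul_lt_mul_of_pos_right hp1x0 hdc]
        have hp2 : p.2 ≤ c ∨ d ≤ p.2 := by
          by_contra hcon; push_neg at hcon
          exact hp ⟨⟨hp1a, by linarith⟩, hcon.1, hcon.2⟩
        rcases hp2 with hp2c | hp2d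
        · refine ⟨(p.1, y0), Or.inl ?_, diag_mem hab hp1a.le (by linarith) hy0⟩
          have := mem_seg_vert (x := p.1) (y1 := p.2) (y2 := q.2) (y := y0)
            (by rw [segment_eq_uIcc]; exact Set.mem_uIcc.mpr (Or.inl ⟨by linarith, hy0q2.le⟩))
          rwa [Prod.mk.eta] at this
        · exact absurd h2 (fun h => P2_miss (Or.inl hq1a) (Or.inr hp2d) h)
      · -- q right: p.1 ∈ (x0, b)
        have hx0p1 : x0 < p.1 := by
          rcases lt_or_ge x0 (p.1 ⊓ q.1) with h | h
          · exact lt_of_lt_of_le h inf_le_left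
          · exact absurd (hx0in h) (by push_neg; exact le_trans (by linarith : x0 ≤ q.1) le_sup_right)
        have hp1b : p.1 < b := by
          have : p.1 ⊓ q.1 < b := lt_of_le_of_lt hwx.1 hw1.2
          rcases inf_lt_iff.mp this with h | h
          · exact h
          · linarith
        set y0 := c + (p.1 - a) * (d - c) / (b - a) with hy0def
        have hy0 : (y0 - c) * (b - a) = (p.1 - a) * (d - c) := by
          rw [hy0def]; field_simp; ring
        have hy0d : y0 < d := by nlinarith [mul_pos (sub_pos.mpr hp1b) hdc]
        have hq2y0 : q.2 < y0 := by
          nlinarith [mul_lt_mul_of_pos_right hx0p1 hdc]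
        have hp2 : p.2 ≤ c ∨ d ≤ p.2 := by
          by_contra hcon; push_neg at hcon
          exact hp ⟨⟨by linarith, hp1b⟩, hcon.1, hcon.2⟩
        rcases hp2 with hp2c | hp2d
        · exact absurd h2 (fun h => P2_miss (Or.inr hq1b) (Or.inl hp2c) h)
        · refine ⟨(p.1, y0), Or.inl ?_, diag_mem hab (by linarith) hp1b.le hy0⟩
          have := mem_seg_vert (x := p.1) (y1 := p.2) (y2 := q.2) (y := y0)
            (by rw [segment_eq_uIcc]; exact Set.mem_uIcc.mpr (Or.inr ⟨hq2y0.le, by linarith⟩))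
          rwa [Prod.mk.eta] at this

lemma segUnion_singleton (e : Pt × Pt) : segUnion {e} = segment ℝ e.1 e.2 := by
  simp [segUnion]

lemma lpath_comm (p c q : Pt) : lpath p c q = lpath q c p := by
  rw [lpath, lpath, segment_symm ℝ q c, segment_symm ℝ c p, Set.union_comm]

lemma refl_O {a b c d : ℝ} {z : Pt} (h : z ∈ Ioo a b ×ˢ Ioo c d) :
    ((z.1, c + d - z.2) : Pt) ∈ Ioo a b ×ˢ Ioo c d := by
  obtain ⟨h1, h2⟩ := h
  refine ⟨h1, ?_⟩
  simp only [Set.mem_Ioo] at h2 ⊢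
  exact ⟨by linarith [h2.2], by linarith [h2.1]⟩

lemma refl_lpath1 {k : ℝ} {p q z : Pt} (h : z ∈ lpath p (p.1, q.2) q) :
    ((z.1, k - z.2) : Pt) ∈
      lpath (p.1, k - p.2) ((p.1, k - p.2).1, (q.1, k - q.2).2) (q.1, k - q.2) := by
  rcases h with h | h
  · exact Or.inl (by simpa using seg_refl_y (k := k) h)
  · exact Or.inr (by simpa using seg_refl_y (k := k) h)

lemma refl_lpath2 {k : ℝ} {p q z : Pt} (h : z ∈ lpath p (q.1, p.2) q) :
    ((z.1, k - z.2) : Pt) ∈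
      lpath (p.1, k - p.2) ((q.1, k - q.2).1, (p.1, k - p.2).2) (q.1, k - q.2) := by
  rcases h with h | h
  · exact Or.inl (by simpa using seg_refl_y (k := k) h)
  · exact Or.inr (by simpa using seg_refl_y (k := k) h)

lemma key2 {a b c d : ℝ} (hab : a < b) (hcd : c < d) (p q : Pt)
    (hp : p ∉ Ioo a b ×ˢ Ioo c d) (hq : q ∉ Ioo a b ×ˢ Ioo c d)
    (h1 : ((lpath p (p.1, q.2) q) ∩ Ioo a b ×ˢ Ioo c d).Nonempty)
    (h2 : ((lpath p (q.1, p.2) q) ∩ Ioo a b ×ˢ Ioo c d).Nonempty) :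
    ((lpath p (p.1, q.2) q) ∩ segment ℝ (a, d) (b, c)).Nonempty := by
  have hp' : ((p.1, c + d - p.2) : Pt) ∉ Ioo a b ×ˢ Ioo c d :=
    fun h => hp (by simpa using refl_O h)
  have hq' : ((q.1, c + d - q.2) : Pt) ∉ Ioo a b ×ˢ Ioo c d :=
    fun h => hq (by simpa using refl_O h)
  have h1' : ((lpath (p.1, c + d - p.2) ((p.1, c + d - p.2).1, (q.1, c + d - q.2).2)
      (q.1, c + d - q.2)) ∩ Ioo a b ×ˢ Ioo c d).Nonempty := by
    obtain ⟨w, hw, hwO⟩ := h1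
    exact ⟨(w.1, c + d - w.2), refl_lpath1 hw, refl_O hwO⟩
  have h2' : ((lpath (p.1, c + d - p.2) ((q.1, c + d - q.2).1, (p.1, c + d - p.2).2)
      (q.1, c + d - q.2)) ∩ Ioo a b ×ˢ Ioo c d).Nonempty := by
    obtain ⟨w, hw, hwO⟩ := h2
    exact ⟨(w.1, c + d - w.2), refl_lpath2 hw, refl_O hwO⟩
  obtain ⟨w, hwl, hwd⟩ := key hab hcd (p.1, c + d - p.2) (q.1, c + d - q.2) hp' hq' h1' h2'
  refine ⟨(w.1, c + d - w.2), ?_, ?_⟩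
  · have := refl_lpath1 (k := c + d) hwl
    simpa using this
  · have := seg_refl_y (k := c + d) hwd
    simpa using this

end Aux

/-- for a rectangle, either diagonal is a minimum skeleton. -/
theorem rectangle_diagonal_is_min_skeleton (ω : RectObstacle) (a b c d : ℝ)
    (hab : a < b) (hcd : c < d) (hω : ω.carrier = Icc a b ×ˢ Icc c d) :
    ω.IsMinSkeleton {((a, c), (b, d))} ∧ ω.IsMinSkeleton {((a, d), (b, c))} := by
  have hO : interior ω.carrier = Ioo a b ×ˢ Ioo c d := by
    rw [hω, interior_prod_eq, interior_Icc, interior_Icc]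
  have hconv : Convex ℝ ω.carrier := by
    rw [hω]; exact (convex_Icc a b).prod (convex_Icc c d)
  have hmem : ∀ x y : ℝ, x ∈ Icc a b → y ∈ Icc c d → ((x, y) : Pt) ∈ ω.carrier := by
    intro x y hx hy; rw [hω]; exact ⟨hx, hy⟩
  have hmin : ∀ T : Finset (Pt × Pt), ω.IsSkeleton T → 1 ≤ T.card := by
    intro T hT
    have hmid : (((a + b) / 2, (c + d) / 2) : Pt) ∈ interior ω.carrier := by
      rw [hO]
      exact ⟨⟨by linarith, by linarith⟩, ⟨by linarith, by linarith⟩⟩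
    have hseg : ((a + b) / 2 : ℝ) ∈ segment ℝ a b := by
      rw [segment_eq_uIcc]
      exact Set.mem_uIcc.mpr (Or.inl ⟨by linarith, by linarith⟩)
    have hall : ∀ cc ∈ cornerPts ((a, (c + d) / 2) : Pt) ((b, (c + d) / 2) : Pt),
        (lpath (a, (c + d) / 2) cc (b, (c + d) / 2) ∩ interior ω.carrier).Nonempty := by
      intro cc hcc
      simp only [cornerPts, Set.mem_insert_iff, Set.mem_singleton_iff] at hcc
      rcases hcc with rfl | rfl
      · exact ⟨((a + b) / 2, (c + d) / 2), Or.inr (mem_seg_horiz hseg), hmid⟩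
      · exact ⟨((a + b) / 2, (c + d) / 2), Or.inl (mem_seg_horiz hseg), hmid⟩
    have hp : ((a, (c + d) / 2) : Pt) ∉ interior ω.carrier := by
      rw [hO]; rintro ⟨h1, -⟩; exact lt_irrefl a h1.1
    have hq : ((b, (c + d) / 2) : Pt) ∉ interior ω.carrier := by
      rw [hO]; rintro ⟨h1, -⟩; exact lt_irrefl b h1.2
    have hcorn : ((a, (c + d) / 2) : Pt) ∈ cornerPts ((a, (c + d) / 2) : Pt)
        ((b, (c + d) / 2) : Pt) := by simp [cornerPts]
    obtain ⟨w, -, hw⟩ := hT.2 _ _ hp hq hall _ hcorn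
    simp only [segUnion, Set.mem_iUnion] at hw
    obtain ⟨s, hs, -⟩ := hw
    exact Finset.one_le_card.mpr ⟨s, hs⟩
  have hskel1 : ω.IsSkeleton {((a, c), (b, d))} := by
    refine ⟨?_, ?_⟩
    · rw [segUnion_singleton]
      exact hconv.segment_subset (hmem a c ⟨le_rfl, hab.le⟩ ⟨le_rfl, hcd.le⟩)
        (hmem b d ⟨hab.le, le_rfl⟩ ⟨hcd.le, le_rfl⟩)
    · intro p q hp hq hall cc hcc
      rw [hO] at hp hq
      have h1 := hall (p.1, q.2) (by simp [cornerPts])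
      have h2 := hall (q.1, p.2) (by simp [cornerPts])
      rw [hO] at h1 h2
      rw [segUnion_singleton]
      simp only [cornerPts, Set.mem_insert_iff, Set.mem_singleton_iff] at hcc
      rcases hcc with rfl | rfl
      · exact key hab hcd p q hp hq h1 h2
      · have h1' : ((lpath q (q.1, p.2) p) ∩ Ioo a b ×ˢ Ioo c d).Nonempty := by
          rwa [lpath_comm] at h2
        have h2' : ((lpath q (p.1, q.2) p) ∩ Ioo a b ×ˢ Ioo c d).Nonempty := by
          rwa [lpath_comm] at h1
        have hres := key hab hcd q p hq hp h1' h2'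
        rwa [lpath_comm] at hres
  have hskel2 : ω.IsSkeleton {((a, d), (b, c))} := by
    refine ⟨?_, ?_⟩
    · rw [segUnion_singleton]
      exact hconv.segment_subset (hmem a d ⟨le_rfl, hab.le⟩ ⟨hcd.le, le_rfl⟩)
        (hmem b c ⟨hab.le, le_rfl⟩ ⟨le_rfl, hcd.le⟩)
    · intro p q hp hq hall cc hcc
      rw [hO] at hp hq
      have h1 := hall (p.1, q.2) (by simp [cornerPts])
      have h2 := hall (q.1, p.2) (by simp [cornerPts])
      rw [hO] at h1 h2
      rw [segUnion_singleton]
      simp only [cornerPts, Set.mem_insert_iff, Set.mem_singleton_iff] at hcc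
      rcases hcc with rfl | rfl
      · exact key2 hab hcd p q hp hq h1 h2
      · have h1' : ((lpath q (q.1, p.2) p) ∩ Ioo a b ×ˢ Ioo c d).Nonempty := by
          rwa [lpath_comm] at h2
        have h2' : ((lpath q (p.1, q.2) p) ∩ Ioo a b ×ˢ Ioo c d).Nonempty := by
          rwa [lpath_comm] at h1
        have hres := key2 hab hcd q p hq hp h1' h2'
        rwa [lpath_comm] at hres
  exact ⟨⟨hskel1, fun T hT => by simpa using hmin T hT⟩,
    ⟨hskel2, fun T hT => by simpa using hmin T hT⟩⟩
end

section
/- Let ω be an L-obstacle, i.e., a rectilinearly-convex obstacle with exactly three extreme corners. Then ω contains a cross: in particular, the two extreme edges of ω both of whose endpoints are extreme corners form a cross, and hence the minimum skeleton of ω has at most 2 segments. -/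
open Set

lemma seg_vert {a b : Pt} (hab : a.1 = b.1) {w : Pt} :
    w ∈ segment ℝ a b ↔ w.1 = a.1 ∧ w.2 ∈ uIcc a.2 b.2 := by
  constructor
  · rintro ⟨s, t, hs, ht, hst, h⟩
    have h1 := congrArg Prod.fst h
    have h2 := congrArg Prod.snd h
    simp [Prod.smul_def, smul_eq_mul] at h1 h2
    constructor
    · linear_combination a.1 * hst - h1 - t * hab
    · rw [← segment_eq_uIcc]
      exact ⟨s, t, hs, ht, hst, by simpa using h2⟩
  · rintro ⟨h1, h2⟩
    rw [← segment_eq_uIcc] at h2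
    obtain ⟨s, t, hs, ht, hst, h⟩ := h2
    refine ⟨s, t, hs, ht, hst, ?_⟩
    apply Prod.ext
    · simp only [Prod.fst_add, Prod.smul_fst, smul_eq_mul]
      linear_combination a.1 * hst - h1 - t * hab
    · simpa [Prod.smul_def, smul_eq_mul] using h

lemma seg_horiz {a b : Pt} (hab : a.2 = b.2) {w : Pt} :
    w ∈ segment ℝ a b ↔ w.2 = a.2 ∧ w.1 ∈ uIcc a.1 b.1 := by
  constructor
  · rintro ⟨s, t, hs, ht, hst, h⟩
    have h1 := congrArg Prod.fst h
    have h2 := congrArg Prod.snd h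
    simp [Prod.smul_def, smul_eq_mul] at h1 h2
    constructor
    · linear_combination a.2 * hst - h2 - t * hab
    · rw [← segment_eq_uIcc]
      exact ⟨s, t, hs, ht, hst, by simpa using h1⟩
  · rintro ⟨h1, h2⟩
    rw [← segment_eq_uIcc] at h2
    obtain ⟨s, t, hs, ht, hst, h⟩ := h2
    refine ⟨s, t, hs, ht, hst, ?_⟩
    apply Prod.ext
    · simpa [Prod.smul_def, smul_eq_mul] using h
    · simp only [Prod.snd_add, Prod.smul_snd, smul_eq_mul]
      linear_combination a.2 * hst - h1 - t * hab

lemma uIcc_e {e a b : ℝ} (he : e = 1 ∨ e = -1) (hab : e*a ≤ e*b) (x : ℝ) :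
    x ∈ uIcc a b ↔ (e*a ≤ e*x ∧ e*x ≤ e*b) := by
  rcases he with rfl | rfl
  · rw [uIcc_of_le (by linarith), mem_Icc]
    constructor <;> rintro ⟨h1, h2⟩ <;> constructor <;> linarith
  · rw [uIcc_of_ge (by linarith), mem_Icc]
    constructor <;> rintro ⟨h1, h2⟩ <;> constructor <;> linarith

lemma seg_map (e₁ e₂ : ℝ) {x y z : Pt} (h : z ∈ segment ℝ x y) :
    ((e₁*z.1, e₂*z.2) : Pt) ∈ segment ℝ (e₁*x.1, e₂*x.2) (e₁*y.1, e₂*y.2) := by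
  obtain ⟨s, t, hs, ht, hst, h⟩ := h
  have h1 := congrArg Prod.fst h
  have h2 := congrArg Prod.snd h
  simp [Prod.smul_def, smul_eq_mul] at h1 h2
  refine ⟨s, t, hs, ht, hst, ?_⟩
  apply Prod.ext
  · simp only [Prod.fst_add, Prod.smul_fst, smul_eq_mul]
    linear_combination e₁ * h1
  · simp only [Prod.snd_add, Prod.smul_snd, smul_eq_mul]
    linear_combination e₂ * h2

lemma blocked (I : Set Pt) (x0 x1 y0 y1 : ℝ)
    (hbox : ∀ z ∈ I, x0 < z.1 ∧ z.1 < x1 ∧ y0 < z.2 ∧ z.2 < y1)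
    (hsh : ∀ z ∈ I, ∀ w : Pt, x0 < w.1 → w.1 ≤ z.1 → y0 < w.2 → w.2 ≤ z.2 → w ∈ I)
    (p q : Pt) (hp : p ∉ I) (hq : q ∉ I)
    (h1 : ∃ z ∈ lpath p (p.1, q.2) q, z ∈ I)
    (h2 : ∃ z ∈ lpath p (q.1, p.2) q, z ∈ I) :
    ∃ w ∈ lpath p (p.1, q.2) q,
      (w.1 = x0 ∧ y0 ≤ w.2 ∧ w.2 ≤ y1) ∨ (w.2 = y0 ∧ x0 ≤ w.1 ∧ w.1 ≤ x1) := by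
  have hsegA : ∀ w : Pt, w ∈ segment ℝ p (p.1, q.2) ↔ w.1 = p.1 ∧ w.2 ∈ uIcc p.2 q.2 :=
    fun w => seg_vert (a := p) (b := (p.1, q.2)) rfl
  have hsegB : ∀ w : Pt, w ∈ segment ℝ (p.1, q.2) q ↔ w.2 = q.2 ∧ w.1 ∈ uIcc p.1 q.1 :=
    fun w => seg_horiz (a := (p.1, q.2)) (b := q) rfl
  have hsegC : ∀ w : Pt, w ∈ segment ℝ p (q.1, p.2) ↔ w.2 = p.2 ∧ w.1 ∈ uIcc p.1 q.1 :=
    fun w => seg_horiz (a := p) (b := (q.1, p.2)) rfl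
  have hsegD : ∀ w : Pt, w ∈ segment ℝ (q.1, p.2) q ↔ w.1 = q.1 ∧ w.2 ∈ uIcc p.2 q.2 :=
    fun w => seg_vert (a := (q.1, p.2)) (b := q) rfl
  by_contra hcon
  have hC : ∀ w : Pt, w ∈ lpath p (p.1, q.2) q →
      ¬((w.1 = x0 ∧ y0 ≤ w.2 ∧ w.2 ≤ y1) ∨ (w.2 = y0 ∧ x0 ≤ w.1 ∧ w.1 ≤ x1)) :=
    fun w hw hor => hcon ⟨w, hw, hor⟩
  obtain ⟨z, hzl, hzI⟩ := h1
  obtain ⟨hx0z, hzx1, hy0z, hzy1⟩ := hbox z hzI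
  rcases hzl with hz | hz
  · -- Case A : z on the vertical part of path 1
    rw [hsegA] at hz
    obtain ⟨hz1, hz2⟩ := hz
    rw [mem_uIcc] at hz2
    have hx0p : x0 < p.1 := hz1 ▸ hx0z
    have hpx1 : p.1 < x1 := hz1 ▸ hzx1
    have hp2 : y0 < p.2 := by
      by_contra h; push_neg at h
      have hy : y0 ∈ uIcc p.2 q.2 := by
        rcases hz2 with ⟨ha, hb⟩ | ⟨ha, hb⟩
        · exact mem_uIcc.2 (Or.inl ⟨h, by linarith⟩)
        · exact absurd rfl (by intro _; linarith : ¬ (0:ℝ) = 0)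
      exact hC (p.1, y0) (Or.inl ((hsegA _).2 ⟨rfl, hy⟩))
        (Or.inr ⟨rfl, by simp; linarith, by simp; linarith⟩)
    have hq2 : y0 < q.2 := by
      by_contra h; push_neg at h
      have hy : y0 ∈ uIcc p.2 q.2 := by
        rcases hz2 with ⟨ha, hb⟩ | ⟨ha, hb⟩
        · exact absurd rfl (by intro _; linarith : ¬ (0:ℝ) = 0)
        · exact mem_uIcc.2 (Or.inr ⟨h, by linarith⟩)
      exact hC (p.1, y0) (Or.inl ((hsegA _).2 ⟨rfl, hy⟩))
        (Or.inr ⟨rfl, by simp; linarith, by simp; linarith⟩)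
    have hpz : z.2 < p.2 := by
      by_contra h; push_neg at h
      exact hp (hsh z hzI p hx0p (le_of_eq hz1.symm) hp2 h)
    have hq2z : q.2 ≤ z.2 := by rcases hz2 with ⟨ha, hb⟩ | ⟨ha, hb⟩ <;> linarith
    have hqx : x0 < q.1 := by
      by_contra h; push_neg at h
      have hx : x0 ∈ uIcc p.1 q.1 := mem_uIcc.2 (Or.inr ⟨h, by linarith⟩)
      exact hC (x0, q.2) (Or.inr ((hsegB _).2 ⟨rfl, hx⟩))
        (Or.inl ⟨rfl, by simp; linarith, by simp; linarith⟩)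
    have hpq1 : p.1 < q.1 := by
      by_contra h; push_neg at h
      exact hq (hsh z hzI q hqx (by rw [hz1]; exact h) hq2 hq2z)
    obtain ⟨w, hwl, hwI⟩ := h2
    rcases hwl with hw | hw
    · rw [hsegC] at hw
      obtain ⟨hw2, hw1⟩ := hw
      rw [mem_uIcc] at hw1
      have hple : p.1 ≤ w.1 := by rcases hw1 with ⟨ha, hb⟩ | ⟨ha, hb⟩ <;> linarith
      exact hp (hsh w hwI p hx0p hple hp2 (le_of_eq hw2.symm))
    · rw [hsegD] at hw
      obtain ⟨hw1, hw2⟩ := hw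
      rw [mem_uIcc] at hw2
      have hqle : q.2 ≤ w.2 := by rcases hw2 with ⟨ha, hb⟩ | ⟨ha, hb⟩ <;> linarith
      exact hq (hsh w hwI q hqx (le_of_eq hw1.symm) hq2 hqle)
  · -- Case B : z on the horizontal part of path 1
    rw [hsegB] at hz
    obtain ⟨hz2, hz1⟩ := hz
    rw [mem_uIcc] at hz1
    have hy0q : y0 < q.2 := hz2 ▸ hy0z
    have hqy1 : q.2 < y1 := hz2 ▸ hzy1
    have hq1 : x0 < q.1 := by
      by_contra h; push_neg at h
      have hx : x0 ∈ uIcc p.1 q.1 := by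
        rcases hz1 with ⟨ha, hb⟩ | ⟨ha, hb⟩
        · exact mem_uIcc.2 (Or.inr ⟨h, by linarith⟩)
        · exact mem_uIcc.2 (Or.inr ⟨h, by linarith⟩)
      exact hC (x0, q.2) (Or.inr ((hsegB _).2 ⟨rfl, hx⟩))
        (Or.inl ⟨rfl, by simp; linarith, by simp; linarith⟩)
    have hp1 : x0 < p.1 := by
      by_contra h; push_neg at h
      have hx : x0 ∈ uIcc p.1 q.1 := mem_uIcc.2 (Or.inl ⟨h, le_of_lt hq1⟩)
      exact hC (x0, q.2) (Or.inr ((hsegB _).2 ⟨rfl, hx⟩))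
        (Or.inl ⟨rfl, by simp; linarith, by simp; linarith⟩)
    have hzq1 : z.1 < q.1 := by
      by_contra h; push_neg at h
      exact hq (hsh z hzI q hq1 h hy0q (le_of_eq hz2.symm))
    have hp1z : p.1 ≤ z.1 := by rcases hz1 with ⟨ha, hb⟩ | ⟨ha, hb⟩ <;> linarith
    have hp2 : y0 < p.2 := by
      by_contra h; push_neg at h
      have hy : y0 ∈ uIcc p.2 q.2 := mem_uIcc.2 (Or.inl ⟨h, by linarith⟩)
      exact hC (p.1, y0) (Or.inl ((hsegA _).2 ⟨rfl, hy⟩))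
        (Or.inr ⟨rfl, by simp; linarith, by simp; linarith⟩)
    have hq2p2 : q.2 < p.2 := by
      by_contra h; push_neg at h
      exact hp (hsh z hzI p hp1 hp1z hp2 (by linarith))
    obtain ⟨w, hwl, hwI⟩ := h2
    rcases hwl with hw | hw
    · rw [hsegC] at hw
      obtain ⟨hw2, hw1⟩ := hw
      rw [mem_uIcc] at hw1
      have hple : p.1 ≤ w.1 := by rcases hw1 with ⟨ha, hb⟩ | ⟨ha, hb⟩ <;> linarith
      exact hp (hsh w hwI p hp1 hple hp2 (le_of_eq hw2.symm))
    · rw [hsegD] at hw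
      obtain ⟨hw1, hw2⟩ := hw
      rw [mem_uIcc] at hw2
      have hqle : q.2 ≤ w.2 := by rcases hw2 with ⟨ha, hb⟩ | ⟨ha, hb⟩ <;> linarith
      exact hq (hsh w hwI q hq1 (le_of_eq hw1.symm) hy0q hqle)

lemma lpath_symm (a c b : Pt) : lpath a c b = lpath b c a := by
  rw [lpath, lpath, segment_symm ℝ a c, segment_symm ℝ c b, union_comm]

lemma master (ω : RectObstacle) (u u' v v' e₁ e₂ : ℝ)
    (he₁ : e₁ = 1 ∨ e₁ = -1) (he₂ : e₂ = 1 ∨ e₂ = -1)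
    (hlt₁ : e₁*u < e₁*u') (hlt₂ : e₂*v < e₂*v')
    (hboxc : ∀ w ∈ ω.carrier, e₁*u ≤ e₁*w.1 ∧ e₁*w.1 ≤ e₁*u' ∧ e₂*v ≤ e₂*w.2 ∧ e₂*w.2 ≤ e₂*v')
    (hbox_int : ∀ z ∈ interior ω.carrier,
      e₁*u < e₁*z.1 ∧ e₁*z.1 < e₁*u' ∧ e₂*v < e₂*z.2 ∧ e₂*z.2 < e₂*v')
    (hcor1 : ((u,v) : Pt) ∈ ω.carrier) (hcor2 : ((u',v) : Pt) ∈ ω.carrier)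
    (hcor3 : ((u,v') : Pt) ∈ ω.carrier)
    (p q : Pt) (hp : p ∉ interior ω.carrier) (hq : q ∉ interior ω.carrier)
    (hmeet : ∀ c ∈ cornerPts p q, (lpath p c q ∩ interior ω.carrier).Nonempty) :
    ∀ c ∈ cornerPts p q, ∃ w ∈ lpath p c q,
      w ∈ segment ℝ (u,v) (u,v') ∪ segment ℝ (u,v) (u',v) := by
  have hee₁ : e₁ * e₁ = 1 := by rcases he₁ with rfl | rfl <;> norm_num
  have hee₂ : e₂ * e₂ = 1 := by rcases he₂ with rfl | rfl <;> norm_num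
  have hinv₁ : ∀ x : ℝ, e₁*(e₁*x) = x := fun x => by linear_combination x * hee₁
  have hinv₂ : ∀ x : ℝ, e₂*(e₂*x) = x := fun x => by linear_combination x * hee₂
  have hfe : ∀ w : Pt, ((e₁*(e₁*w.1), e₂*(e₂*w.2)) : Pt) = w := by
    intro w
    apply Prod.ext
    · exact hinv₁ w.1
    · exact hinv₂ w.2
  -- shadow property for the carrier
  have hshc : ∀ w ∈ ω.carrier, ∀ a b : ℝ, e₁*u ≤ e₁*a → e₁*a ≤ e₁*w.1 →
      e₂*v ≤ e₂*b → e₂*b ≤ e₂*w.2 → ((a,b) : Pt) ∈ ω.carrier := by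
    intro w hw a b ha1 ha2 hb1 hb2
    obtain ⟨hwa, hwb, hwc, hwd⟩ := hboxc w hw
    have hcd : e₂*w.2 ≤ e₂*v' := hwd
    have huw : ((u, w.2) : Pt) ∈ ω.carrier :=
      ω.ortho _ hcor1 _ hcor3 (Or.inl rfl)
        ((seg_vert (a := ((u,v) : Pt)) (b := ((u,v') : Pt)) rfl).2
          ⟨rfl, (uIcc_e he₂ (le_of_lt hlt₂) _).2 ⟨hwc, hwd⟩⟩)
    have haw : ((a, w.2) : Pt) ∈ ω.carrier :=
      ω.ortho _ huw _ hw (Or.inr rfl)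
        ((seg_horiz (a := ((u, w.2) : Pt)) (b := w) rfl).2
          ⟨rfl, (uIcc_e he₁ hwa _).2 ⟨ha1, ha2⟩⟩)
    have hav : ((a, v) : Pt) ∈ ω.carrier :=
      ω.ortho _ hcor1 _ hcor2 (Or.inr rfl)
        ((seg_horiz (a := ((u,v) : Pt)) (b := ((u',v) : Pt)) rfl).2
          ⟨rfl, (uIcc_e he₁ (le_of_lt hlt₁) _).2 ⟨ha1, le_trans ha2 hwb⟩⟩)
    exact ω.ortho _ hav _ haw (Or.inl rfl)
      ((seg_vert (a := ((a,v) : Pt)) (b := ((a,w.2) : Pt)) rfl).2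
        ⟨rfl, (uIcc_e he₂ hwc _).2 ⟨hb1, hb2⟩⟩)
  -- shadow property for the interior
  have hshi : ∀ z ∈ interior ω.carrier, ∀ w : Pt, e₁*u < e₁*w.1 → e₁*w.1 ≤ e₁*z.1 →
      e₂*v < e₂*w.2 → e₂*w.2 ≤ e₂*z.2 → w ∈ interior ω.carrier := by
    intro z hz w hw1 hw2 hw3 hw4
    obtain ⟨ε, hε, hball⟩ := Metric.isOpen_iff.1 isOpen_interior z hz
    have habs₁ : |e₁ * (ε/2)| = ε/2 := by
      rw [abs_mul, (show |e₁| = 1 by rcases he₁ with rfl | rfl <;> norm_num), one_mul,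
        abs_of_pos (by linarith)]
    have habs₂ : |e₂ * (ε/2)| = ε/2 := by
      rw [abs_mul, (show |e₂| = 1 by rcases he₂ with rfl | rfl <;> norm_num), one_mul,
        abs_of_pos (by linarith)]
    have hz'mem : ((z.1 + e₁*(ε/2), z.2 + e₂*(ε/2)) : Pt) ∈ ω.carrier := by
      apply interior_subset
      apply hball
      rw [Metric.mem_ball, Prod.dist_eq]
      have d1 : dist (z.1 + e₁*(ε/2)) z.1 = ε/2 := by
        rw [Real.dist_eq]; simpa using habs₁
      have d2 : dist (z.2 + e₂*(ε/2)) z.2 = ε/2 := by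
        rw [Real.dist_eq]; simpa using habs₂
      dsimp only
      rw [d1, d2, max_self]
      linarith
    have hz'1 : e₁ * (z.1 + e₁*(ε/2)) = e₁*z.1 + ε/2 := by linear_combination (ε/2) * hee₁
    have hz'2 : e₂ * (z.2 + e₂*(ε/2)) = e₂*z.2 + ε/2 := by linear_combination (ε/2) * hee₂
    refine mem_interior.2 ⟨{t : Pt | e₁*u < e₁*t.1 ∧ e₁*t.1 < e₁*z.1 + ε/2 ∧
      e₂*v < e₂*t.2 ∧ e₂*t.2 < e₂*z.2 + ε/2}, ?_, ?_, ?_⟩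
    · intro t ht
      obtain ⟨ht1, ht2, ht3, ht4⟩ := ht
      have := hshc _ hz'mem t.1 t.2 (le_of_lt ht1)
        (by dsimp only; rw [hz'1]; exact le_of_lt ht2) (le_of_lt ht3)
        (by dsimp only; rw [hz'2]; exact le_of_lt ht4)
      simpa using this
    · have : {t : Pt | e₁*u < e₁*t.1 ∧ e₁*t.1 < e₁*z.1 + ε/2 ∧
          e₂*v < e₂*t.2 ∧ e₂*t.2 < e₂*z.2 + ε/2} =
          {t : Pt | e₁*u < e₁*t.1} ∩ ({t : Pt | e₁*t.1 < e₁*z.1 + ε/2} ∩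
          ({t : Pt | e₂*v < e₂*t.2} ∩ {t : Pt | e₂*t.2 < e₂*z.2 + ε/2})) := by
        ext t; simp [mem_setOf_eq, mem_inter_iff, and_assoc]
      rw [this]
      exact (isOpen_lt continuous_const (continuous_const.mul continuous_fst)).inter
        ((isOpen_lt (continuous_const.mul continuous_fst) continuous_const).inter
          ((isOpen_lt continuous_const (continuous_const.mul continuous_snd)).inter
            (isOpen_lt (continuous_const.mul continuous_snd) continuous_const)))
    · exact ⟨hw1, by linarith, hw3, by linarith⟩
  -- the reflected interior
  set I' : Set Pt := {w : Pt | ((e₁*w.1, e₂*w.2) : Pt) ∈ interior ω.carrier} with hI'def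
  have hboxI : ∀ z ∈ I', e₁*u < z.1 ∧ z.1 < e₁*u' ∧ e₂*v < z.2 ∧ z.2 < e₂*v' := by
    intro z hz
    have h := hbox_int _ hz
    dsimp only at h
    rw [hinv₁ z.1, hinv₂ z.2] at h
    exact h
  have hshI : ∀ z ∈ I', ∀ w : Pt, e₁*u < w.1 → w.1 ≤ z.1 → e₂*v < w.2 → w.2 ≤ z.2 →
      w ∈ I' := by
    intro z hz w ha hb hc hd
    have hzmem : ((e₁*z.1, e₂*z.2) : Pt) ∈ interior ω.carrier := hz
    refine hshi _ hzmem ((e₁*w.1, e₂*w.2) : Pt) ?_ ?_ ?_ ?_ <;> dsimp only <;>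
      simp only [hinv₁, hinv₂] <;> assumption
  have key := blocked I' (e₁*u) (e₁*u') (e₂*v) (e₂*v') hboxI hshI
  have hlp : ∀ (a c b w : Pt), w ∈ lpath a c b →
      ((e₁*w.1, e₂*w.2) : Pt) ∈ lpath (e₁*a.1, e₂*a.2) (e₁*c.1, e₂*c.2) (e₁*b.1, e₂*b.2) := by
    intro a c b w hw
    rcases hw with h | h
    · exact Set.mem_union_left _ (seg_map e₁ e₂ h)
    · exact Set.mem_union_right _ (seg_map e₁ e₂ h)
  have hnotI : ∀ w : Pt, w ∉ interior ω.carrier → ((e₁*w.1, e₂*w.2) : Pt) ∉ I' := by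
    intro w hw h
    have h2 : ((e₁*(e₁*w.1), e₂*(e₂*w.2)) : Pt) ∈ interior ω.carrier := h
    rw [hfe w] at h2
    exact hw h2
  have hinI : ∀ w : Pt, w ∈ interior ω.carrier → ((e₁*w.1, e₂*w.2) : Pt) ∈ I' := by
    intro w hw
    show ((e₁*(e₁*w.1), e₂*(e₂*w.2)) : Pt) ∈ interior ω.carrier
    rw [hfe w]
    exact hw
  intro c hc
  have hc' : c = ((p.1, q.2) : Pt) ∨ c = ((q.1, p.2) : Pt) := by
    simpa [cornerPts] using hc
  have hm1 := hmeet (p.1, q.2) (by simp [cornerPts])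
  have hm2 := hmeet (q.1, p.2) (by simp [cornerPts])
  obtain ⟨z1, hz1l, hz1i⟩ := hm1
  obtain ⟨z2, hz2l, hz2i⟩ := hm2
  rcases hc' with rfl | rfl
  · obtain ⟨w', hw'l, hw'c⟩ := key ((e₁*p.1, e₂*p.2) : Pt) ((e₁*q.1, e₂*q.2) : Pt)
      (hnotI p hp) (hnotI q hq)
      ⟨(e₁*z1.1, e₂*z1.2), hlp p (p.1, q.2) q z1 hz1l, hinI z1 hz1i⟩
      ⟨(e₁*z2.1, e₂*z2.2), hlp p (q.1, p.2) q z2 hz2l, hinI z2 hz2i⟩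
    refine ⟨(e₁*w'.1, e₂*w'.2), ?_, ?_⟩
    · have h := hlp _ _ _ _ hw'l
      dsimp only at h
      simp only [hinv₁, hinv₂] at h
      exact h
    · rcases hw'c with ⟨hA, hB, hC⟩ | ⟨hA, hB, hC⟩
      · refine Set.mem_union_left _
          ((seg_vert (a := ((u,v) : Pt)) (b := ((u,v') : Pt)) rfl).2 ⟨?_, ?_⟩)
        · dsimp only; rw [hA, hinv₁]
        · dsimp only
          refine (uIcc_e he₂ (le_of_lt hlt₂) _).2 ⟨?_, ?_⟩ <;> rw [hinv₂] <;> assumption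
      · refine Set.mem_union_right _
          ((seg_horiz (a := ((u,v) : Pt)) (b := ((u',v) : Pt)) rfl).2 ⟨?_, ?_⟩)
        · dsimp only; rw [hA, hinv₂]
        · dsimp only
          refine (uIcc_e he₁ (le_of_lt hlt₁) _).2 ⟨?_, ?_⟩ <;> rw [hinv₁] <;> assumption
  · rw [lpath_symm]
    have hz1l' : z1 ∈ lpath q (p.1, q.2) p := by rw [lpath_symm]; exact hz1l
    have hz2l' : z2 ∈ lpath q (q.1, p.2) p := by rw [lpath_symm]; exact hz2l
    obtain ⟨w', hw'l, hw'c⟩ := key ((e₁*q.1, e₂*q.2) : Pt) ((e₁*p.1, e₂*p.2) : Pt)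
      (hnotI q hq) (hnotI p hp)
      ⟨(e₁*z2.1, e₂*z2.2), hlp q (q.1, p.2) p z2 hz2l', hinI z2 hz2i⟩
      ⟨(e₁*z1.1, e₂*z1.2), hlp q (p.1, q.2) p z1 hz1l', hinI z1 hz1i⟩
    refine ⟨(e₁*w'.1, e₂*w'.2), ?_, ?_⟩
    · have h := hlp _ _ _ _ hw'l
      dsimp only at h
      simp only [hinv₁, hinv₂] at h
      exact h
    · rcases hw'c with ⟨hA, hB, hC⟩ | ⟨hA, hB, hC⟩
      · refine Set.mem_union_left _
          ((seg_vert (a := ((u,v) : Pt)) (b := ((u,v') : Pt)) rfl).2 ⟨?_, ?_⟩)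
        · dsimp only; rw [hA, hinv₁]
        · dsimp only
          refine (uIcc_e he₂ (le_of_lt hlt₂) _).2 ⟨?_, ?_⟩ <;> rw [hinv₂] <;> assumption
      · refine Set.mem_union_right _
          ((seg_horiz (a := ((u,v) : Pt)) (b := ((u',v) : Pt)) rfl).2 ⟨?_, ?_⟩)
        · dsimp only; rw [hA, hinv₂]
        · dsimp only
          refine (uIcc_e he₁ (le_of_lt hlt₁) _).2 ⟨?_, ?_⟩ <;> rw [hinv₁] <;> assumption

lemma mem_box (ω : RectObstacle) : ∀ w ∈ ω.carrier,
    ω.xmin ≤ w.1 ∧ w.1 ≤ ω.xmax ∧ ω.ymin ≤ w.2 ∧ w.2 ≤ ω.ymax := by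
  intro w hw
  have h1 : IsCompact (Prod.fst '' ω.carrier) := ω.compact'.image continuous_fst
  have h2 : IsCompact (Prod.snd '' ω.carrier) := ω.compact'.image continuous_snd
  exact ⟨csInf_le h1.bddBelow ⟨w, hw, rfl⟩, le_csSup h1.bddAbove ⟨w, hw, rfl⟩,
    csInf_le h2.bddBelow ⟨w, hw, rfl⟩, le_csSup h2.bddAbove ⟨w, hw, rfl⟩⟩

lemma int_strict (ω : RectObstacle) : ∀ z ∈ interior ω.carrier,
    ω.xmin < z.1 ∧ z.1 < ω.xmax ∧ ω.ymin < z.2 ∧ z.2 < ω.ymax := by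
  intro z hz
  obtain ⟨ε, hε, hball⟩ := Metric.isOpen_iff.1 isOpen_interior z hz
  have hmem : ∀ w : Pt, dist w z < ε → w ∈ ω.carrier := fun w h =>
    interior_subset (hball h)
  have habs : |ε/2| = ε/2 := abs_of_pos (by linarith)
  have hL : ((z.1 - ε/2, z.2) : Pt) ∈ ω.carrier := by
    apply hmem
    rw [Prod.dist_eq]
    dsimp only
    rw [Real.dist_eq, Real.dist_eq]
    simp [habs]
    linarith
  have hR : ((z.1 + ε/2, z.2) : Pt) ∈ ω.carrier := by
    apply hmem
    rw [Prod.dist_eq]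
    dsimp only
    rw [Real.dist_eq, Real.dist_eq]
    simp [habs]
    linarith
  have hD : ((z.1, z.2 - ε/2) : Pt) ∈ ω.carrier := by
    apply hmem
    rw [Prod.dist_eq]
    dsimp only
    rw [Real.dist_eq, Real.dist_eq]
    simp [habs]
    linarith
  have hU : ((z.1, z.2 + ε/2) : Pt) ∈ ω.carrier := by
    apply hmem
    rw [Prod.dist_eq]
    dsimp only
    rw [Real.dist_eq, Real.dist_eq]
    simp [habs]
    linarith
  have b1 := (mem_box ω _ hL).1
  have b2 := (mem_box ω _ hR).2.1
  have b3 := (mem_box ω _ hD).2.2.1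
  have b4 := (mem_box ω _ hU).2.2.2
  dsimp only at b1 b2 b3 b4
  exact ⟨by linarith, by linarith, by linarith, by linarith⟩

lemma main_case (ω : RectObstacle) (u u' v v' : ℝ)
    (hu : (u = ω.xmin ∧ u' = ω.xmax) ∨ (u = ω.xmax ∧ u' = ω.xmin))
    (hv : (v = ω.ymin ∧ v' = ω.ymax) ∨ (v = ω.ymax ∧ v' = ω.ymin))
    (hcor1 : ((u,v) : Pt) ∈ ω.carrier) (hcor2 : ((u',v) : Pt) ∈ ω.carrier)
    (hcor3 : ((u,v') : Pt) ∈ ω.carrier) :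
    (∃ sH sV : Pt × Pt, ω.IsCross sH sV ∧
      segment ℝ sH.1 sH.2 ⊆ frontier ω.carrier ∧ segment ℝ sV.1 sV.2 ⊆ frontier ω.carrier) ∧
    (∀ S : Finset (Pt × Pt), ω.IsMinSkeleton S → S.card ≤ 2) := by
  classical
  have hbox := mem_box ω
  have hint := int_strict ω
  obtain ⟨z0, hz0⟩ := ω.interior_ne
  have hz0s := hint z0 hz0
  have hx01 : ω.xmin < ω.xmax := lt_trans hz0s.1 hz0s.2.1
  have hy01 : ω.ymin < ω.ymax := lt_trans hz0s.2.2.1 hz0s.2.2.2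
  have hA : ((u, ω.ymin) : Pt) ∈ ω.carrier := by
    rcases hv with ⟨h, h'⟩ | ⟨h, h'⟩
    · rw [← h]; exact hcor1
    · rw [← h']; exact hcor3
  have hB : ((u, ω.ymax) : Pt) ∈ ω.carrier := by
    rcases hv with ⟨h, h'⟩ | ⟨h, h'⟩
    · rw [← h']; exact hcor3
    · rw [← h]; exact hcor1
  have hC : ((ω.xmin, v) : Pt) ∈ ω.carrier := by
    rcases hu with ⟨h, h'⟩ | ⟨h, h'⟩
    · rw [← h]; exact hcor1
    · rw [← h']; exact hcor2
  have hD : ((ω.xmax, v) : Pt) ∈ ω.carrier := by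
    rcases hu with ⟨h, h'⟩ | ⟨h, h'⟩
    · rw [← h']; exact hcor2
    · rw [← h]; exact hcor1
  have hIH : ω.InOb ((u, ω.ymin), (u, ω.ymax)) :=
    ω.ortho _ hA _ hB (Or.inl rfl)
  have hIV : ω.InOb ((ω.xmin, v), (ω.xmax, v)) :=
    ω.ortho _ hC _ hD (Or.inr rfl)
  have hfr : frontier ω.carrier = ω.carrier \ interior ω.carrier :=
    ω.compact'.isClosed.frontier_eq
  have hufr : segment ℝ ((u, ω.ymin) : Pt) ((u, ω.ymax) : Pt) ⊆ frontier ω.carrier := by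
    intro w hw
    have hw1 : w.1 = u :=
      ((seg_vert (a := ((u, ω.ymin) : Pt)) (b := ((u, ω.ymax) : Pt)) rfl).1 hw).1
    rw [hfr]
    refine ⟨hIH hw, fun hwint => ?_⟩
    have hs := hint w hwint
    rcases hu with ⟨h, _⟩ | ⟨h, _⟩
    · exact absurd (hw1.trans h) (ne_of_gt hs.1)
    · exact absurd (hw1.trans h) (ne_of_lt hs.2.1)
  have hvfr : segment ℝ ((ω.xmin, v) : Pt) ((ω.xmax, v) : Pt) ⊆ frontier ω.carrier := by
    intro w hw
    have hw2 : w.2 = v :=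
      ((seg_horiz (a := ((ω.xmin, v) : Pt)) (b := ((ω.xmax, v) : Pt)) rfl).1 hw).1
    rw [hfr]
    refine ⟨hIV hw, fun hwint => ?_⟩
    have hs := hint w hwint
    rcases hv with ⟨h, _⟩ | ⟨h, _⟩
    · exact absurd (hw2.trans h) (ne_of_gt hs.2.2.1)
    · exact absurd (hw2.trans h) (ne_of_lt hs.2.2.2)
  -- the blocking property via master
  have hX : ∃ e₁ : ℝ, (e₁ = 1 ∨ e₁ = -1) ∧ e₁*u < e₁*u' ∧
      (∀ w ∈ ω.carrier, e₁*u ≤ e₁*w.1 ∧ e₁*w.1 ≤ e₁*u') ∧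
      (∀ z ∈ interior ω.carrier, e₁*u < e₁*z.1 ∧ e₁*z.1 < e₁*u') := by
    rcases hu with ⟨h, h'⟩ | ⟨h, h'⟩ <;> subst h <;> subst h'
    · refine ⟨1, Or.inl rfl, by simpa using hx01, fun w hw => ?_, fun z hz => ?_⟩
      · have := hbox w hw; simp only [one_mul]; exact ⟨this.1, this.2.1⟩
      · have := hint z hz; simp only [one_mul]; exact ⟨this.1, this.2.1⟩
    · refine ⟨-1, Or.inr rfl, by simp only [neg_mul, one_mul]; linarith,
        fun w hw => ?_, fun z hz => ?_⟩
      · have := hbox w hw; simp only [neg_mul, one_mul]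
        exact ⟨by linarith [this.2.1], by linarith [this.1]⟩
      · have := hint z hz; simp only [neg_mul, one_mul]
        exact ⟨by linarith [this.2.1], by linarith [this.1]⟩
  have hY : ∃ e₂ : ℝ, (e₂ = 1 ∨ e₂ = -1) ∧ e₂*v < e₂*v' ∧
      (∀ w ∈ ω.carrier, e₂*v ≤ e₂*w.2 ∧ e₂*w.2 ≤ e₂*v') ∧
      (∀ z ∈ interior ω.carrier, e₂*v < e₂*z.2 ∧ e₂*z.2 < e₂*v') := by
    rcases hv with ⟨h, h'⟩ | ⟨h, h'⟩ <;> subst h <;> subst h'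
    · refine ⟨1, Or.inl rfl, by simpa using hy01, fun w hw => ?_, fun z hz => ?_⟩
      · have := hbox w hw; simp only [one_mul]; exact ⟨this.2.2.1, this.2.2.2⟩
      · have := hint z hz; simp only [one_mul]; exact ⟨this.2.2.1, this.2.2.2⟩
    · refine ⟨-1, Or.inr rfl, by simp only [neg_mul, one_mul]; linarith,
        fun w hw => ?_, fun z hz => ?_⟩
      · have := hbox w hw; simp only [neg_mul, one_mul]
        exact ⟨by linarith [this.2.2.2], by linarith [this.2.2.1]⟩
      · have := hint z hz; simp only [neg_mul, one_mul]
        exact ⟨by linarith [this.2.2.2], by linarith [this.2.2.1]⟩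
  obtain ⟨e₁, he₁, hlt₁, hbx₁, hbi₁⟩ := hX
  obtain ⟨e₂, he₂, hlt₂, hbx₂, hbi₂⟩ := hY
  have hmaster := master ω u u' v v' e₁ e₂ he₁ he₂ hlt₁ hlt₂
    (fun w hw => ⟨(hbx₁ w hw).1, (hbx₁ w hw).2, (hbx₂ w hw).1, (hbx₂ w hw).2⟩)
    (fun z hz => ⟨(hbi₁ z hz).1, (hbi₁ z hz).2, (hbi₂ z hz).1, (hbi₂ z hz).2⟩)
    hcor1 hcor2 hcor3
  constructor
  · exact ⟨((u, ω.ymin), (u, ω.ymax)), ((ω.xmin, v), (ω.xmax, v)),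
      ⟨hIH, hIV, rfl, rfl, rfl, rfl⟩, hufr, hvfr⟩
  · intro S hS
    have hskel : ω.IsSkeleton
        ({((u, ω.ymin), (u, ω.ymax)), ((ω.xmin, v), (ω.xmax, v))} : Finset (Pt × Pt)) := by
      constructor
      · intro w hw
        simp only [segUnion, Finset.mem_insert, Finset.mem_singleton, mem_iUnion] at hw
        obtain ⟨s, hs, hws⟩ := hw
        rcases hs with rfl | rfl
        · exact hIH hws
        · exact hIV hws
      · intro p q hp hq hmeet c hc
        obtain ⟨w, hwl, hwc⟩ := hmaster p q hp hq hmeet c hc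
        refine ⟨w, hwl, ?_⟩
        simp only [segUnion, mem_iUnion]
        rcases hwc with h | h
        · refine ⟨((u, ω.ymin), (u, ω.ymax)), by simp, ?_⟩
          rcases hv with ⟨h1, h2⟩ | ⟨h1, h2⟩ <;> subst h1 <;> subst h2
          · exact h
          · rw [segment_symm] at h; exact h
        · refine ⟨((ω.xmin, v), (ω.xmax, v)), by simp, ?_⟩
          rcases hu with ⟨h1, h2⟩ | ⟨h1, h2⟩ <;> subst h1 <;> subst h2
          · exact h
          · rw [segment_symm] at h; exact h
    have hcard : ({((u, ω.ymin), (u, ω.ymax)), ((ω.xmin, v), (ω.xmax, v))} :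
        Finset (Pt × Pt)).card ≤ 2 :=
      le_trans (Finset.card_insert_le _ _) (by simp)
    exact le_trans (hS.2 _ hskel) hcard

/-- an L-obstacle (exactly three extreme corners) contains a cross, indeed
one made of two boundary (extreme) edges, and hence its minimum skeletons have at most
two segments. -/
theorem L_obstacle_has_cross (ω : RectObstacle) (h3 : ω.extremeCornerSet.ncard = 3) :
    (∃ sH sV : Pt × Pt, ω.IsCross sH sV ∧
      segment ℝ sH.1 sH.2 ⊆ frontier ω.carrier ∧ segment ℝ sV.1 sV.2 ⊆ frontier ω.carrier) ∧
    (∀ S : Finset (Pt × Pt), ω.IsMinSkeleton S → S.card ≤ 2) := by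
  classical
  obtain ⟨z0, hz0⟩ := ω.interior_ne
  have hz0s := int_strict ω z0 hz0
  have hx01 : ω.xmin < ω.xmax := lt_trans hz0s.1 hz0s.2.1
  have hy01 : ω.ymin < ω.ymax := lt_trans hz0s.2.2.1 hz0s.2.2.2
  have hxne : ω.xmin ≠ ω.xmax := ne_of_lt hx01
  have hyne : ω.ymin ≠ ω.ymax := ne_of_lt hy01
  set c00 : Pt := (ω.xmin, ω.ymin) with hc00
  set c10 : Pt := (ω.xmax, ω.ymin) with hc10
  set c01 : Pt := (ω.xmin, ω.ymax) with hc01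
  set c11 : Pt := (ω.xmax, ω.ymax) with hc11
  set T : Set Pt := {c00, c10, c01, c11} with hT
  have hsub : ω.extremeCornerSet ⊆ T := inter_subset_right
  have hT4 : T.ncard = 4 := by
    rw [hT]
    rw [Set.ncard_insert_of_notMem (by
      simp only [mem_insert_iff, mem_singleton_iff, hc00, hc10, hc01, hc11,
        Prod.mk.injEq, not_or]
      exact ⟨fun h => hxne h.1, fun h => hyne h.2, fun h => hxne h.1⟩)]
    rw [Set.ncard_insert_of_notMem (by
      simp only [mem_insert_iff, mem_singleton_iff, hc10, hc01, hc11,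
        Prod.mk.injEq, not_or]
      exact ⟨fun h => hxne h.1.symm, fun h => hyne h.2⟩)]
    rw [Set.ncard_insert_of_notMem (by
      simp only [mem_singleton_iff, hc01, hc11, Prod.mk.injEq, not_or]
      exact fun h => hxne h.1)]
    rw [Set.ncard_singleton]
  have hdiff : (T \ ω.extremeCornerSet).ncard = 1 := by
    rw [Set.ncard_diff hsub (((Set.toFinite T)).subset hsub), hT4, h3]
  obtain ⟨m, hm⟩ := Set.ncard_eq_one.1 hdiff
  have hmT : m ∈ T := by
    have : m ∈ T \ ω.extremeCornerSet := by rw [hm]; exact rfl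
    exact this.1
  have hmnot : m ∉ ω.carrier := by
    intro h
    have hmE : m ∈ ω.extremeCornerSet := ⟨h, hmT⟩
    have : m ∈ T \ ω.extremeCornerSet := by rw [hm]; exact rfl
    exact this.2 hmE
  have hothers : ∀ c, c ∈ T → c ≠ m → c ∈ ω.carrier := by
    intro c hcT hcm
    by_contra hc
    have hcd : c ∈ T \ ω.extremeCornerSet := ⟨hcT, fun hE => hc hE.1⟩
    rw [hm] at hcd
    exact hcm hcd
  have hmcase : m = c00 ∨ m = c10 ∨ m = c01 ∨ m = c11 := by
    simpa [hT, mem_insert_iff, mem_singleton_iff] using hmT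
  have hne0010 : c00 ≠ c10 := by simp [hc00, hc10, Prod.ext_iff]; intro h; exact absurd h hxne
  have hne0001 : c00 ≠ c01 := by simp [hc00, hc01, Prod.ext_iff, hyne]
  have hne0011 : c00 ≠ c11 := by simp [hc00, hc11, Prod.ext_iff]; intro h; exact absurd h hxne
  have hne1001 : c10 ≠ c01 := by simp [hc10, hc01, Prod.ext_iff]; intro h; exact absurd h hxne.symm
  have hne1011 : c10 ≠ c11 := by simp [hc10, hc11, Prod.ext_iff, hyne]
  have hne0111 : c01 ≠ c11 := by simp [hc01, hc11, Prod.ext_iff]; intro h; exact absurd h hxne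
  have hmemT : ∀ c, c = c00 ∨ c = c10 ∨ c = c01 ∨ c = c11 → c ∈ T := by
    intro c hc
    simp only [hT, mem_insert_iff, mem_singleton_iff]
    exact hc
  rcases hmcase with rfl | rfl | rfl | rfl
  · -- missing (xmin, ymin); anchor (xmax, ymax)
    exact main_case ω ω.xmax ω.xmin ω.ymax ω.ymin (Or.inr ⟨rfl, rfl⟩) (Or.inr ⟨rfl, rfl⟩)
      (hothers c11 (hmemT _ (by tauto)) hne0011.symm)
      (hothers c01 (hmemT _ (by tauto)) hne0001.symm)
      (hothers c10 (hmemT _ (by tauto)) hne0010.symm)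
  · -- missing (xmax, ymin); anchor (xmin, ymax)
    exact main_case ω ω.xmin ω.xmax ω.ymax ω.ymin (Or.inl ⟨rfl, rfl⟩) (Or.inr ⟨rfl, rfl⟩)
      (hothers c01 (hmemT _ (by tauto)) hne1001.symm)
      (hothers c11 (hmemT _ (by tauto)) hne1011.symm)
      (hothers c00 (hmemT _ (by tauto)) hne0010)
  · -- missing (xmin, ymax); anchor (xmax, ymin)
    exact main_case ω ω.xmax ω.xmin ω.ymin ω.ymax (Or.inr ⟨rfl, rfl⟩) (Or.inl ⟨rfl, rfl⟩)
      (hothers c10 (hmemT _ (by tauto)) hne1001)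
      (hothers c00 (hmemT _ (by tauto)) hne0001)
      (hothers c11 (hmemT _ (by tauto)) hne0111.symm)
  · -- missing (xmax, ymax); anchor (xmin, ymin)
    exact main_case ω ω.xmin ω.xmax ω.ymin ω.ymax (Or.inl ⟨rfl, rfl⟩) (Or.inl ⟨rfl, rfl⟩)
      (hothers c00 (hmemT _ (by tauto)) hne0011)
      (hothers c10 (hmemT _ (by tauto)) hne1011)
      (hothers c01 (hmemT _ (by tauto)) hne0111)
end

section
/- Let ω be a staircase obstacle (rectilinearly-convex obstacle with exactly two opposite extreme corners) with bottom-left extreme corner c. Let s₁ be a segment in ω with endpoint at c that maximizes its horizontal advancement and, subject to this, its vertical advancement; let s₂ be a segment in ω with endpoint at c that maximizes its vertical advancement and, subject to this, its horizontal advancement. Then s₁ = s₂; i.e., there is a unique segment from c in ω simultaneously maximizing both its horizontal and vertical advancement. -/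
open Set

lemma mem_seg_horiz_s15 {x₁ x₂ x y : ℝ} (h₁ : x₁ ≤ x) (h₂ : x ≤ x₂) :
    ((x, y) : Pt) ∈ segment ℝ (x₁, y) (x₂, y) := by
  rcases eq_or_lt_of_le (h₁.trans h₂) with h | h
  · have hx1 : x = x₁ := le_antisymm (h ▸ h₂) h₁
    rw [hx1]; exact left_mem_segment ℝ _ _
  · have hne : x₂ - x₁ ≠ 0 := by linarith
    refine ⟨(x₂ - x)/(x₂ - x₁), (x - x₁)/(x₂ - x₁),
      div_nonneg (by linarith) (by linarith), div_nonneg (by linarith) (by linarith),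
      by field_simp; ring, ?_⟩
    simp only [Prod.smul_mk, Prod.mk_add_mk, smul_eq_mul, Prod.mk.injEq]
    constructor <;> · field_simp; ring

lemma mem_seg_vert_s15 {y₁ y₂ y x : ℝ} (h₁ : y₁ ≤ y) (h₂ : y ≤ y₂) :
    ((x, y) : Pt) ∈ segment ℝ (x, y₁) (x, y₂) := by
  rcases eq_or_lt_of_le (h₁.trans h₂) with h | h
  · have hy1 : y = y₁ := le_antisymm (h ▸ h₂) h₁
    rw [hy1]; exact left_mem_segment ℝ _ _
  · have hne : y₂ - y₁ ≠ 0 := by linarith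
    refine ⟨(y₂ - y)/(y₂ - y₁), (y - y₁)/(y₂ - y₁),
      div_nonneg (by linarith) (by linarith), div_nonneg (by linarith) (by linarith),
      by field_simp; ring, ?_⟩
    simp only [Prod.smul_mk, Prod.mk_add_mk, smul_eq_mul, Prod.mk.injEq]
    constructor <;> · field_simp; ring

/-- in a staircase obstacle with bottom-left extreme corner `c`, the
segment from `c` maximizing horizontal advancement (then vertical) coincides with the
segment from `c` maximizing vertical advancement (then horizontal): there is a unique
segment from `c` simultaneously maximizing both advancements. -/
theorem staircase_corner_edge_unique (ω : RectObstacle)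
    (hst : ω.extremeCornerSet = {(ω.xmin, ω.ymin), (ω.xmax, ω.ymax)})
    (s₁ s₂ : Pt × Pt)
    (h₁c : s₁.1 = ((ω.xmin, ω.ymin) : Pt)) (h₁in : ω.InOb s₁)
    (h₁max : ∀ t : Pt × Pt, ω.InOb t → t.1 = ((ω.xmin, ω.ymin) : Pt) → t.2.1 ≤ s₁.2.1)
    (h₁max2 : ∀ t : Pt × Pt, ω.InOb t → t.1 = ((ω.xmin, ω.ymin) : Pt) →
      t.2.1 = s₁.2.1 → t.2.2 ≤ s₁.2.2)
    (h₂c : s₂.1 = ((ω.xmin, ω.ymin) : Pt)) (h₂in : ω.InOb s₂)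
    (h₂max : ∀ t : Pt × Pt, ω.InOb t → t.1 = ((ω.xmin, ω.ymin) : Pt) → t.2.2 ≤ s₂.2.2)
    (h₂max2 : ∀ t : Pt × Pt, ω.InOb t → t.1 = ((ω.xmin, ω.ymin) : Pt) →
      t.2.2 = s₂.2.2 → t.2.1 ≤ s₂.2.1) :
    s₁.2 = s₂.2 := by
  classical
  have hc₁ : ((ω.xmin, ω.ymin) : Pt) ∈ ω.carrier := by
    have := h₁in (left_mem_segment ℝ s₁.1 s₁.2); rwa [h₁c] at this
  have hv₁ : s₁.2 ∈ ω.carrier := h₁in (right_mem_segment ℝ s₁.1 s₁.2)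
  have hv₂ : s₂.2 ∈ ω.carrier := h₂in (right_mem_segment ℝ s₂.1 s₂.2)
  have hbx : BddBelow (Prod.fst '' ω.carrier) := (ω.compact'.image continuous_fst).bddBelow
  have hBx : BddAbove (Prod.fst '' ω.carrier) := (ω.compact'.image continuous_fst).bddAbove
  have hby : BddBelow (Prod.snd '' ω.carrier) := (ω.compact'.image continuous_snd).bddBelow
  have hBy : BddAbove (Prod.snd '' ω.carrier) := (ω.compact'.image continuous_snd).bddAbove
  have hxmin : ∀ p ∈ ω.carrier, ω.xmin ≤ p.1 := fun p hp => csInf_le hbx ⟨p, hp, rfl⟩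
  have hxmax : ∀ p ∈ ω.carrier, p.1 ≤ ω.xmax := fun p hp => le_csSup hBx ⟨p, hp, rfl⟩
  have hymin : ∀ p ∈ ω.carrier, ω.ymin ≤ p.2 := fun p hp => csInf_le hby ⟨p, hp, rfl⟩
  have hymax : ∀ p ∈ ω.carrier, p.2 ≤ ω.ymax := fun p hp => le_csSup hBy ⟨p, hp, rfl⟩
  have hT : ((ω.xmax, ω.ymax) : Pt) ∈ ω.carrier := by
    have hmem : ((ω.xmax, ω.ymax) : Pt) ∈ ω.extremeCornerSet := by
      rw [hst]; right; rfl
    exact hmem.1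
  have h21 : s₂.2.1 ≤ s₁.2.1 := h₁max s₂ h₂in h₂c
  have h12 : s₁.2.2 ≤ s₂.2.2 := h₂max s₁ h₁in h₁c
  -- Step A: the point (s₁.2.1, s₂.2.2) lies in ω
  have hA : ∃ q ∈ ω.carrier, (q.1 = s₁.2.1 ∧ s₂.2.2 ≤ q.2) ∨ (q.2 = s₂.2.2 ∧ s₁.2.1 ≤ q.1) := by
    rcases eq_or_lt_of_le (hxmax s₁.2 hv₁) with hx | hx
    · exact ⟨_, hT, Or.inl ⟨hx.symm, hymax s₂.2 hv₂⟩⟩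
    · rcases eq_or_lt_of_le (hymax s₂.2 hv₂) with hy | hy
      · exact ⟨_, hT, Or.inr ⟨hy.symm, hxmax s₁.2 hv₁⟩⟩
      · by_contra hcon
        push_neg at hcon
        have key := ω.connected'.isPreconnected
          ({p : Pt | s₁.2.1 < p.1} ∩ {p : Pt | s₂.2.2 < p.2})
          ({p : Pt | p.1 < s₁.2.1} ∪ {p : Pt | p.2 < s₂.2.2})
          ((isOpen_lt continuous_const continuous_fst).inter
            (isOpen_lt continuous_const continuous_snd))
          ((isOpen_lt continuous_fst continuous_const).union
            (isOpen_lt continuous_snd continuous_const))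
          (by
            intro p hp
            simp only [Set.mem_union, Set.mem_inter_iff, Set.mem_setOf_eq]
            rcases lt_trichotomy p.1 s₁.2.1 with h | h | h
            · exact Or.inr (Or.inl h)
            · exact Or.inr (Or.inr ((hcon p hp).1 h))
            · rcases lt_trichotomy p.2 s₂.2.2 with h' | h' | h'
              · exact Or.inr (Or.inr h')
              · exact absurd ((hcon p hp).2 h') (by linarith)
              · exact Or.inl ⟨h, h'⟩)
          ⟨(ω.xmax, ω.ymax), hT, ⟨hx, hy⟩⟩
          ⟨s₁.2, hv₁, by
            simp only [Set.mem_union, Set.mem_setOf_eq]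
            exact Or.inr ((hcon s₁.2 hv₁).1 rfl)⟩
        obtain ⟨p, -, ⟨hp1, hp2⟩, hp3⟩ := key
        simp only [Set.mem_union, Set.mem_setOf_eq] at hp1 hp2 hp3
        rcases hp3 with h3 | h3 <;> linarith
  have hv₃ : ((s₁.2.1, s₂.2.2) : Pt) ∈ ω.carrier := by
    obtain ⟨q, hq, ⟨hq1, hq2⟩ | ⟨hq1, hq2⟩⟩ := hA
    · have hseg := ω.ortho s₁.2 hv₁ q hq (Or.inl hq1.symm)
      apply hseg
      have hqe : q = ((s₁.2.1, q.2) : Pt) := by rw [← hq1]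
      rw [hqe, show s₁.2 = ((s₁.2.1, s₁.2.2) : Pt) from rfl]
      exact mem_seg_vert_s15 h12 hq2
    · have hseg := ω.ortho s₂.2 hv₂ q hq (Or.inr hq1.symm)
      apply hseg
      have hqe : q = ((q.1, s₂.2.2) : Pt) := by rw [← hq1]
      rw [hqe, show s₂.2 = ((s₂.2.1, s₂.2.2) : Pt) from rfl]
      exact mem_seg_horiz_s15 h21 hq2
  -- Step B: the segment from the corner to (s₁.2.1, s₂.2.2) lies in ω
  have hBseg : segment ℝ ((ω.xmin, ω.ymin) : Pt) ((s₁.2.1, s₂.2.2) : Pt) ⊆ ω.carrier := by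
    rintro p ⟨a, b, ha, hb, hab, rfl⟩
    obtain rfl : a = 1 - b := by linarith
    have hb1 : b ≤ 1 := by linarith
    have hpt : (1 - b) • ((ω.xmin, ω.ymin) : Pt) + b • ((s₁.2.1, s₂.2.2) : Pt)
        = (((1 - b) * ω.xmin + b * s₁.2.1, (1 - b) * ω.ymin + b * s₂.2.2) : Pt) := by
      simp [Prod.ext_iff, Prod.fst_add, Prod.snd_add, Prod.smul_fst, Prod.smul_snd,
        smul_eq_mul]
    rw [hpt]
    have hxm1 : ω.xmin ≤ s₁.2.1 := hxmin s₁.2 hv₁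
    have hym2 : ω.ymin ≤ s₂.2.2 := hymin s₂.2 hv₂
    have hym1 : ω.ymin ≤ s₁.2.2 := hymin s₁.2 hv₁
    have hpy1 : ω.ymin ≤ (1 - b) * ω.ymin + b * s₂.2.2 := by
      nlinarith [mul_nonneg hb (sub_nonneg.mpr hym2)]
    have hpy2 : (1 - b) * ω.ymin + b * s₂.2.2 ≤ s₂.2.2 := by
      nlinarith [mul_nonneg ha (sub_nonneg.mpr hym2)]
    have hpx2 : (1 - b) * ω.xmin + b * s₁.2.1 ≤ s₁.2.1 := by
      nlinarith [mul_nonneg ha (sub_nonneg.mpr hxm1)]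
    have hwle : (1 - b) * ω.xmin + b * s₂.2.1 ≤ (1 - b) * ω.xmin + b * s₁.2.1 := by
      nlinarith [mul_le_mul_of_nonneg_left h21 hb]
    have hw : (((1 - b) * ω.xmin + b * s₂.2.1, (1 - b) * ω.ymin + b * s₂.2.2) : Pt)
        ∈ ω.carrier := by
      apply h₂in
      rw [h₂c]
      refine ⟨1 - b, b, ha, hb, by ring, ?_⟩
      simp [Prod.ext_iff, Prod.fst_add, Prod.snd_add, Prod.smul_fst, Prod.smul_snd,
        smul_eq_mul]
    rcases le_or_gt s₁.2.2 ((1 - b) * ω.ymin + b * s₂.2.2) with hcase | hcase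
    · -- upper part: between the segment to s₂.2 and the vertical segment above s₁.2
      have hr : ((s₁.2.1, (1 - b) * ω.ymin + b * s₂.2.2) : Pt) ∈ ω.carrier := by
        have hseg := ω.ortho s₁.2 hv₁ _ hv₃ (Or.inl rfl)
        apply hseg
        rw [show s₁.2 = ((s₁.2.1, s₁.2.2) : Pt) from rfl]
        exact mem_seg_vert_s15 hcase hpy2
      have := ω.ortho _ hw _ hr (Or.inr rfl)
      exact this (mem_seg_horiz_s15 hwle hpx2)
    · -- lower part: between the segment to s₂.2 and the segment to s₁.2
      have hyv : ω.ymin < s₁.2.2 := lt_of_le_of_lt hpy1 hcase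
      set st : ℝ := ((1 - b) * ω.ymin + b * s₂.2.2 - ω.ymin) / (s₁.2.2 - ω.ymin)
        with hst_def
      have hden : (0:ℝ) < s₁.2.2 - ω.ymin := by linarith
      have hs0 : 0 ≤ st := div_nonneg (by linarith) (by linarith)
      have hs1 : st ≤ 1 := by
        rw [hst_def, div_le_one hden]; linarith
      have hss : st * (s₁.2.2 - ω.ymin) = (1 - b) * ω.ymin + b * s₂.2.2 - ω.ymin :=
        div_mul_cancel₀ _ (ne_of_gt hden)
      have hsb : b ≤ st := by
        nlinarith [hss, mul_le_mul_of_nonneg_left h12 hb, hden]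
      have hu : (((1 - st) * ω.xmin + st * s₁.2.1, (1 - b) * ω.ymin + b * s₂.2.2) : Pt)
          ∈ ω.carrier := by
        apply h₁in
        rw [h₁c]
        refine ⟨1 - st, st, by linarith, hs0, by ring, ?_⟩
        simp only [Prod.ext_iff, Prod.fst_add, Prod.snd_add, Prod.smul_fst, Prod.smul_snd,
          smul_eq_mul]
        exact ⟨trivial, by linear_combination hss⟩
      have := ω.ortho _ hw _ hu (Or.inr rfl)
      apply this
      refine mem_seg_horiz_s15 hwle ?_
      have hmono : (s₁.2.1 - ω.xmin) * (st - b) ≥ 0 :=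
        mul_nonneg (by linarith) (by linarith)
      nlinarith [hmono]
  -- Step C: conclude by maximality
  have hin : ω.InOb (((ω.xmin, ω.ymin) : Pt), ((s₁.2.1, s₂.2.2) : Pt)) := hBseg
  have h1 : s₂.2.2 ≤ s₁.2.2 :=
    h₁max2 (((ω.xmin, ω.ymin) : Pt), ((s₁.2.1, s₂.2.2) : Pt)) hin rfl rfl
  have hyeq : s₁.2.2 = s₂.2.2 := le_antisymm h12 h1
  have hxeq : s₁.2.1 = s₂.2.1 := le_antisymm (h₂max2 s₁ h₁in h₁c hyeq) h21
  exact Prod.ext hxeq hyeq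
end

section
/- There is no universal constant bound relating minimum connected skeletons to minimum (weakly-connected) skeletons: for every k ≥ 1 there exists a rectilinearly-convex obstacle ω whose minimum skeleton S₁* and minimum connected skeleton S₂* satisfy |S₂*| ≥ 2|S₁*| − 1 with |S₁*| ≥ k; in particular the difference |S₂*| − |S₁*| is unbounded over rectilinearly-convex obstacles. -/
open Set

/-- A connected skeleton: a skeleton whose union is a connected subset of the plane. -/
def IsConnSkeleton (ω : RectObstacle) (S : Finset (Pt × Pt)) : Prop :=
  ω.IsSkeleton S ∧ IsConnected (segUnion S)

/-- A minimum connected skeleton. -/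
def IsMinConnSkeleton (ω : RectObstacle) (S : Finset (Pt × Pt)) : Prop :=
  IsConnSkeleton ω S ∧ ∀ T : Finset (Pt × Pt), IsConnSkeleton ω T → S.card ≤ T.card


/-! ### Auxiliary development -/

namespace GapConstruction

lemma ncast {a b : ℕ} (h : (a:ℝ) ≤ (b:ℝ)) : a ≤ b := by exact_mod_cast h
lemma ncast' {a b : ℕ} (h : (a:ℝ) < (b:ℝ)) : a < b := by exact_mod_cast h
lemma ncast'' {a b : ℕ} (h : (a:ℝ) = (b:ℝ)) : a = b := by exact_mod_cast h

lemma seg_mem {x y z : Pt} : z ∈ segment ℝ x y ↔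
    ∃ t : ℝ, 0 ≤ t ∧ t ≤ 1 ∧ (1-t)*x.1+t*y.1 = z.1 ∧ (1-t)*x.2+t*y.2 = z.2 := by
  rw [segment_eq_image]
  constructor
  · rintro ⟨t, ⟨ht0, ht1⟩, h⟩
    exact ⟨t, ht0, ht1, by rw [← h]; rfl, by rw [← h]; rfl⟩
  · rintro ⟨t, ht0, ht1, h1, h2⟩
    exact ⟨t, ⟨ht0, ht1⟩, Prod.ext_iff.mpr ⟨h1, h2⟩⟩

lemma seg_mem1 {x y z : ℝ} : z ∈ segment ℝ x y ↔
    ∃ t : ℝ, 0 ≤ t ∧ t ≤ 1 ∧ (1-t)*x+t*y = z := by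
  rw [segment_eq_image]
  constructor
  · rintro ⟨t, ⟨ht0, ht1⟩, h⟩
    exact ⟨t, ht0, ht1, h⟩
  · rintro ⟨t, ht0, ht1, h⟩
    exact ⟨t, ⟨ht0, ht1⟩, h⟩

lemma mem_hseg {a b c : ℝ} {z : Pt} :
    z ∈ segment ℝ ((a,c):Pt) ((b,c):Pt) ↔ z.1 ∈ uIcc a b ∧ z.2 = c := by
  rw [← segment_eq_uIcc]
  constructor
  · rintro h
    rcases seg_mem.mp h with ⟨t, ht0, ht1, h1, h2⟩
    dsimp only at h1 h2
    exact ⟨seg_mem1.mpr ⟨t, ht0, ht1, h1⟩, by linarith [h2]⟩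
  · rintro ⟨h1, h2⟩
    rcases seg_mem1.mp h1 with ⟨t, ht0, ht1, h⟩
    exact seg_mem.mpr ⟨t, ht0, ht1, h, by dsimp only; linarith⟩

lemma mem_vseg {a b c : ℝ} {z : Pt} :
    z ∈ segment ℝ ((c,a):Pt) ((c,b):Pt) ↔ z.1 = c ∧ z.2 ∈ uIcc a b := by
  rw [← segment_eq_uIcc]
  constructor
  · rintro h
    rcases seg_mem.mp h with ⟨t, ht0, ht1, h1, h2⟩
    dsimp only at h1 h2
    exact ⟨by linarith [h1], seg_mem1.mpr ⟨t, ht0, ht1, h2⟩⟩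
  · rintro ⟨h1, h2⟩
    rcases seg_mem1.mp h2 with ⟨t, ht0, ht1, h⟩
    exact seg_mem.mpr ⟨t, ht0, ht1, by dsimp only; linarith, h⟩

lemma mem_dseg {a : ℝ} {z : Pt} :
    z ∈ segment ℝ ((a,a):Pt) ((a+1,a+1):Pt) ↔ z.1 = z.2 ∧ a ≤ z.1 ∧ z.1 ≤ a+1 := by
  constructor
  · rintro h
    rcases seg_mem.mp h with ⟨t, ht0, ht1, h1, h2⟩
    dsimp only at h1 h2
    ring_nf at h1 h2
    constructor
    · linarith
    · constructor <;> linarith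
  · rintro ⟨h1, h2, h3⟩
    refine seg_mem.mpr ⟨z.1-a, by linarith, by linarith, ?_, ?_⟩ <;> dsimp only <;> ring_nf <;> linarith

lemma mem_uIcc' {a b c : ℝ} : c ∈ uIcc a b ↔ (a ≤ c ∧ c ≤ b) ∨ (b ≤ c ∧ c ≤ a) :=
  Set.mem_uIcc

lemma exists_seg_y {P Q : Pt} {c : ℝ} (h1 : P.2 ≤ c) (h2 : c ≤ Q.2) :
    ∃ w ∈ segment ℝ P Q, w.2 = c := by
  rcases eq_or_lt_of_le (le_trans h1 h2 : P.2 ≤ Q.2) with h | h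
  · exact ⟨P, left_mem_segment _ _ _, le_antisymm h1 (by linarith)⟩
  · set t : ℝ := (c - P.2)/(Q.2 - P.2) with ht
    have hd : (0:ℝ) < Q.2 - P.2 := by linarith
    have ht0 : 0 ≤ t := div_nonneg (by linarith) (by linarith)
    have ht1 : t ≤ 1 := by rw [div_le_one hd]; linarith
    have htd : t * (Q.2 - P.2) = c - P.2 := div_mul_cancel₀ _ (by linarith)
    refine ⟨((1-t)*P.1+t*Q.1, c), seg_mem.mpr ⟨t, ht0, ht1, rfl, ?_⟩, rfl⟩
    dsimp only
    nlinarith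

lemma exists_seg_x {P Q : Pt} {c : ℝ} (h1 : P.1 ≤ c) (h2 : c ≤ Q.1) :
    ∃ w ∈ segment ℝ P Q, w.1 = c := by
  rcases eq_or_lt_of_le (le_trans h1 h2 : P.1 ≤ Q.1) with h | h
  · exact ⟨P, left_mem_segment _ _ _, le_antisymm h1 (by linarith)⟩
  · set t : ℝ := (c - P.1)/(Q.1 - P.1) with ht
    have hd : (0:ℝ) < Q.1 - P.1 := by linarith
    have ht0 : 0 ≤ t := div_nonneg (by linarith) (by linarith)
    have ht1 : t ≤ 1 := by rw [div_le_one hd]; linarith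
    have htd : t * (Q.1 - P.1) = c - P.1 := div_mul_cancel₀ _ (by linarith)
    refine ⟨(c, (1-t)*P.2+t*Q.2), seg_mem.mpr ⟨t, ht0, ht1, ?_, rfl⟩, rfl⟩
    dsimp only
    nlinarith

lemma seg_const_x {a b w w' : Pt} (hw : w ∈ segment ℝ a b) (hw' : w' ∈ segment ℝ a b)
    (h1 : w.1 = w'.1) (h2 : w.2 ≠ w'.2) : ∀ z ∈ segment ℝ a b, z.1 = w.1 := by
  rcases seg_mem.mp hw with ⟨t, ht0, ht1, e1, e2⟩
  rcases seg_mem.mp hw' with ⟨t', ht0', ht1', e1', e2'⟩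
  intro z hz
  rcases seg_mem.mp hz with ⟨s, hs0, hs1, f1, f2⟩
  by_cases hab : a.1 = b.1
  · rw [← f1, ← e1, hab]; ring
  · exfalso
    have key : (t - t') * (b.1 - a.1) = 0 := by linear_combination e1 - e1' + h1
    rcases mul_eq_zero.mp key with h | h
    · have htt : t = t' := by linarith
      exact h2 (by rw [← e2, ← e2', htt])
    · exact hab (by linarith)

lemma seg_const_y {a b w w' : Pt} (hw : w ∈ segment ℝ a b) (hw' : w' ∈ segment ℝ a b)
    (h1 : w.2 = w'.2) (h2 : w.1 ≠ w'.1) : ∀ z ∈ segment ℝ a b, z.2 = w.2 := by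
  rcases seg_mem.mp hw with ⟨t, ht0, ht1, e1, e2⟩
  rcases seg_mem.mp hw' with ⟨t', ht0', ht1', e1', e2'⟩
  intro z hz
  rcases seg_mem.mp hz with ⟨s, hs0, hs1, f1, f2⟩
  by_cases hab : a.2 = b.2
  · rw [← f2, ← e2, hab]; ring
  · exfalso
    have key : (t - t') * (b.2 - a.2) = 0 := by linear_combination e2 - e2' + h1
    rcases mul_eq_zero.mp key with h | h
    · have htt : t = t' := by linarith
      exact h2 (by rw [← e1, ← e1', htt])
    · exact hab (by linarith)

end GapConstruction

namespace GapConstruction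

/-- The obstacle: `k` unit squares along the diagonal, consecutive ones joined by
one-dimensional whiskers (an L of two segments). -/
def K (k : ℕ) : Set Pt :=
  {z | (∃ i : ℕ, i < k ∧ 2*(i:ℝ) ≤ z.1 ∧ z.1 ≤ 2*(i:ℝ)+1 ∧ 2*(i:ℝ) ≤ z.2 ∧ z.2 ≤ 2*(i:ℝ)+1) ∨
       (∃ i : ℕ, i+1 < k ∧ ((2*(i:ℝ)+1 ≤ z.1 ∧ z.1 ≤ 2*(i:ℝ)+2 ∧ z.2 = 2*(i:ℝ)+1) ∨
          (z.1 = 2*(i:ℝ)+2 ∧ 2*(i:ℝ)+1 ≤ z.2 ∧ z.2 ≤ 2*(i:ℝ)+2)))}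

/-- The (expected) interior: the open squares. -/
def IntSet (k : ℕ) : Set Pt :=
  {z | ∃ i : ℕ, i < k ∧ 2*(i:ℝ) < z.1 ∧ z.1 < 2*(i:ℝ)+1 ∧ 2*(i:ℝ) < z.2 ∧ z.2 < 2*(i:ℝ)+1}

lemma nle1 {i j : ℕ} (h : 2*(j:ℝ) < 2*(i:ℝ)) : j+1 ≤ i := by
  have : (j:ℝ) < i := by linarith
  exact_mod_cast this
lemma nle2 {i j : ℕ} (h : 2*(j:ℝ) < 2*(i:ℝ)+1) : j ≤ i := by
  have h2 : 2*j < 2*i+2 := by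
    have : (2*j:ℕ) < (2*i+2:ℕ) := ncast' (by push_cast; linarith)
    exact this
  omega
lemma nle3 {i j : ℕ} (h : 2*(j:ℝ)+1 < 2*(i:ℝ)+2) : j ≤ i := by
  have : (2*j+1:ℕ) < (2*i+2:ℕ) := ncast' (by push_cast; linarith)
  omega
lemma nrle {i j : ℕ} (h : j+1 ≤ i) : 2*(j:ℝ)+2 ≤ 2*(i:ℝ) := by
  have : ((j:ℝ)+1) ≤ i := by exact_mod_cast h
  linarith

/-- Points of `K` strictly between consecutive squares in `x` lie on the horizontal
whisker. -/
lemma strip_x {k i : ℕ} {z : Pt} (hz : z ∈ K k) (h1 : 2*(i:ℝ)+1 < z.1)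
    (h2 : z.1 < 2*(i:ℝ)+2) : z.2 = 2*(i:ℝ)+1 := by
  rcases hz with ⟨j, hj, a1, a2, a3, a4⟩ | ⟨j, hj, ⟨b1, b2, b3⟩ | ⟨c1, c2, c3⟩⟩
  · exfalso
    have hji : i+1 ≤ j := by
      have : 2*(i:ℝ) < 2*(j:ℝ) := by linarith
      exact nle1 this
    have := nrle hji
    linarith
  · have hji : j ≤ i := nle3 (by linarith)
    have hij : i ≤ j := by
      have : 2*(i:ℝ) < 2*(j:ℝ)+1 := by linarith
      exact nle2 (by linarith)
    have : j = i := le_antisymm hji hij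
    subst this; exact b3
  · exfalso
    have hji : j+1 ≤ i := by
      have : 2*(j:ℝ) < 2*(i:ℝ) := by linarith
      exact nle1 this
    have hij : i ≤ j := by
      have : 2*(i:ℝ) < 2*(j:ℝ)+1 := by linarith
      exact nle2 (by linarith)
    omega

/-- Points of `K` strictly between consecutive squares in `y` lie on the vertical
whisker. -/
lemma strip_y {k i : ℕ} {z : Pt} (hz : z ∈ K k) (h1 : 2*(i:ℝ)+1 < z.2)
    (h2 : z.2 < 2*(i:ℝ)+2) : z.1 = 2*(i:ℝ)+2 := by
  rcases hz with ⟨j, hj, a1, a2, a3, a4⟩ | ⟨j, hj, ⟨b1, b2, b3⟩ | ⟨c1, c2, c3⟩⟩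
  · exfalso
    have hji : i+1 ≤ j := nle1 (by linarith)
    have := nrle hji
    linarith
  · exfalso
    have hji : i+1 ≤ j := by
      have : (2*i+1:ℕ) < (2*j+1:ℕ) := ncast' (by push_cast; linarith)
      omega
    have := nrle hji
    linarith
  · have hij : i ≤ j := by
      have : (2*i+1:ℕ) < (2*j+2:ℕ) := ncast' (by push_cast; linarith)
      omega
    have hji : j ≤ i := nle3 (by linarith)
    have : j = i := le_antisymm hji hij
    subst this; exact c1

/-- Points of `K` with `y` strictly inside the `i`-th square's vertical range lie in
the `i`-th square. -/
lemma row_sq {k i : ℕ} {z : Pt} (hz : z ∈ K k) (h1 : 2*(i:ℝ) < z.2)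
    (h2 : z.2 < 2*(i:ℝ)+1) : 2*(i:ℝ) ≤ z.1 ∧ z.1 ≤ 2*(i:ℝ)+1 := by
  rcases hz with ⟨j, hj, a1, a2, a3, a4⟩ | ⟨j, hj, ⟨b1, b2, b3⟩ | ⟨c1, c2, c3⟩⟩
  · have hji : j ≤ i := nle2 (by linarith)
    have hij : i ≤ j := by
      have : (2*i:ℕ) < (2*j+1:ℕ) := ncast' (by push_cast; linarith)
      omega
    have : j = i := le_antisymm hji hij
    subst this; exact ⟨a1, a2⟩
  · exfalso
    have hij : i ≤ j := by
      have : (2*i:ℕ) < (2*j+1:ℕ) := ncast' (by push_cast; linarith)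
      omega
    have hji : j+1 ≤ i := nle1 (by linarith)
    omega
  · exfalso
    have hij : i ≤ j := by
      have : (2*i:ℕ) < (2*j+2:ℕ) := ncast' (by push_cast; linarith)
      omega
    have hji : j+1 ≤ i := nle1 (by linarith)
    omega

lemma IntSet_sub {k : ℕ} : IntSet k ⊆ interior (K k) := by
  rintro z ⟨i, hi, h1, h2, h3, h4⟩
  rw [mem_interior]
  refine ⟨Ioo (2*(i:ℝ)) (2*(i:ℝ)+1) ×ˢ Ioo (2*(i:ℝ)) (2*(i:ℝ)+1), ?_, 
    (isOpen_Ioo.prod isOpen_Ioo), ⟨⟨h1, h2⟩, ⟨h3, h4⟩⟩⟩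
  rintro w ⟨⟨w1, w2⟩, ⟨w3, w4⟩⟩
  exact Or.inl ⟨i, hi, le_of_lt w1, le_of_lt w2, le_of_lt w3, le_of_lt w4⟩

end GapConstruction

namespace GapConstruction

lemma ball_pt {z : Pt} {ε δ dx dy : ℝ} (hδε : δ < ε) (h1 : |dx| ≤ δ) (h2 : |dy| ≤ δ) :
    ((z.1+dx, z.2+dy) : Pt) ∈ Metric.ball z ε := by
  rw [Metric.mem_ball]
  have : dist ((z.1+dx, z.2+dy) : Pt) z = max (dist (z.1+dx) z.1) (dist (z.2+dy) z.2) :=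
    Prod.dist_eq
  rw [this, Real.dist_eq, Real.dist_eq]
  have e1 : z.1 + dx - z.1 = dx := by ring
  have e2 : z.2 + dy - z.2 = dy := by ring
  rw [e1, e2]
  exact max_lt (lt_of_le_of_lt h1 hδε) (lt_of_le_of_lt h2 hδε)

lemma int_sub {k : ℕ} : interior (K k) ⊆ IntSet k := by
  intro z hz
  obtain ⟨ε, hε, hball⟩ := Metric.mem_nhds_iff.mp (mem_interior_iff_mem_nhds.mp hz)
  have hzK : z ∈ K k := interior_subset hz
  by_contra hno
  have hno' : ∀ i : ℕ, i < k → 2*(i:ℝ) < z.1 → z.1 < 2*(i:ℝ)+1 →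
      ¬(2*(i:ℝ) < z.2 ∧ z.2 < 2*(i:ℝ)+1) := by
    intro i hi h1 h2 ⟨h3, h4⟩
    exact hno ⟨i, hi, h1, h2, h3, h4⟩
  set δ : ℝ := min (ε/2) (1/2) with hδdef
  have hδ0 : 0 < δ := lt_min (by linarith) (by norm_num)
  have hδε : δ < ε := lt_of_le_of_lt (min_le_left _ _) (by linarith)
  have hδ1 : δ < 1 := lt_of_le_of_lt (min_le_right _ _) (by norm_num)
  have hK : ∀ dx dy : ℝ, |dx| ≤ δ → |dy| ≤ δ → ((z.1+dx, z.2+dy) : Pt) ∈ K k := by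
    intro dx dy h1 h2
    exact hball (ball_pt hδε h1 h2)
  have habs : |δ| ≤ δ := by rw [abs_of_pos hδ0]
  have habs' : |(-δ)| ≤ δ := by rw [abs_neg, abs_of_pos hδ0]
  rcases hzK with ⟨i, hik, s1, s2, s3, s4⟩ | ⟨i, hik, ⟨e1, e2, e3⟩ | ⟨e1, e2, e3⟩⟩
  · -- square case: some coordinate is extreme
    have hbd : z.1 = 2*(i:ℝ) ∨ z.1 = 2*(i:ℝ)+1 ∨ z.2 = 2*(i:ℝ) ∨ z.2 = 2*(i:ℝ)+1 := by
      by_contra hcon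
      push_neg at hcon
      obtain ⟨n1, n2, n3, n4⟩ := hcon
      exact hno' i hik (lt_of_le_of_ne s1 (Ne.symm n1)) (lt_of_le_of_ne s2 n2)
        ⟨lt_of_le_of_ne s3 (Ne.symm n3), lt_of_le_of_ne s4 n4⟩
    rcases hbd with hb | hb | hb | hb
    · -- left edge : go left-up
      have := hK (-δ) δ habs' habs
      rcases this with ⟨j, hj, a1, a2, a3, a4⟩ | ⟨j, hj, ⟨b1, b2, b3⟩ | ⟨c1, c2, c3⟩⟩ <;>
        dsimp only at *
      · have hji : j+1 ≤ i := nle1 (by linarith)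
        have := nrle hji
        linarith
      · have hji : j+1 ≤ i := by
          have : (2*j+1:ℕ) < (2*i:ℕ) := ncast' (by push_cast; linarith)
          omega
        have hij : i ≤ j+1 := by
          have : (2*i:ℕ) < (2*j+3:ℕ) := ncast' (by push_cast; linarith)
          omega
        have : j+1 = i := le_antisymm hji hij
        have : (2*(j:ℝ)+1) = 2*(i:ℝ)-1 := by
          have : ((j:ℝ)+1) = i := by exact_mod_cast this
          linarith
        linarith
      · have hji : j+1 ≤ i := by
          have : (2*j+2:ℕ) < (2*i:ℕ) := ncast' (by push_cast; linarith)
          omega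
        have := nrle hji
        linarith
    · -- right edge : go right-down
      have := hK δ (-δ) habs habs'
      rcases this with ⟨j, hj, a1, a2, a3, a4⟩ | ⟨j, hj, ⟨b1, b2, b3⟩ | ⟨c1, c2, c3⟩⟩ <;>
        dsimp only at *
      · have hij : i+1 ≤ j := by
          have : (2*i:ℕ) < (2*j:ℕ) := ncast' (by push_cast; linarith)
          omega
        have : ((i:ℝ)+1) ≤ j := by exact_mod_cast hij
        linarith
      · have hji : j ≤ i := nle2 (by linarith)
        have hij : i ≤ j := by
          have : (2*i:ℕ) < (2*j+2:ℕ) := ncast' (by push_cast; linarith)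
          omega
        have : j = i := le_antisymm hji hij
        subst this
        linarith
      · have hij : i ≤ j := by
          have : (2*i+1:ℕ) < (2*j+2:ℕ) := ncast' (by push_cast; linarith)
          omega
        have hji : j+1 ≤ i := by
          have : (2*j+2:ℕ) < (2*i+2:ℕ) := ncast' (by push_cast; linarith)
          omega
        omega
    · -- bottom edge : go right-down
      have := hK δ (-δ) habs habs'
      rcases this with ⟨j, hj, a1, a2, a3, a4⟩ | ⟨j, hj, ⟨b1, b2, b3⟩ | ⟨c1, c2, c3⟩⟩ <;>
        dsimp only at *
      · have hji : j+1 ≤ i := nle1 (by linarith)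
        have := nrle hji
        linarith
      · have hji : j+1 ≤ i := by
          have : (2*j+1:ℕ) < (2*i:ℕ) := ncast' (by push_cast; linarith)
          omega
        have := nrle hji
        linarith
      · have hji : j+1 ≤ i := by
          have : (2*j+1:ℕ) < (2*i:ℕ) := ncast' (by push_cast; linarith)
          omega
        have hij : i ≤ j+1 := by
          have : (2*i:ℕ) < (2*j+3:ℕ) := ncast' (by push_cast; linarith)
          omega
        have : j+1 = i := le_antisymm hji hij
        have : (2*(j:ℝ)+2) = 2*(i:ℝ) := by
          have : ((j:ℝ)+1) = i := by exact_mod_cast this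
          linarith
        linarith
    · -- top edge : go right-up
      have := hK δ δ habs habs
      rcases this with ⟨j, hj, a1, a2, a3, a4⟩ | ⟨j, hj, ⟨b1, b2, b3⟩ | ⟨c1, c2, c3⟩⟩ <;>
        dsimp only at *
      · have hij : i+1 ≤ j := by
          have : (2*i+1:ℕ) < (2*j+1:ℕ) := ncast' (by push_cast; linarith)
          omega
        have : ((i:ℝ)+1) ≤ j := by exact_mod_cast hij
        linarith
      · have hij : i+1 ≤ j := by
          have : (2*i+1:ℕ) < (2*j+1:ℕ) := ncast' (by push_cast; linarith)
          omega
        have : ((i:ℝ)+1) ≤ j := by exact_mod_cast hij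
        linarith
      · have hij : i ≤ j := by
          have : (2*i+1:ℕ) < (2*j+2:ℕ) := ncast' (by push_cast; linarith)
          omega
        have hji : j ≤ i := nle3 (by linarith)
        have : j = i := le_antisymm hji hij
        subst this
        linarith
  · -- horizontal whisker : go left-up
    have := hK (-δ) δ habs' habs
    rcases this with ⟨j, hj, a1, a2, a3, a4⟩ | ⟨j, hj, ⟨b1, b2, b3⟩ | ⟨c1, c2, c3⟩⟩ <;>
      dsimp only at *
    · have hij : i+1 ≤ j := by
        have : (2*i+1:ℕ) < (2*j+1:ℕ) := ncast' (by push_cast; linarith)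
        omega
      have : ((i:ℝ)+1) ≤ j := by exact_mod_cast hij
      linarith
    · rcases le_or_gt j i with h | h
      · have : (2*(j:ℝ)) ≤ 2*(i:ℝ) := by
          have : (j:ℝ) ≤ i := by exact_mod_cast h
          linarith
        linarith
      · have : ((i:ℝ)+1) ≤ j := by exact_mod_cast h
        linarith
    · have hij : i ≤ j := by
        have : (2*i+1:ℕ) < (2*j+2:ℕ) := ncast' (by push_cast; linarith)
        omega
      have hji : j ≤ i := nle3 (by linarith)
      have : j = i := le_antisymm hji hij
      subst this
      linarith
  · -- vertical whisker : go right-down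
    have := hK δ (-δ) habs habs'
    rcases this with ⟨j, hj, a1, a2, a3, a4⟩ | ⟨j, hj, ⟨b1, b2, b3⟩ | ⟨c1, c2, c3⟩⟩ <;>
      dsimp only at *
    · have hij : i+1 ≤ j := by
        have : (2*i+2:ℕ) < (2*j+1:ℕ) := ncast' (by push_cast; linarith)
        omega
      have hji : j ≤ i+1 := by
        have : (2*j:ℕ) < (2*i+3:ℕ) := ncast' (by push_cast; linarith)
        omega
      have : j = i+1 := le_antisymm hji hij
      have : (2*(j:ℝ)) = 2*(i:ℝ)+2 := by
        have : (j:ℝ) = (i:ℝ)+1 := by exact_mod_cast this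
        linarith
      linarith
    · have hij : i ≤ j := by
        have : (2*i:ℕ) < (2*j+1:ℕ) := ncast' (by push_cast; linarith)
        omega
      have hji : j ≤ i := by
        have : (2*j+1:ℕ) < (2*i+2:ℕ) := ncast' (by push_cast; linarith)
        omega
      have : j = i := le_antisymm hji hij
      subst this
      linarith
    · rcases le_or_gt j i with h | h
      · have : (2*(j:ℝ)) ≤ 2*(i:ℝ) := by
          have : (j:ℝ) ≤ i := by exact_mod_cast h
          linarith
        linarith
      · have : ((i:ℝ)+1) ≤ j := by exact_mod_cast h
        linarith

lemma interior_K {k : ℕ} : interior (K k) = IntSet k :=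
  le_antisymm int_sub IntSet_sub

end GapConstruction

namespace GapConstruction

def sqS (i : ℕ) : Set Pt := Icc (2*(i:ℝ)) (2*(i:ℝ)+1) ×ˢ Icc (2*(i:ℝ)) (2*(i:ℝ)+1)
def hwS (i : ℕ) : Set Pt := Icc (2*(i:ℝ)+1) (2*(i:ℝ)+2) ×ˢ {(2*(i:ℝ)+1)}
def vwS (i : ℕ) : Set Pt := {(2*(i:ℝ)+2)} ×ˢ Icc (2*(i:ℝ)+1) (2*(i:ℝ)+2)

lemma mem_sqS {i : ℕ} {z : Pt} : z ∈ sqS i ↔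
    (2*(i:ℝ) ≤ z.1 ∧ z.1 ≤ 2*(i:ℝ)+1) ∧ (2*(i:ℝ) ≤ z.2 ∧ z.2 ≤ 2*(i:ℝ)+1) := by
  simp only [sqS, Set.mem_prod, Set.mem_Icc]

lemma mem_hwS {i : ℕ} {z : Pt} : z ∈ hwS i ↔
    (2*(i:ℝ)+1 ≤ z.1 ∧ z.1 ≤ 2*(i:ℝ)+2) ∧ z.2 = 2*(i:ℝ)+1 := by
  simp only [hwS, Set.mem_prod, Set.mem_Icc, Set.mem_singleton_iff]

lemma mem_vwS {i : ℕ} {z : Pt} : z ∈ vwS i ↔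
    z.1 = 2*(i:ℝ)+2 ∧ (2*(i:ℝ)+1 ≤ z.2 ∧ z.2 ≤ 2*(i:ℝ)+2) := by
  simp only [vwS, Set.mem_prod, Set.mem_Icc, Set.mem_singleton_iff]

lemma K_eq (k : ℕ) : K k =
    (⋃ i ∈ Finset.range k, sqS i) ∪ ⋃ i ∈ Finset.range (k-1), (hwS i ∪ vwS i) := by
  ext z
  constructor
  · rintro (⟨i, hi, h1, h2, h3, h4⟩ | ⟨i, hi, h⟩)
    · exact Or.inl (Set.mem_biUnion (Finset.mem_range.mpr hi) (mem_sqS.mpr ⟨⟨h1,h2⟩,⟨h3,h4⟩⟩))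
    · refine Or.inr (Set.mem_biUnion (Finset.mem_range.mpr (by omega : i < k-1)) ?_)
      rcases h with ⟨h1, h2, h3⟩ | ⟨h1, h2, h3⟩
      · exact Or.inl (mem_hwS.mpr ⟨⟨h1, h2⟩, h3⟩)
      · exact Or.inr (mem_vwS.mpr ⟨h1, h2, h3⟩)
  · rintro (h | h)
    · rcases Set.mem_iUnion₂.mp h with ⟨i, hi, hm⟩
      rcases mem_sqS.mp hm with ⟨⟨h1, h2⟩, h3, h4⟩
      exact Or.inl ⟨i, Finset.mem_range.mp hi, h1, h2, h3, h4⟩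
    · rcases Set.mem_iUnion₂.mp h with ⟨i, hi, hm⟩
      have hik : i + 1 < k := by have := Finset.mem_range.mp hi; omega
      rcases hm with hm | hm
      · rcases mem_hwS.mp hm with ⟨⟨h1, h2⟩, h3⟩
        exact Or.inr ⟨i, hik, Or.inl ⟨h1, h2, h3⟩⟩
      · rcases mem_vwS.mp hm with ⟨h1, h2, h3⟩
        exact Or.inr ⟨i, hik, Or.inr ⟨h1, h2, h3⟩⟩

lemma K_compact (k : ℕ) : IsCompact (K k) := by
  rw [K_eq]
  apply IsCompact.union
  · apply (Finset.range k).finite_toSet.isCompact_biUnion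
    intro i _
    exact isCompact_Icc.prod isCompact_Icc
  · apply (Finset.range (k-1)).finite_toSet.isCompact_biUnion
    intro i _
    exact (isCompact_Icc.prod isCompact_singleton).union
      (isCompact_singleton.prod isCompact_Icc)

lemma K_closed (k : ℕ) : IsClosed (K k) := (K_compact k).isClosed

lemma sqS_conn (i : ℕ) : IsConnected (sqS i) := by
  refine ⟨⟨(2*(i:ℝ), 2*(i:ℝ)), mem_sqS.mpr ⟨⟨le_refl _, by dsimp only; linarith⟩, le_refl _, by dsimp only; linarith⟩⟩, ?_⟩
  exact ((convex_Icc _ _).prod (convex_Icc _ _)).isPreconnected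

lemma hwS_conn (i : ℕ) : IsConnected (hwS i) := by
  refine ⟨⟨(2*(i:ℝ)+1, 2*(i:ℝ)+1), mem_hwS.mpr ⟨⟨le_refl _, by dsimp only; linarith⟩, rfl⟩⟩, ?_⟩
  exact ((convex_Icc _ _).prod (convex_singleton _)).isPreconnected

lemma vwS_conn (i : ℕ) : IsConnected (vwS i) := by
  refine ⟨⟨(2*(i:ℝ)+2, 2*(i:ℝ)+1), mem_vwS.mpr ⟨rfl, le_refl _, by dsimp only; linarith⟩⟩, ?_⟩
  exact ((convex_singleton _).prod (convex_Icc _ _)).isPreconnected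

lemma K_one : K 1 = sqS 0 := by
  ext z
  constructor
  · rintro (⟨i, hi, h1, h2, h3, h4⟩ | ⟨i, hi, _⟩)
    · have : i = 0 := by omega
      subst this
      exact mem_sqS.mpr ⟨⟨h1, h2⟩, h3, h4⟩
    · omega
  · intro h
    rcases mem_sqS.mp h with ⟨⟨h1, h2⟩, h3, h4⟩
    exact Or.inl ⟨0, by omega, h1, h2, h3, h4⟩

lemma K_succ (n : ℕ) : K (n+2) = K (n+1) ∪ (hwS n ∪ (vwS n ∪ sqS (n+1))) := by
  ext z
  constructor
  · rintro (⟨i, hi, h1, h2, h3, h4⟩ | ⟨i, hi, h⟩)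
    · rcases Nat.lt_succ_iff_lt_or_eq.mp hi with hi' | hi'
      · exact Or.inl (Or.inl ⟨i, hi', h1, h2, h3, h4⟩)
      · subst hi'
        exact Or.inr (Or.inr (Or.inr (mem_sqS.mpr ⟨⟨h1, h2⟩, h3, h4⟩)))
    · rcases (by omega : i + 1 < n+1 ∨ i = n) with hi' | hi'
      · exact Or.inl (Or.inr ⟨i, hi', h⟩)
      · subst hi'
        rcases h with ⟨h1, h2, h3⟩ | ⟨h1, h2, h3⟩
        · exact Or.inr (Or.inl (mem_hwS.mpr ⟨⟨h1, h2⟩, h3⟩))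
        · exact Or.inr (Or.inr (Or.inl (mem_vwS.mpr ⟨h1, h2, h3⟩)))
  · rintro ((⟨i, hi, h1, h2, h3, h4⟩ | ⟨i, hi, h⟩) | (h | (h | h)))
    · exact Or.inl ⟨i, by omega, h1, h2, h3, h4⟩
    · exact Or.inr ⟨i, by omega, h⟩
    · rcases mem_hwS.mp h with ⟨⟨h1, h2⟩, h3⟩
      exact Or.inr ⟨n, by omega, Or.inl ⟨h1, h2, h3⟩⟩
    · rcases mem_vwS.mp h with ⟨h1, h2, h3⟩
      exact Or.inr ⟨n, by omega, Or.inr ⟨h1, h2, h3⟩⟩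
    · rcases mem_sqS.mp h with ⟨⟨h1, h2⟩, h3, h4⟩
      exact Or.inl ⟨n+1, by omega, by push_cast at h1 h2 h3 h4 ⊢ <;> linarith, 
        by push_cast at h1 h2 h3 h4 ⊢; linarith, by push_cast at h1 h2 h3 h4 ⊢; linarith,
        by push_cast at h1 h2 h3 h4 ⊢; linarith⟩

lemma K_conn (k : ℕ) : IsConnected (K (k+1)) := by
  induction k with
  | zero => rw [K_one]; exact sqS_conn 0
  | succ n ih =>
    rw [K_succ]
    have corner1 : ((2*(n:ℝ)+1, 2*(n:ℝ)+1) : Pt) ∈ K (n+1) := by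
      refine Or.inl ⟨n, by omega, by dsimp only; linarith, le_refl _, by dsimp only; linarith, le_refl _⟩
    have c23 : ((2*(n:ℝ)+2, 2*(n:ℝ)+1) : Pt) ∈ vwS n ∪ sqS (n+1) :=
      Or.inl (mem_vwS.mpr ⟨rfl, le_refl _, by dsimp only; linarith⟩)
    have c34 : ((2*(n:ℝ)+2, 2*(n:ℝ)+2) : Pt) ∈ sqS (n+1) := by
      refine mem_sqS.mpr ⟨⟨by dsimp only; push_cast; linarith, by dsimp only; push_cast; linarith⟩,
        by dsimp only; push_cast; linarith, by dsimp only; push_cast; linarith⟩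
    have hvs : IsConnected (vwS n ∪ sqS (n+1)) :=
      IsConnected.union ⟨(2*(n:ℝ)+2, 2*(n:ℝ)+2),
        mem_vwS.mpr ⟨rfl, by dsimp only; linarith, le_refl _⟩, c34⟩ (vwS_conn n) (sqS_conn (n+1))
    have hhvs : IsConnected (hwS n ∪ (vwS n ∪ sqS (n+1))) :=
      IsConnected.union ⟨(2*(n:ℝ)+2, 2*(n:ℝ)+1),
        mem_hwS.mpr ⟨⟨by dsimp only; linarith, le_refl _⟩, rfl⟩, c23⟩ (hwS_conn n) hvs
    exact IsConnected.union ⟨(2*(n:ℝ)+1, 2*(n:ℝ)+1), corner1,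
      Or.inl (mem_hwS.mpr ⟨⟨le_refl _, by dsimp only; linarith⟩, rfl⟩)⟩ ih hhvs

end GapConstruction

namespace GapConstruction

lemma hsliceK {k : ℕ} {y x₁ x₂ x : ℝ} (h1 : ((x₁,y):Pt) ∈ K k) (h2 : ((x₂,y):Pt) ∈ K k)
    (hx1 : x₁ ≤ x) (hx2 : x ≤ x₂) : ((x,y):Pt) ∈ K k := by
  rcases h1 with ⟨i, hi, a1, a2, a3, a4⟩ | ⟨i, hi, ⟨b1, b2, b3⟩ | ⟨c1, c2, c3⟩⟩ <;>
    rcases h2 with ⟨j, hj, d1, d2, d3, d4⟩ | ⟨j, hj, ⟨e1, e2, e3⟩ | ⟨f1, f2, f3⟩⟩ <;>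
    dsimp only at *
  · -- SS
    have hji : j ≤ i := by have : (2*j:ℕ) ≤ 2*i+1 := ncast (by push_cast; linarith); omega
    have hij : i ≤ j := by have : (2*i:ℕ) ≤ 2*j+1 := ncast (by push_cast; linarith); omega
    have hh : j = i := le_antisymm hji hij
    subst hh
    exact Or.inl ⟨j, hi, by linarith, by linarith, a3, a4⟩
  · -- SH
    have hji : j ≤ i := by have : (2*j+1:ℕ) ≤ 2*i+1 := ncast (by push_cast; linarith); omega
    have hij : i ≤ j := by have : (2*i:ℕ) ≤ 2*j+1 := ncast (by push_cast; linarith); omega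
    have hh : j = i := le_antisymm hji hij
    subst hh
    rcases le_or_gt x (2*(j:ℝ)+1) with hc | hc
    · exact Or.inl ⟨j, hi, by linarith, hc, a3, a4⟩
    · exact Or.inr ⟨j, hj, Or.inl ⟨le_of_lt hc, by linarith, e3⟩⟩
  · -- SV
    have hji : j ≤ i := by have : (2*j+1:ℕ) ≤ 2*i+1 := ncast (by push_cast; linarith); omega
    have hij : i ≤ j+1 := by have : (2*i:ℕ) ≤ 2*j+2 := ncast (by push_cast; linarith); omega
    rcases (by omega : j = i ∨ j + 1 = i) with hh | hh
    · subst hh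
      rcases le_or_gt x (2*(j:ℝ)+1) with hc | hc
      · exact Or.inl ⟨j, hi, by linarith, hc, a3, a4⟩
      · exact Or.inr ⟨j, hj, Or.inl ⟨le_of_lt hc, by linarith, by linarith⟩⟩
    · have hcast : (j:ℝ) + 1 = i := by exact_mod_cast hh
      exact Or.inl ⟨i, hi, by linarith, by linarith, a3, a4⟩
  · -- HS
    have hji : j ≤ i := by have : (2*j:ℕ) ≤ 2*i+1 := ncast (by push_cast; linarith); omega
    have hij : i ≤ j := by have : (2*i+1:ℕ) ≤ 2*j+1 := ncast (by push_cast; linarith); omega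
    have hh : j = i := le_antisymm hji hij
    subst hh
    exact Or.inl ⟨j, hj, by linarith, by linarith, d3, d4⟩
  · -- HH
    have hh : i = j := by
      have : (2*i+1:ℕ) = 2*j+1 := ncast'' (by push_cast; linarith)
      omega
    subst hh
    exact Or.inr ⟨i, hi, Or.inl ⟨by linarith, by linarith, b3⟩⟩
  · -- HV
    have hji : j ≤ i := by have : (2*j+1:ℕ) ≤ 2*i+1 := ncast (by push_cast; linarith); omega
    have hij : i ≤ j := by have : (2*i+1:ℕ) ≤ 2*j+2 := ncast (by push_cast; linarith); omega
    have hh : j = i := le_antisymm hji hij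
    subst hh
    exact Or.inr ⟨j, hi, Or.inl ⟨by linarith, by linarith, b3⟩⟩
  · -- VS
    have hij : i ≤ j := by have : (2*i+1:ℕ) ≤ 2*j+1 := ncast (by push_cast; linarith); omega
    have hji : j ≤ i+1 := by have : (2*j:ℕ) ≤ 2*i+2 := ncast (by push_cast; linarith); omega
    rcases (by omega : j = i ∨ j = i + 1) with hh | hh
    · subst hh
      exfalso
      linarith
    · subst hh
      have hcast : ((i:ℝ) + 1) = ((i+1 : ℕ) : ℝ) := by push_cast; ring
      refine Or.inl ⟨i+1, hj, ?_, ?_, ?_, ?_⟩ <;> rw [← hcast] <;> linarith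
  · -- VH
    have hij : i ≤ j := by have : (2*i+1:ℕ) ≤ 2*j+1 := ncast (by push_cast; linarith); omega
    have hji : j ≤ i := by have : (2*j+1:ℕ) ≤ 2*i+2 := ncast (by push_cast; linarith); omega
    have hh : j = i := le_antisymm hji hij
    subst hh
    exact Or.inr ⟨j, hj, Or.inl ⟨by linarith, by linarith, e3⟩⟩
  · -- VV
    have hij : i ≤ j := by have : (2*i+1:ℕ) ≤ 2*j+2 := ncast (by push_cast; linarith); omega
    have hji : j ≤ i := by have : (2*j+1:ℕ) ≤ 2*i+2 := ncast (by push_cast; linarith); omega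
    have hh : j = i := le_antisymm hji hij
    subst hh
    exact Or.inr ⟨j, hi, Or.inr ⟨by linarith, c2, c3⟩⟩

lemma vsliceK {k : ℕ} {x y₁ y₂ y : ℝ} (h1 : ((x,y₁):Pt) ∈ K k) (h2 : ((x,y₂):Pt) ∈ K k)
    (hy1 : y₁ ≤ y) (hy2 : y ≤ y₂) : ((x,y):Pt) ∈ K k := by
  rcases h1 with ⟨i, hi, a1, a2, a3, a4⟩ | ⟨i, hi, ⟨b1, b2, b3⟩ | ⟨c1, c2, c3⟩⟩ <;>
    rcases h2 with ⟨j, hj, d1, d2, d3, d4⟩ | ⟨j, hj, ⟨e1, e2, e3⟩ | ⟨f1, f2, f3⟩⟩ <;>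
    dsimp only at *
  · -- SS
    have hji : j ≤ i := by have : (2*j:ℕ) ≤ 2*i+1 := ncast (by push_cast; linarith); omega
    have hij : i ≤ j := by have : (2*i:ℕ) ≤ 2*j+1 := ncast (by push_cast; linarith); omega
    have hh : j = i := le_antisymm hji hij
    subst hh
    exact Or.inl ⟨j, hi, a1, a2, by linarith, by linarith⟩
  · -- SH
    have hji : j ≤ i := by have : (2*j+1:ℕ) ≤ 2*i+1 := ncast (by push_cast; linarith); omega
    have hij : i ≤ j+1 := by have : (2*i:ℕ) ≤ 2*j+2 := ncast (by push_cast; linarith); omega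
    rcases (by omega : j = i ∨ j + 1 = i) with hh | hh
    · subst hh
      exact Or.inl ⟨j, hi, a1, a2, by linarith, by linarith⟩
    · exfalso
      have hcast : (j:ℝ) + 1 = i := by exact_mod_cast hh
      linarith
  · -- SV
    have hji : j + 1 ≤ i := by have : (2*j+2:ℕ) ≤ 2*i+1 := ncast (by push_cast; linarith); omega
    have hij : i ≤ j+1 := by have : (2*i:ℕ) ≤ 2*j+2 := ncast (by push_cast; linarith); omega
    have hh : j + 1 = i := le_antisymm hji hij
    have hcast : (j:ℝ) + 1 = i := by exact_mod_cast hh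
    exact Or.inl ⟨i, hi, a1, a2, by linarith, by linarith⟩
  · -- HS
    have hij : i ≤ j := by have : (2*i+1:ℕ) ≤ 2*j+1 := ncast (by push_cast; linarith); omega
    have hji : j ≤ i+1 := by have : (2*j:ℕ) ≤ 2*i+2 := ncast (by push_cast; linarith); omega
    rcases (by omega : j = i ∨ j = i + 1) with hh | hh
    · subst hh
      exact Or.inl ⟨j, hj, d1, d2, by linarith, by linarith⟩
    · subst hh
      have hcast : ((i:ℝ) + 1) = ((i+1 : ℕ) : ℝ) := by push_cast; ring
      rcases le_or_gt y (2*(i:ℝ)+2) with hc | hc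
      · exact Or.inr ⟨i, hi, Or.inr ⟨by linarith, by linarith, hc⟩⟩
      · refine Or.inl ⟨i+1, hj, ?_, ?_, ?_, ?_⟩ <;> rw [← hcast] <;> linarith
  · -- HH
    have hij : i ≤ j := by have : (2*i+1:ℕ) ≤ 2*j+2 := ncast (by push_cast; linarith); omega
    have hji : j ≤ i := by have : (2*j+1:ℕ) ≤ 2*i+2 := ncast (by push_cast; linarith); omega
    have hh : j = i := le_antisymm hji hij
    subst hh
    exact Or.inr ⟨j, hi, Or.inl ⟨b1, b2, by linarith⟩⟩
  · -- HV
    have hij : i ≤ j := by have : (2*i+1:ℕ) ≤ 2*j+2 := ncast (by push_cast; linarith); omega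
    have hji : j ≤ i := by have : (2*j+2:ℕ) ≤ 2*i+2 := ncast (by push_cast; linarith); omega
    have hh : j = i := le_antisymm hji hij
    subst hh
    exact Or.inr ⟨j, hj, Or.inr ⟨f1, by linarith, by linarith⟩⟩
  · -- VS
    have hij : i + 1 ≤ j := by have : (2*i+2:ℕ) ≤ 2*j+1 := ncast (by push_cast; linarith); omega
    have hji : j ≤ i+1 := by have : (2*j:ℕ) ≤ 2*i+2 := ncast (by push_cast; linarith); omega
    have hh : j = i + 1 := le_antisymm hji hij
    subst hh
    have hcast : ((i:ℝ) + 1) = ((i+1 : ℕ) : ℝ) := by push_cast; ring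
    rcases le_or_gt y (2*(i:ℝ)+2) with hc | hc
    · exact Or.inr ⟨i, hi, Or.inr ⟨c1, by linarith, hc⟩⟩
    · refine Or.inl ⟨i+1, hj, ?_, ?_, ?_, ?_⟩ <;> rw [← hcast] <;> linarith
  · -- VH
    have hij : i ≤ j := by have : (2*i+2:ℕ) ≤ 2*j+2 := ncast (by push_cast; linarith); omega
    have hji : j ≤ i := by have : (2*j+1:ℕ) ≤ 2*i+2 := ncast (by push_cast; linarith); omega
    have hh : j = i := le_antisymm hji hij
    subst hh
    exact Or.inr ⟨j, hi, Or.inr ⟨c1, by linarith, by linarith⟩⟩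
  · -- VV
    have hh : i = j := by
      have : (2*i+2:ℕ) = 2*j+2 := ncast'' (by push_cast; linarith)
      omega
    subst hh
    exact Or.inr ⟨i, hi, Or.inr ⟨c1, by linarith, by linarith⟩⟩

lemma K_ortho (k : ℕ) : ∀ a ∈ K k, ∀ b ∈ K k, (a.1 = b.1 ∨ a.2 = b.2) →
    segment ℝ a b ⊆ K k := by
  rintro ⟨a1, a2⟩ ha ⟨b1, b2⟩ hb (hab | hab) <;> dsimp only at hab
  · subst hab
    intro z hz
    rcases mem_vseg.mp hz with ⟨hz1, hz2⟩
    rcases mem_uIcc'.mp hz2 with ⟨hle1, hle2⟩ | ⟨hle1, hle2⟩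
    · have := vsliceK (x := a1) (y₁ := a2) (y₂ := b2) (y := z.2) ha hb hle1 hle2
      rwa [← hz1, Prod.mk.eta] at this
    · have := vsliceK (x := a1) (y₁ := b2) (y₂ := a2) (y := z.2) hb ha hle1 hle2
      rwa [← hz1, Prod.mk.eta] at this
  · subst hab
    intro z hz
    rcases mem_hseg.mp hz with ⟨hz1, hz2⟩
    rcases mem_uIcc'.mp hz1 with ⟨hle1, hle2⟩ | ⟨hle1, hle2⟩
    · have := hsliceK (y := a2) (x₁ := a1) (x₂ := b1) (x := z.1) ha hb hle1 hle2
      rwa [← hz2, Prod.mk.eta] at this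
    · have := hsliceK (y := a2) (x₁ := b1) (x₂ := a1) (x := z.1) hb ha hle1 hle2
      rwa [← hz2, Prod.mk.eta] at this

end GapConstruction

namespace GapConstruction

open Classical in
noncomputable def edgesF (k : ℕ) : Finset (Pt × Pt) :=
  ((Finset.range k).image fun i : ℕ =>
      (((2*(i:ℝ), 2*(i:ℝ)) : Pt), ((2*(i:ℝ)+1, 2*(i:ℝ)) : Pt))) ∪
  ((Finset.range k).image fun i : ℕ =>
      (((2*(i:ℝ), 2*(i:ℝ)+1) : Pt), ((2*(i:ℝ)+1, 2*(i:ℝ)+1) : Pt))) ∪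
  ((Finset.range k).image fun i : ℕ =>
      (((2*(i:ℝ), 2*(i:ℝ)) : Pt), ((2*(i:ℝ), 2*(i:ℝ)+1) : Pt))) ∪
  ((Finset.range k).image fun i : ℕ =>
      (((2*(i:ℝ)+1, 2*(i:ℝ)) : Pt), ((2*(i:ℝ)+1, 2*(i:ℝ)+1) : Pt))) ∪
  ((Finset.range (k-1)).image fun i : ℕ =>
      (((2*(i:ℝ)+1, 2*(i:ℝ)+1) : Pt), ((2*(i:ℝ)+2, 2*(i:ℝ)+1) : Pt))) ∪
  ((Finset.range (k-1)).image fun i : ℕ =>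
      (((2*(i:ℝ)+2, 2*(i:ℝ)+1) : Pt), ((2*(i:ℝ)+2, 2*(i:ℝ)+2) : Pt)))

open Classical in
lemma mem_edgesF {k : ℕ} {e : Pt × Pt} : e ∈ edgesF k ↔
    (∃ i : ℕ, i < k ∧
      (e = (((2*(i:ℝ), 2*(i:ℝ)) : Pt), ((2*(i:ℝ)+1, 2*(i:ℝ)) : Pt)) ∨
       e = (((2*(i:ℝ), 2*(i:ℝ)+1) : Pt), ((2*(i:ℝ)+1, 2*(i:ℝ)+1) : Pt)) ∨
       e = (((2*(i:ℝ), 2*(i:ℝ)) : Pt), ((2*(i:ℝ), 2*(i:ℝ)+1) : Pt)) ∨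
       e = (((2*(i:ℝ)+1, 2*(i:ℝ)) : Pt), ((2*(i:ℝ)+1, 2*(i:ℝ)+1) : Pt)))) ∨
    (∃ i : ℕ, i + 1 < k ∧
      (e = (((2*(i:ℝ)+1, 2*(i:ℝ)+1) : Pt), ((2*(i:ℝ)+2, 2*(i:ℝ)+1) : Pt)) ∨
       e = (((2*(i:ℝ)+2, 2*(i:ℝ)+1) : Pt), ((2*(i:ℝ)+2, 2*(i:ℝ)+2) : Pt)))) := by
  constructor
  · intro h
    rcases Finset.mem_union.mp h with h | h6
    · rcases Finset.mem_union.mp h with h | h5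
      · rcases Finset.mem_union.mp h with h | h4
        · rcases Finset.mem_union.mp h with h | h3
          · rcases Finset.mem_union.mp h with h | h2
            · obtain ⟨i, hi, he⟩ := Finset.mem_image.mp h
              exact Or.inl ⟨i, Finset.mem_range.mp hi, Or.inl he.symm⟩
            · obtain ⟨i, hi, he⟩ := Finset.mem_image.mp h2
              exact Or.inl ⟨i, Finset.mem_range.mp hi, Or.inr (Or.inl he.symm)⟩
          · obtain ⟨i, hi, he⟩ := Finset.mem_image.mp h3
            exact Or.inl ⟨i, Finset.mem_range.mp hi, Or.inr (Or.inr (Or.inl he.symm))⟩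
        · obtain ⟨i, hi, he⟩ := Finset.mem_image.mp h4
          exact Or.inl ⟨i, Finset.mem_range.mp hi, Or.inr (Or.inr (Or.inr he.symm))⟩
      · obtain ⟨i, hi, he⟩ := Finset.mem_image.mp h5
        exact Or.inr ⟨i, by have := Finset.mem_range.mp hi; omega, Or.inl he.symm⟩
    · obtain ⟨i, hi, he⟩ := Finset.mem_image.mp h6
      exact Or.inr ⟨i, by have := Finset.mem_range.mp hi; omega, Or.inr he.symm⟩
  · rintro (⟨i, hi, (rfl|rfl|rfl|rfl)⟩ | ⟨i, hi, (rfl|rfl)⟩)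
    · exact Finset.mem_union.mpr (Or.inl (Finset.mem_union.mpr (Or.inl (Finset.mem_union.mpr
        (Or.inl (Finset.mem_union.mpr (Or.inl (Finset.mem_union.mpr (Or.inl
        (Finset.mem_image.mpr ⟨i, Finset.mem_range.mpr hi, rfl⟩))))))))))
    · exact Finset.mem_union.mpr (Or.inl (Finset.mem_union.mpr (Or.inl (Finset.mem_union.mpr
        (Or.inl (Finset.mem_union.mpr (Or.inl (Finset.mem_union.mpr (Or.inr
        (Finset.mem_image.mpr ⟨i, Finset.mem_range.mpr hi, rfl⟩))))))))))
    · exact Finset.mem_union.mpr (Or.inl (Finset.mem_union.mpr (Or.inl (Finset.mem_union.mpr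
        (Or.inl (Finset.mem_union.mpr (Or.inr
        (Finset.mem_image.mpr ⟨i, Finset.mem_range.mpr hi, rfl⟩))))))))
    · exact Finset.mem_union.mpr (Or.inl (Finset.mem_union.mpr (Or.inl (Finset.mem_union.mpr
        (Or.inr (Finset.mem_image.mpr ⟨i, Finset.mem_range.mpr hi, rfl⟩))))))
    · exact Finset.mem_union.mpr (Or.inl (Finset.mem_union.mpr (Or.inr
        (Finset.mem_image.mpr ⟨i, Finset.mem_range.mpr (by omega), rfl⟩))))
    · exact Finset.mem_union.mpr (Or.inr
        (Finset.mem_image.mpr ⟨i, Finset.mem_range.mpr (by omega), rfl⟩))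

lemma K_boundary (k : ℕ) : K k \ IntSet k = ⋃ e ∈ edgesF k, segment ℝ e.1 e.2 := by
  ext z
  constructor
  · rintro ⟨hzK, hzN⟩
    rcases hzK with ⟨i, hik, s1, s2, s3, s4⟩ | ⟨i, hik, ⟨e1, e2, e3⟩ | ⟨e1, e2, e3⟩⟩
    · have hbd : z.1 = 2*(i:ℝ) ∨ z.1 = 2*(i:ℝ)+1 ∨ z.2 = 2*(i:ℝ) ∨ z.2 = 2*(i:ℝ)+1 := by
        by_contra hcon
        push_neg at hcon
        obtain ⟨n1, n2, n3, n4⟩ := hcon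
        exact hzN ⟨i, hik, lt_of_le_of_ne s1 (Ne.symm n1), lt_of_le_of_ne s2 n2,
          lt_of_le_of_ne s3 (Ne.symm n3), lt_of_le_of_ne s4 n4⟩
      rcases hbd with hb | hb | hb | hb
      · refine Set.mem_biUnion (mem_edgesF.mpr (Or.inl ⟨i, hik,
          Or.inr (Or.inr (Or.inl rfl))⟩)) ?_
        exact mem_vseg.mpr ⟨hb, Set.mem_uIcc.mpr (Or.inl ⟨s3, s4⟩)⟩
      · refine Set.mem_biUnion (mem_edgesF.mpr (Or.inl ⟨i, hik,
          Or.inr (Or.inr (Or.inr rfl))⟩)) ?_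
        exact mem_vseg.mpr ⟨hb, Set.mem_uIcc.mpr (Or.inl ⟨s3, s4⟩)⟩
      · refine Set.mem_biUnion (mem_edgesF.mpr (Or.inl ⟨i, hik, Or.inl rfl⟩)) ?_
        exact mem_hseg.mpr ⟨Set.mem_uIcc.mpr (Or.inl ⟨s1, s2⟩), hb⟩
      · refine Set.mem_biUnion (mem_edgesF.mpr (Or.inl ⟨i, hik,
          Or.inr (Or.inl rfl)⟩)) ?_
        exact mem_hseg.mpr ⟨Set.mem_uIcc.mpr (Or.inl ⟨s1, s2⟩), hb⟩
    · refine Set.mem_biUnion (mem_edgesF.mpr (Or.inr ⟨i, hik, Or.inl rfl⟩)) ?_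
      exact mem_hseg.mpr ⟨Set.mem_uIcc.mpr (Or.inl ⟨e1, e2⟩), e3⟩
    · refine Set.mem_biUnion (mem_edgesF.mpr (Or.inr ⟨i, hik, Or.inr rfl⟩)) ?_
      exact mem_vseg.mpr ⟨e1, Set.mem_uIcc.mpr (Or.inl ⟨e2, e3⟩)⟩
  · intro hz
    rcases Set.mem_iUnion₂.mp hz with ⟨e, he, hze⟩
    rcases mem_edgesF.mp he with ⟨i, hik, (rfl|rfl|rfl|rfl)⟩ | ⟨i, hik, (rfl|rfl)⟩
    · rcases mem_hseg.mp hze with ⟨h1, h2⟩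
      rcases mem_uIcc'.mp h1 with ⟨g1, g2⟩ | ⟨g1, g2⟩ <;>
      · refine ⟨Or.inl ⟨i, hik, by linarith, by linarith, by linarith, by linarith⟩, ?_⟩
        rintro ⟨j, hj, g3, g4, g5, g6⟩
        have := ncast' (show ((2*j:ℕ):ℝ) < ((2*i:ℕ):ℝ) by push_cast; linarith)
        have := ncast' (show ((2*i:ℕ):ℝ) < ((2*j+1:ℕ):ℝ) by push_cast; linarith)
        omega
    · rcases mem_hseg.mp hze with ⟨h1, h2⟩
      rcases mem_uIcc'.mp h1 with ⟨g1, g2⟩ | ⟨g1, g2⟩ <;>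
      · refine ⟨Or.inl ⟨i, hik, by linarith, by linarith, by linarith, by linarith⟩, ?_⟩
        rintro ⟨j, hj, g3, g4, g5, g6⟩
        have := ncast' (show ((2*j:ℕ):ℝ) < ((2*i+1:ℕ):ℝ) by push_cast; linarith)
        have := ncast' (show ((2*i+1:ℕ):ℝ) < ((2*j+1:ℕ):ℝ) by push_cast; linarith)
        omega
    · rcases mem_vseg.mp hze with ⟨h1, h2⟩
      rcases mem_uIcc'.mp h2 with ⟨g1, g2⟩ | ⟨g1, g2⟩ <;>
      · refine ⟨Or.inl ⟨i, hik, by linarith, by linarith, by linarith, by linarith⟩, ?_⟩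
        rintro ⟨j, hj, g3, g4, g5, g6⟩
        have := ncast' (show ((2*j:ℕ):ℝ) < ((2*i:ℕ):ℝ) by push_cast; linarith)
        have := ncast' (show ((2*i:ℕ):ℝ) < ((2*j+1:ℕ):ℝ) by push_cast; linarith)
        omega
    · rcases mem_vseg.mp hze with ⟨h1, h2⟩
      rcases mem_uIcc'.mp h2 with ⟨g1, g2⟩ | ⟨g1, g2⟩ <;>
      · refine ⟨Or.inl ⟨i, hik, by linarith, by linarith, by linarith, by linarith⟩, ?_⟩
        rintro ⟨j, hj, g3, g4, g5, g6⟩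
        have := ncast' (show ((2*j:ℕ):ℝ) < ((2*i+1:ℕ):ℝ) by push_cast; linarith)
        have := ncast' (show ((2*i+1:ℕ):ℝ) < ((2*j+1:ℕ):ℝ) by push_cast; linarith)
        omega
    · rcases mem_hseg.mp hze with ⟨h1, h2⟩
      rcases mem_uIcc'.mp h1 with ⟨g1, g2⟩ | ⟨g1, g2⟩ <;>
      · refine ⟨Or.inr ⟨i, hik, Or.inl ⟨by linarith, by linarith, h2⟩⟩, ?_⟩
        rintro ⟨j, hj, g3, g4, g5, g6⟩
        have := ncast' (show ((2*j:ℕ):ℝ) < ((2*i+1:ℕ):ℝ) by push_cast; linarith)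
        have := ncast' (show ((2*i+1:ℕ):ℝ) < ((2*j+1:ℕ):ℝ) by push_cast; linarith)
        omega
    · rcases mem_vseg.mp hze with ⟨h1, h2⟩
      rcases mem_uIcc'.mp h2 with ⟨g1, g2⟩ | ⟨g1, g2⟩ <;>
      · refine ⟨Or.inr ⟨i, hik, Or.inr ⟨h1, by linarith, by linarith⟩⟩, ?_⟩
        rintro ⟨j, hj, g3, g4, g5, g6⟩
        have := ncast' (show ((2*j:ℕ):ℝ) < ((2*i+2:ℕ):ℝ) by push_cast; linarith)
        have := ncast' (show ((2*i+2:ℕ):ℝ) < ((2*j+1:ℕ):ℝ) by push_cast; linarith)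
        omega

noncomputable def obstacle (k : ℕ) (hk : 1 ≤ k) : RectObstacle where
  carrier := K k
  edges := edgesF k
  compact' := K_compact k
  connected' := by
    obtain ⟨m, rfl⟩ : ∃ m, k = m + 1 := ⟨k - 1, by omega⟩
    exact K_conn m
  interior_ne := by
    refine ⟨((1:ℝ)/2, (1:ℝ)/2), IntSet_sub ⟨0, hk, ?_, ?_, ?_, ?_⟩⟩ <;> norm_num
  ortho := K_ortho k
  boundary_eq := by
    rw [(K_closed k).frontier_eq, interior_K]
    exact K_boundary k
  edges_axis := by
    intro e he
    rcases mem_edgesF.mp he with ⟨i, hik, (rfl|rfl|rfl|rfl)⟩ | ⟨i, hik, (rfl|rfl)⟩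
    · exact Or.inr rfl
    · exact Or.inr rfl
    · exact Or.inl rfl
    · exact Or.inl rfl
    · exact Or.inr rfl
    · exact Or.inl rfl

end GapConstruction

namespace GapConstruction

lemma lpath_mem1 {p q z : Pt} : z ∈ lpath p (p.1, q.2) q ↔
    (z.1 = p.1 ∧ z.2 ∈ uIcc p.2 q.2) ∨ (z.1 ∈ uIcc p.1 q.1 ∧ z.2 = q.2) := by
  unfold lpath
  constructor
  · rintro (h | h)
    · rw [← Prod.mk.eta (p := p)] at h
      exact Or.inl (mem_vseg.mp h)
    · rw [← Prod.mk.eta (p := q)] at h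
      exact Or.inr (mem_hseg.mp h)
  · rintro (h | h)
    · refine Or.inl ?_
      rw [← Prod.mk.eta (p := p)]
      exact mem_vseg.mpr h
    · refine Or.inr ?_
      rw [← Prod.mk.eta (p := q)]
      exact mem_hseg.mpr h

lemma lpath_mem2 {p q z : Pt} : z ∈ lpath p (q.1, p.2) q ↔
    (z.1 ∈ uIcc p.1 q.1 ∧ z.2 = p.2) ∨ (z.1 = q.1 ∧ z.2 ∈ uIcc p.2 q.2) := by
  unfold lpath
  constructor
  · rintro (h | h)
    · rw [← Prod.mk.eta (p := p)] at h
      exact Or.inl (mem_hseg.mp h)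
    · rw [← Prod.mk.eta (p := q)] at h
      exact Or.inr (mem_vseg.mp h)
  · rintro (h | h)
    · refine Or.inl ?_
      rw [← Prod.mk.eta (p := p)]
      exact mem_hseg.mpr h
    · refine Or.inr ?_
      rw [← Prod.mk.eta (p := q)]
      exact mem_vseg.mpr h

lemma lpath_symm (p c q : Pt) : lpath p c q = lpath q c p := by
  unfold lpath
  rw [segment_symm (𝕜 := ℝ) (x := q) (y := c), segment_symm (𝕜 := ℝ) (x := c) (y := p), union_comm]

/-- BAD configuration 1: the sibling path misses the interior. -/
lemma sibling_miss1 {k : ℕ} {p q : Pt} {i : ℕ}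
    (hp2 : p.2 ≤ 2*(i:ℝ)) (hp1 : 2*(i:ℝ) < p.1) (hq2 : q.2 < 2*(i:ℝ)+1)
    (hq1 : 2*(i:ℝ)+1 ≤ q.1) (hq2' : 2*(i:ℝ) < q.2) :
    ¬ (lpath p (q.1, p.2) q ∩ IntSet k).Nonempty := by
  rintro ⟨z, hzP, ⟨j, hj, g1, g2, g3, g4⟩⟩
  rcases lpath_mem2.mp hzP with ⟨hz1, hz2⟩ | ⟨hz1, hz2⟩
  · -- horizontal leg at height p.2
    have hji : j + 1 ≤ i := nle1 (by linarith)
    have := nrle hji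
    rcases mem_uIcc'.mp hz1 with ⟨u1, u2⟩ | ⟨u1, u2⟩ <;> linarith
  · -- vertical leg at q.1
    have hij : i + 1 ≤ j := by
      have : (2*i+1:ℕ) < (2*j+1:ℕ) := ncast' (by push_cast; linarith)
      omega
    have : ((i:ℝ)+1) ≤ j := by exact_mod_cast hij
    rcases mem_uIcc'.mp hz2 with ⟨u1, u2⟩ | ⟨u1, u2⟩ <;> linarith

/-- BAD configuration 2: the sibling path misses the interior. -/
lemma sibling_miss2 {k : ℕ} {p q : Pt} {i : ℕ}
    (hp2 : 2*(i:ℝ)+1 ≤ p.2) (hp1 : p.1 < 2*(i:ℝ)+1) (hq2 : 2*(i:ℝ) < q.2)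
    (hq1 : q.1 ≤ 2*(i:ℝ)) (hp1' : 2*(i:ℝ) < p.1) :
    ¬ (lpath p (q.1, p.2) q ∩ IntSet k).Nonempty := by
  rintro ⟨z, hzP, ⟨j, hj, g1, g2, g3, g4⟩⟩
  rcases lpath_mem2.mp hzP with ⟨hz1, hz2⟩ | ⟨hz1, hz2⟩
  · have hij : i + 1 ≤ j := by
      have : (2*i+1:ℕ) < (2*j+1:ℕ) := ncast' (by push_cast; linarith)
      omega
    have : ((i:ℝ)+1) ≤ j := by exact_mod_cast hij
    rcases mem_uIcc'.mp hz1 with ⟨u1, u2⟩ | ⟨u1, u2⟩ <;> linarith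
  · have hji : j + 1 ≤ i := nle1 (by linarith)
    have := nrle hji
    rcases mem_uIcc'.mp hz2 with ⟨u1, u2⟩ | ⟨u1, u2⟩ <;> linarith

/-- Every doubly forced L-path meets one of the diagonals. -/
lemma blocked {k : ℕ} {p q : Pt} (hp : p ∉ IntSet k) (hq : q ∉ IntSet k)
    (h1 : (lpath p (p.1, q.2) q ∩ IntSet k).Nonempty)
    (h2 : (lpath p (q.1, p.2) q ∩ IntSet k).Nonempty) :
    ∃ i : ℕ, i < k ∧ (lpath p (p.1, q.2) q ∩
      segment ℝ ((2*(i:ℝ), 2*(i:ℝ)):Pt) ((2*(i:ℝ)+1, 2*(i:ℝ)+1):Pt)).Nonempty := by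
  have hp' : ∀ j : ℕ, j < k → 2*(j:ℝ) < p.1 → p.1 < 2*(j:ℝ)+1 →
      ¬(2*(j:ℝ) < p.2 ∧ p.2 < 2*(j:ℝ)+1) := by
    rintro j hj a1 a2 ⟨a3, a4⟩
    exact hp ⟨j, hj, a1, a2, a3, a4⟩
  have hq' : ∀ j : ℕ, j < k → 2*(j:ℝ) < q.1 → q.1 < 2*(j:ℝ)+1 →
      ¬(2*(j:ℝ) < q.2 ∧ q.2 < 2*(j:ℝ)+1) := by
    rintro j hj a1 a2 ⟨a3, a4⟩
    exact hq ⟨j, hj, a1, a2, a3, a4⟩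
  obtain ⟨z, hzP, ⟨i, hik, g1, g2, g3, g4⟩⟩ := h1
  rcases lpath_mem1.mp hzP with ⟨hz1, hz2⟩ | ⟨hz1, hz2⟩
  · -- vertical leg of the path meets the open square i
    have hp1a : 2*(i:ℝ) < p.1 := by rw [← hz1]; exact g1
    have hp1b : p.1 < 2*(i:ℝ)+1 := by rw [← hz1]; exact g2
    by_cases hmem : p.1 ∈ uIcc p.2 q.2
    · exact ⟨i, hik, (p.1, p.1), lpath_mem1.mpr (Or.inl ⟨rfl, hmem⟩),
        mem_dseg.mpr ⟨rfl, by linarith, by linarith⟩⟩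
    · rw [mem_uIcc'] at hmem
      push_neg at hmem
      obtain ⟨hm1, hm2⟩ := hmem
      rcases le_or_gt p.2 p.1 with hcase | hcase
      · -- V.a
        have hq2lt : q.2 < p.1 := hm1 hcase
        have hp2le : p.2 ≤ 2*(i:ℝ) := by
          rcases le_or_gt p.2 (2*(i:ℝ)) with h | h
          · exact h
          · exact absurd ⟨h, by linarith⟩ (hp' i hik hp1a hp1b)
        have hq2gt : 2*(i:ℝ) < q.2 := by
          by_contra hx
          push_neg at hx
          rcases mem_uIcc'.mp hz2 with ⟨u1, u2⟩ | ⟨u1, u2⟩ <;> linarith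
        have hq1c : q.1 ≤ 2*(i:ℝ) ∨ 2*(i:ℝ)+1 ≤ q.1 := by
          by_contra hcc
          push_neg at hcc
          exact hq' i hik hcc.1 hcc.2 ⟨hq2gt, by linarith⟩
        rcases hq1c with hc | hc
        · exact ⟨i, hik, (q.2, q.2),
            lpath_mem1.mpr (Or.inr ⟨mem_uIcc'.mpr (Or.inr ⟨by linarith, by linarith⟩), rfl⟩),
            mem_dseg.mpr ⟨rfl, by linarith, by linarith⟩⟩
        · exact absurd h2 (sibling_miss1 hp2le hp1a (by linarith) hc hq2gt)
      · -- V.b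
        have hq2gt : p.1 < q.2 := by
          by_contra hx
          push_neg at hx
          have := hm2 hx
          linarith
        have hp2ge : 2*(i:ℝ)+1 ≤ p.2 := by
          rcases le_or_gt (2*(i:ℝ)+1) p.2 with h | h
          · exact h
          · exact absurd ⟨by linarith, h⟩ (hp' i hik hp1a hp1b)
        have hq2lt : q.2 < 2*(i:ℝ)+1 := by
          by_contra hx
          push_neg at hx
          rcases mem_uIcc'.mp hz2 with ⟨u1, u2⟩ | ⟨u1, u2⟩ <;> linarith
        have hq1c : q.1 ≤ 2*(i:ℝ) ∨ 2*(i:ℝ)+1 ≤ q.1 := by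
          by_contra hcc
          push_neg at hcc
          exact hq' i hik hcc.1 hcc.2 ⟨by linarith, hq2lt⟩
        rcases hq1c with hc | hc
        · exact absurd h2 (sibling_miss2 hp2ge hp1b (by linarith) hc hp1a)
        · exact ⟨i, hik, (q.2, q.2),
            lpath_mem1.mpr (Or.inr ⟨mem_uIcc'.mpr (Or.inl ⟨by linarith, by linarith⟩), rfl⟩),
            mem_dseg.mpr ⟨rfl, by linarith, by linarith⟩⟩
  · -- horizontal leg of the path meets the open square i
    have hq2a : 2*(i:ℝ) < q.2 := by rw [← hz2]; exact g3
    have hq2b : q.2 < 2*(i:ℝ)+1 := by rw [← hz2]; exact g4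
    have hq1c : q.1 ≤ 2*(i:ℝ) ∨ 2*(i:ℝ)+1 ≤ q.1 := by
      by_contra hcc
      push_neg at hcc
      exact hq' i hik hcc.1 hcc.2 ⟨hq2a, hq2b⟩
    by_cases hmem : q.2 ∈ uIcc p.1 q.1
    · exact ⟨i, hik, (q.2, q.2), lpath_mem1.mpr (Or.inr ⟨hmem, rfl⟩),
        mem_dseg.mpr ⟨rfl, by linarith, by linarith⟩⟩
    · rw [mem_uIcc'] at hmem
      push_neg at hmem
      obtain ⟨hm1, hm2⟩ := hmem
      rcases hq1c with hc | hc
      · -- H.a : q.1 ≤ 2i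
        have hp1lt : p.1 < q.2 := hm2 (by linarith)
        have hp1gt : 2*(i:ℝ) < p.1 := by
          rcases mem_uIcc'.mp hz1 with ⟨u1, u2⟩ | ⟨u1, u2⟩
          · exfalso; linarith
          · linarith
        have hp2c : p.2 ≤ 2*(i:ℝ) ∨ 2*(i:ℝ)+1 ≤ p.2 := by
          by_contra hcc
          push_neg at hcc
          exact hp' i hik hp1gt (by linarith) ⟨hcc.1, hcc.2⟩
        rcases hp2c with hd | hd
        · exact ⟨i, hik, (p.1, p.1),
            lpath_mem1.mpr (Or.inl ⟨rfl, mem_uIcc'.mpr (Or.inl ⟨by linarith, by linarith⟩)⟩),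
            mem_dseg.mpr ⟨rfl, by linarith, by linarith⟩⟩
        · exact absurd h2 (sibling_miss2 hd (by linarith) hq2a hc hp1gt)
      · -- H.b : 2i+1 ≤ q.1
        have hq2p1 : q.2 < p.1 := by
          by_contra hx
          push_neg at hx
          have := hm1 hx
          linarith
        have hp1lt : p.1 < 2*(i:ℝ)+1 := by
          rcases mem_uIcc'.mp hz1 with ⟨u1, u2⟩ | ⟨u1, u2⟩
          · linarith
          · exfalso; linarith
        have hp2c : p.2 ≤ 2*(i:ℝ) ∨ 2*(i:ℝ)+1 ≤ p.2 := by
          by_contra hcc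
          push_neg at hcc
          exact hp' i hik (by linarith) hp1lt ⟨hcc.1, hcc.2⟩
        rcases hp2c with hd | hd
        · exact absurd h2 (sibling_miss1 hd (by linarith) hq2b hc hq2a)
        · exact ⟨i, hik, (p.1, p.1),
            lpath_mem1.mpr (Or.inl ⟨rfl, mem_uIcc'.mpr (Or.inr ⟨by linarith, by linarith⟩)⟩),
            mem_dseg.mpr ⟨rfl, by linarith, by linarith⟩⟩

end GapConstruction

namespace GapConstruction

open Classical in
noncomputable def S1F (k : ℕ) : Finset (Pt × Pt) :=
  (Finset.range k).image fun i : ℕ =>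
    (((2*(i:ℝ), 2*(i:ℝ)) : Pt), ((2*(i:ℝ)+1, 2*(i:ℝ)+1) : Pt))

lemma S1F_card (k : ℕ) : (S1F k).card = k := by
  rw [S1F, Finset.card_image_of_injOn, Finset.card_range]
  intro i _ j _ h
  have h1 := congrArg (fun e : Pt × Pt => e.1.1) h
  dsimp only at h1
  have : (2*i:ℕ) = 2*j := ncast'' (by push_cast; linarith)
  omega

lemma mem_segUnion {S : Finset (Pt × Pt)} {z : Pt} :
    z ∈ segUnion S ↔ ∃ e ∈ S, z ∈ segment ℝ e.1 e.2 := by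
  simp [segUnion]

lemma segUnion_mono {S T : Finset (Pt × Pt)} (h : S ⊆ T) : segUnion S ⊆ segUnion T := by
  intro z hz
  rcases mem_segUnion.mp hz with ⟨e, he, hze⟩
  exact mem_segUnion.mpr ⟨e, h he, hze⟩

lemma S1_sub {k : ℕ} : segUnion (S1F k) ⊆ K k := by
  intro z hz
  rcases mem_segUnion.mp hz with ⟨e, he, hze⟩
  obtain ⟨i, hi, he'⟩ := Finset.mem_image.mp he
  rw [← he'] at hze
  rcases mem_dseg.mp hze with ⟨h1, h2, h3⟩
  exact Or.inl ⟨i, Finset.mem_range.mp hi, h2, h3, by linarith, by linarith⟩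

lemma S1_skeleton (k : ℕ) (hk : 1 ≤ k) : (obstacle k hk).IsSkeleton (S1F k) := by
  constructor
  · exact S1_sub
  · intro p q hp hq hforce c hc
    have hint : interior (obstacle k hk).carrier = IntSet k := interior_K
    rw [hint] at hp hq
    have hc1 : ((p.1, q.2) : Pt) ∈ cornerPts p q := Set.mem_insert _ _
    have hc2 : ((q.1, p.2) : Pt) ∈ cornerPts p q := Set.mem_insert_iff.mpr (Or.inr rfl)
    have hf1 := hforce _ hc1
    have hf2 := hforce _ hc2
    rw [hint] at hf1 hf2
    rcases Set.mem_insert_iff.mp hc with rfl | hc'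
    · obtain ⟨i, hik, w, hw1, hw2⟩ := blocked hp hq hf1 hf2
      exact ⟨w, hw1, mem_segUnion.mpr ⟨_,
        Finset.mem_image.mpr ⟨i, Finset.mem_range.mpr hik, rfl⟩, hw2⟩⟩
    · rw [Set.mem_singleton_iff.mp hc']
      have hf1' : (lpath q (q.1, p.2) p ∩ IntSet k).Nonempty := by
        rw [← lpath_symm]; exact hf2
      have hf2' : (lpath q (p.1, q.2) p ∩ IntSet k).Nonempty := by
        rw [← lpath_symm]; exact hf1
      obtain ⟨i, hik, w, hw1, hw2⟩ := blocked hq hp hf1' hf2'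
      rw [← lpath_symm] at hw1
      exact ⟨w, hw1, mem_segUnion.mpr ⟨_,
        Finset.mem_image.mpr ⟨i, Finset.mem_range.mpr hik, rfl⟩, hw2⟩⟩

lemma chord_point {k : ℕ} {hk : 1 ≤ k} {T : Finset (Pt × Pt)}
    (hT : (obstacle k hk).IsSkeleton T) :
    ∀ i : ℕ, i < k → ∃ e ∈ T, ∃ z ∈ segment ℝ e.1 e.2,
      z.2 = 2*(i:ℝ)+1/2 ∧ 2*(i:ℝ) ≤ z.1 ∧ z.1 ≤ 2*(i:ℝ)+1 := by
  intro i hik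
  obtain ⟨hsub, hblock⟩ := hT
  have hint : interior (obstacle k hk).carrier = IntSet k := interior_K
  have hpint : ((2*(i:ℝ), 2*(i:ℝ)+1/2) : Pt) ∉ interior (obstacle k hk).carrier := by
    rw [hint]
    rintro ⟨j, hj, g1, g2, g3, g4⟩
    dsimp only at g1 g2
    have := ncast' (show ((2*j:ℕ):ℝ) < ((2*i:ℕ):ℝ) by push_cast; linarith)
    have := ncast' (show ((2*i:ℕ):ℝ) < ((2*j+1:ℕ):ℝ) by push_cast; linarith)
    omega
  have hqint : ((2*(i:ℝ)+1, 2*(i:ℝ)+1/2) : Pt) ∉ interior (obstacle k hk).carrier := by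
    rw [hint]
    rintro ⟨j, hj, g1, g2, g3, g4⟩
    dsimp only at g1 g2
    have := ncast' (show ((2*j:ℕ):ℝ) < ((2*i+1:ℕ):ℝ) by push_cast; linarith)
    have := ncast' (show ((2*i+1:ℕ):ℝ) < ((2*j+1:ℕ):ℝ) by push_cast; linarith)
    omega
  have hmid : ((2*(i:ℝ)+1/2, 2*(i:ℝ)+1/2) : Pt) ∈ IntSet k :=
    ⟨i, hik, by norm_num, by norm_num, by norm_num, by norm_num⟩
  have hforce : ∀ c ∈ cornerPts ((2*(i:ℝ), 2*(i:ℝ)+1/2) : Pt) ((2*(i:ℝ)+1, 2*(i:ℝ)+1/2) : Pt),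
      (lpath ((2*(i:ℝ), 2*(i:ℝ)+1/2) : Pt) c ((2*(i:ℝ)+1, 2*(i:ℝ)+1/2) : Pt) ∩
        interior (obstacle k hk).carrier).Nonempty := by
    intro c hc
    rw [hint]
    refine ⟨(2*(i:ℝ)+1/2, 2*(i:ℝ)+1/2), ?_, hmid⟩
    rcases Set.mem_insert_iff.mp hc with rfl | hc'
    · refine lpath_mem1.mpr (Or.inr ⟨mem_uIcc'.mpr (Or.inl ⟨?_, ?_⟩), ?_⟩) <;>
        dsimp only <;> norm_num
    · rw [Set.mem_singleton_iff.mp hc']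
      refine lpath_mem2.mpr (Or.inl ⟨mem_uIcc'.mpr (Or.inl ⟨?_, ?_⟩), ?_⟩) <;>
        dsimp only <;> norm_num
  obtain ⟨z, hz1, hz2⟩ := hblock _ _ hpint hqint hforce _
    (Set.mem_insert (((2*(i:ℝ), 2*(i:ℝ)+1/2) : Pt).1, ((2*(i:ℝ)+1, 2*(i:ℝ)+1/2) : Pt).2) _)
  rcases mem_segUnion.mp hz2 with ⟨e, he, hze⟩
  have hco : z.2 = 2*(i:ℝ)+1/2 ∧ 2*(i:ℝ) ≤ z.1 ∧ z.1 ≤ 2*(i:ℝ)+1 := by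
    rcases lpath_mem1.mp hz1 with ⟨u1, u2⟩ | ⟨u1, u2⟩ <;> dsimp only at u1 u2
    · rcases mem_uIcc'.mp u2 with ⟨v1, v2⟩ | ⟨v1, v2⟩ <;>
        exact ⟨by linarith, by linarith, by linarith⟩
    · rcases mem_uIcc'.mp u1 with ⟨v1, v2⟩ | ⟨v1, v2⟩ <;>
        exact ⟨by linarith, by linarith, by linarith⟩
  exact ⟨e, he, z, hze, hco⟩

lemma seg_in_K {k : ℕ} {hk : 1 ≤ k} {T : Finset (Pt × Pt)}
    (hT : (obstacle k hk).IsSkeleton T) {e : Pt × Pt} (he : e ∈ T) :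
    segment ℝ e.1 e.2 ⊆ K k := by
  intro w hw
  exact hT.1 (mem_segUnion.mpr ⟨e, he, hw⟩)

lemma seg_two_rows {k : ℕ} {e : Pt × Pt} (hsub : segment ℝ e.1 e.2 ⊆ K k) {i j : ℕ}
    (hij : i < j) {w w' : Pt} (hw : w ∈ segment ℝ e.1 e.2) (hw' : w' ∈ segment ℝ e.1 e.2)
    (h1 : w.2 = 2*(i:ℝ)+1/2) (hx : w.1 ≤ 2*(i:ℝ)+1) (h2 : w'.2 = 2*(j:ℝ)+1/2) : False := by
  have hij' : ((i:ℝ)+1) ≤ j := by exact_mod_cast hij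
  obtain ⟨u, hu, hu2⟩ := exists_seg_y (P := w) (Q := w') (c := 2*(i:ℝ)+5/4)
    (by linarith) (by linarith)
  obtain ⟨u', hu', hu'2⟩ := exists_seg_y (P := w) (Q := w') (c := 2*(i:ℝ)+7/4)
    (by linarith) (by linarith)
  have hsws : segment ℝ w w' ⊆ segment ℝ e.1 e.2 :=
    (convex_segment e.1 e.2).segment_subset hw hw'
  have huE : u ∈ segment ℝ e.1 e.2 := hsws hu
  have hu'E : u' ∈ segment ℝ e.1 e.2 := hsws hu'
  have hux : u.1 = 2*(i:ℝ)+2 := strip_y (hsub huE) (by linarith) (by linarith)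
  have hu'x : u'.1 = 2*(i:ℝ)+2 := strip_y (hsub hu'E) (by linarith) (by linarith)
  have hcx := seg_const_x huE hu'E (hux.trans hu'x.symm)
    (by rw [hu2, hu'2]; norm_num) w hw
  rw [hux] at hcx
  linarith

lemma skeleton_lb {k : ℕ} {hk : 1 ≤ k} {T : Finset (Pt × Pt)}
    (hT : (obstacle k hk).IsSkeleton T) : k ≤ T.card := by
  classical
  have hch := chord_point hT
  choose f hfT z hzseg hz2 hz3 hz4 using hch
  set F : ℕ → Pt × Pt := fun i => if h : i < k then f i h else default with hF
  have hmaps : ∀ i ∈ Finset.range k, F i ∈ T := by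
    intro i hi
    have hik := Finset.mem_range.mp hi
    simp only [hF, dif_pos hik]
    exact hfT i hik
  have hinj : Set.InjOn F (Finset.range k) := by
    intro a ha b hb hab
    have hak := Finset.mem_range.mp ha
    have hbk := Finset.mem_range.mp hb
    by_contra hne
    rcases lt_or_gt_of_ne hne with hlt | hlt
    · have hFa : F a = f a hak := by simp only [hF, dif_pos hak]
      have hFb : F b = f b hbk := by simp only [hF, dif_pos hbk]
      have hEq : f a hak = f b hbk := by rw [← hFa, ← hFb, hab]
      refine seg_two_rows (e := f a hak) (seg_in_K hT (hfT a hak)) hlt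
        (hzseg a hak) ?_ (hz2 a hak) (hz4 a hak) (hz2 b hbk)
      rw [hEq]
      exact hzseg b hbk
    · have hFa : F a = f a hak := by simp only [hF, dif_pos hak]
      have hFb : F b = f b hbk := by simp only [hF, dif_pos hbk]
      have hEq : f b hbk = f a hak := by rw [← hFa, ← hFb, hab]
      refine seg_two_rows (e := f b hbk) (seg_in_K hT (hfT b hbk)) hlt
        (hzseg b hbk) ?_ (hz2 b hbk) (hz4 b hbk) (hz2 a hak)
      rw [hEq]
      exact hzseg a hak
  have := Finset.card_le_card_of_injOn F hmaps hinj
  rwa [Finset.card_range] at this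

lemma S1_min (k : ℕ) (hk : 1 ≤ k) : (obstacle k hk).IsMinSkeleton (S1F k) := by
  refine ⟨S1_skeleton k hk, ?_⟩
  intro T hT
  rw [S1F_card]
  exact skeleton_lb hT

end GapConstruction

namespace GapConstruction

open Classical in
noncomputable def SCF (k : ℕ) : Finset (Pt × Pt) :=
  S1F k ∪
  ((Finset.range (k-1)).image fun i : ℕ =>
      (((2*(i:ℝ)+1, 2*(i:ℝ)+1) : Pt), ((2*(i:ℝ)+2, 2*(i:ℝ)+1) : Pt))) ∪
  ((Finset.range (k-1)).image fun i : ℕ =>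
      (((2*(i:ℝ)+2, 2*(i:ℝ)+1) : Pt), ((2*(i:ℝ)+2, 2*(i:ℝ)+2) : Pt)))

open Classical in
lemma mem_SCF {k : ℕ} {e : Pt × Pt} : e ∈ SCF k ↔
    (∃ i : ℕ, i < k ∧ e = (((2*(i:ℝ), 2*(i:ℝ)) : Pt), ((2*(i:ℝ)+1, 2*(i:ℝ)+1) : Pt))) ∨
    (∃ i : ℕ, i + 1 < k ∧
      (e = (((2*(i:ℝ)+1, 2*(i:ℝ)+1) : Pt), ((2*(i:ℝ)+2, 2*(i:ℝ)+1) : Pt)) ∨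
       e = (((2*(i:ℝ)+2, 2*(i:ℝ)+1) : Pt), ((2*(i:ℝ)+2, 2*(i:ℝ)+2) : Pt)))) := by
  constructor
  · intro h
    rcases Finset.mem_union.mp h with h | h3
    · rcases Finset.mem_union.mp h with h | h2
      · obtain ⟨i, hi, he⟩ := Finset.mem_image.mp h
        exact Or.inl ⟨i, Finset.mem_range.mp hi, he.symm⟩
      · obtain ⟨i, hi, he⟩ := Finset.mem_image.mp h2
        exact Or.inr ⟨i, by have := Finset.mem_range.mp hi; omega, Or.inl he.symm⟩
    · obtain ⟨i, hi, he⟩ := Finset.mem_image.mp h3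
      exact Or.inr ⟨i, by have := Finset.mem_range.mp hi; omega, Or.inr he.symm⟩
  · rintro (⟨i, hi, rfl⟩ | ⟨i, hi, (rfl | rfl)⟩)
    · exact Finset.mem_union.mpr (Or.inl (Finset.mem_union.mpr (Or.inl
        (Finset.mem_image.mpr ⟨i, Finset.mem_range.mpr hi, rfl⟩))))
    · exact Finset.mem_union.mpr (Or.inl (Finset.mem_union.mpr (Or.inr
        (Finset.mem_image.mpr ⟨i, Finset.mem_range.mpr (by omega), rfl⟩))))
    · exact Finset.mem_union.mpr (Or.inr
        (Finset.mem_image.mpr ⟨i, Finset.mem_range.mpr (by omega), rfl⟩))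

lemma SCF_sub {k : ℕ} : segUnion (SCF k) ⊆ K k := by
  intro w hw
  rcases mem_segUnion.mp hw with ⟨e, he, hwe⟩
  rcases mem_SCF.mp he with ⟨i, hi, rfl⟩ | ⟨i, hi, (rfl | rfl)⟩
  · rcases mem_dseg.mp hwe with ⟨h1, h2, h3⟩
    exact Or.inl ⟨i, hi, h2, h3, by linarith, by linarith⟩
  · rcases mem_hseg.mp hwe with ⟨h1, h2⟩
    rcases mem_uIcc'.mp h1 with ⟨v1, v2⟩ | ⟨v1, v2⟩ <;>
      exact Or.inr ⟨i, hi, Or.inl ⟨by linarith, by linarith, h2⟩⟩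
  · rcases mem_vseg.mp hwe with ⟨h1, h2⟩
    rcases mem_uIcc'.mp h2 with ⟨v1, v2⟩ | ⟨v1, v2⟩ <;>
      exact Or.inr ⟨i, hi, Or.inr ⟨h1, by linarith, by linarith⟩⟩

lemma S1F_sub_SCF {k : ℕ} : S1F k ⊆ SCF k :=
  Finset.Subset.trans Finset.subset_union_left Finset.subset_union_left

lemma seg_isConnected (a b : Pt) : IsConnected (segment ℝ a b) :=
  ⟨⟨a, left_mem_segment _ _ _⟩, (convex_segment a b).isPreconnected⟩

lemma CU_one : segUnion (SCF 1) =
    segment ℝ ((2*((0:ℕ):ℝ), 2*((0:ℕ):ℝ)) : Pt) ((2*((0:ℕ):ℝ)+1, 2*((0:ℕ):ℝ)+1) : Pt) := by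
  ext z
  constructor
  · intro h
    rcases mem_segUnion.mp h with ⟨e, he, hze⟩
    rcases mem_SCF.mp he with ⟨i, hi, rfl⟩ | ⟨i, hi, _⟩
    · have : i = 0 := by omega
      subst this
      exact hze
    · omega
  · intro h
    exact mem_segUnion.mpr ⟨_, mem_SCF.mpr (Or.inl ⟨0, by omega, rfl⟩), h⟩

lemma CU_succ (n : ℕ) : segUnion (SCF (n+2)) = segUnion (SCF (n+1)) ∪
    (segment ℝ ((2*(n:ℝ)+1, 2*(n:ℝ)+1) : Pt) ((2*(n:ℝ)+2, 2*(n:ℝ)+1) : Pt) ∪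
     (segment ℝ ((2*(n:ℝ)+2, 2*(n:ℝ)+1) : Pt) ((2*(n:ℝ)+2, 2*(n:ℝ)+2) : Pt) ∪
      segment ℝ ((2*(((n+1):ℕ):ℝ), 2*(((n+1):ℕ):ℝ)) : Pt)
        ((2*(((n+1):ℕ):ℝ)+1, 2*(((n+1):ℕ):ℝ)+1) : Pt))) := by
  ext z
  constructor
  · intro hz
    rcases mem_segUnion.mp hz with ⟨e, he, hze⟩
    rcases mem_SCF.mp he with ⟨i, hi, rfl⟩ | ⟨i, hi, (rfl | rfl)⟩
    · rcases (by omega : i < n+1 ∨ i = n+1) with h | h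
      · exact Or.inl (mem_segUnion.mpr ⟨_, mem_SCF.mpr (Or.inl ⟨i, h, rfl⟩), hze⟩)
      · subst h
        exact Or.inr (Or.inr (Or.inr hze))
    · rcases (by omega : i+1 < n+1 ∨ i = n) with h | h
      · exact Or.inl (mem_segUnion.mpr ⟨_, mem_SCF.mpr (Or.inr ⟨i, h, Or.inl rfl⟩), hze⟩)
      · subst h
        exact Or.inr (Or.inl hze)
    · rcases (by omega : i+1 < n+1 ∨ i = n) with h | h
      · exact Or.inl (mem_segUnion.mpr ⟨_, mem_SCF.mpr (Or.inr ⟨i, h, Or.inr rfl⟩), hze⟩)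
      · subst h
        exact Or.inr (Or.inr (Or.inl hze))
  · rintro (h | (h | (h | h)))
    · rcases mem_segUnion.mp h with ⟨e, he, hze⟩
      refine mem_segUnion.mpr ⟨e, ?_, hze⟩
      rcases mem_SCF.mp he with ⟨i, hi, rfl⟩ | ⟨i, hi, hh⟩
      · exact mem_SCF.mpr (Or.inl ⟨i, by omega, rfl⟩)
      · exact mem_SCF.mpr (Or.inr ⟨i, by omega, hh⟩)
    · exact mem_segUnion.mpr ⟨_, mem_SCF.mpr (Or.inr ⟨n, by omega, Or.inl rfl⟩), h⟩
    · exact mem_segUnion.mpr ⟨_, mem_SCF.mpr (Or.inr ⟨n, by omega, Or.inr rfl⟩), h⟩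
    · exact mem_segUnion.mpr ⟨_, mem_SCF.mpr (Or.inl ⟨n+1, by omega, rfl⟩), h⟩

lemma SCF_conn (k : ℕ) : IsConnected (segUnion (SCF (k+1))) := by
  induction k with
  | zero =>
    rw [CU_one]
    exact seg_isConnected _ _
  | succ n ih =>
    rw [CU_succ]
    have c34 : ((2*(n:ℝ)+2, 2*(n:ℝ)+2) : Pt) ∈
        segment ℝ ((2*(((n+1):ℕ):ℝ), 2*(((n+1):ℕ):ℝ)) : Pt)
          ((2*(((n+1):ℕ):ℝ)+1, 2*(((n+1):ℕ):ℝ)+1) : Pt) :=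
      mem_dseg.mpr ⟨rfl, by push_cast; linarith, by push_cast; linarith⟩
    have hvd : IsConnected (segment ℝ ((2*(n:ℝ)+2, 2*(n:ℝ)+1) : Pt)
        ((2*(n:ℝ)+2, 2*(n:ℝ)+2) : Pt) ∪
        segment ℝ ((2*(((n+1):ℕ):ℝ), 2*(((n+1):ℕ):ℝ)) : Pt)
          ((2*(((n+1):ℕ):ℝ)+1, 2*(((n+1):ℕ):ℝ)+1) : Pt)) :=
      IsConnected.union ⟨(2*(n:ℝ)+2, 2*(n:ℝ)+2),
        right_mem_segment _ _ _, c34⟩ (seg_isConnected _ _) (seg_isConnected _ _)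
    have hhvd : IsConnected (segment ℝ ((2*(n:ℝ)+1, 2*(n:ℝ)+1) : Pt)
        ((2*(n:ℝ)+2, 2*(n:ℝ)+1) : Pt) ∪ _) :=
      IsConnected.union ⟨(2*(n:ℝ)+2, 2*(n:ℝ)+1),
        right_mem_segment _ _ _, Or.inl (left_mem_segment _ _ _)⟩ (seg_isConnected _ _) hvd
    refine IsConnected.union ⟨(2*(n:ℝ)+1, 2*(n:ℝ)+1), ?_, Or.inl (left_mem_segment _ _ _)⟩ ih hhvd
    refine mem_segUnion.mpr ⟨_, mem_SCF.mpr (Or.inl ⟨n, by omega, rfl⟩), ?_⟩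
    exact mem_dseg.mpr ⟨rfl, by dsimp only; linarith, by dsimp only; linarith⟩

lemma SCF_connSkeleton (k : ℕ) (hk : 1 ≤ k) : IsConnSkeleton (obstacle k hk) (SCF k) := by
  refine ⟨⟨SCF_sub, ?_⟩, ?_⟩
  · intro p q hp hq hforce c hc
    obtain ⟨w, hw1, hw2⟩ := (S1_skeleton k hk).2 p q hp hq hforce c hc
    exact ⟨w, hw1, segUnion_mono S1F_sub_SCF hw2⟩
  · obtain ⟨m, rfl⟩ : ∃ m, k = m + 1 := ⟨k - 1, by omega⟩
    exact SCF_conn m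

lemma seg_horiz_strip {k : ℕ} {e : Pt × Pt} (hsub : segment ℝ e.1 e.2 ⊆ K k) {i : ℕ}
    {w : Pt} (hw : w ∈ segment ℝ e.1 e.2) (hw1 : w.1 = 2*(i:ℝ)+3/2) :
    ∀ z ∈ segment ℝ e.1 e.2, z.2 = 2*(i:ℝ)+1 := by
  have hwy : w.2 = 2*(i:ℝ)+1 := strip_x (hsub hw) (by linarith) (by linarith)
  intro z hz
  by_cases hzx : 2*(i:ℝ)+1 < z.1 ∧ z.1 < 2*(i:ℝ)+2
  · exact strip_x (hsub hz) hzx.1 hzx.2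
  · push_neg at hzx
    rcases le_or_gt z.1 (2*(i:ℝ)+1) with hc | hc
    · obtain ⟨m, hm, hm1⟩ := exists_seg_x (P := z) (Q := w) (c := 2*(i:ℝ)+5/4)
        (by linarith) (by linarith)
      have hmseg : m ∈ segment ℝ e.1 e.2 := (convex_segment e.1 e.2).segment_subset hz hw hm
      have hmy : m.2 = 2*(i:ℝ)+1 := strip_x (hsub hmseg) (by linarith) (by linarith)
      have := seg_const_y hw hmseg (hwy.trans hmy.symm) (by rw [hw1, hm1]; norm_num) z hz
      rw [this, hwy]
    · have hc' : 2*(i:ℝ)+2 ≤ z.1 := hzx hc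
      obtain ⟨m, hm, hm1⟩ := exists_seg_x (P := w) (Q := z) (c := 2*(i:ℝ)+7/4)
        (by linarith) (by linarith)
      have hmseg : m ∈ segment ℝ e.1 e.2 := (convex_segment e.1 e.2).segment_subset hw hz hm
      have hmy : m.2 = 2*(i:ℝ)+1 := strip_x (hsub hmseg) (by linarith) (by linarith)
      have := seg_const_y hw hmseg (hwy.trans hmy.symm) (by rw [hw1, hm1]; norm_num) z hz
      rw [this, hwy]

lemma seg_vert_strip {k : ℕ} {e : Pt × Pt} (hsub : segment ℝ e.1 e.2 ⊆ K k) {i : ℕ}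
    {w : Pt} (hw : w ∈ segment ℝ e.1 e.2) (hw2 : w.2 = 2*(i:ℝ)+3/2) :
    ∀ z ∈ segment ℝ e.1 e.2, z.1 = 2*(i:ℝ)+2 := by
  have hwx : w.1 = 2*(i:ℝ)+2 := strip_y (hsub hw) (by linarith) (by linarith)
  intro z hz
  by_cases hzy : 2*(i:ℝ)+1 < z.2 ∧ z.2 < 2*(i:ℝ)+2
  · exact strip_y (hsub hz) hzy.1 hzy.2
  · push_neg at hzy
    rcases le_or_gt z.2 (2*(i:ℝ)+1) with hc | hc
    · obtain ⟨m, hm, hm1⟩ := exists_seg_y (P := z) (Q := w) (c := 2*(i:ℝ)+5/4)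
        (by linarith) (by linarith)
      have hmseg : m ∈ segment ℝ e.1 e.2 := (convex_segment e.1 e.2).segment_subset hz hw hm
      have hmx : m.1 = 2*(i:ℝ)+2 := strip_y (hsub hmseg) (by linarith) (by linarith)
      have := seg_const_x hw hmseg (hwx.trans hmx.symm) (by rw [hw2, hm1]; norm_num) z hz
      rw [this, hwx]
    · have hc' : 2*(i:ℝ)+2 ≤ z.2 := hzy hc
      obtain ⟨m, hm, hm1⟩ := exists_seg_y (P := w) (Q := z) (c := 2*(i:ℝ)+7/4)
        (by linarith) (by linarith)
      have hmseg : m ∈ segment ℝ e.1 e.2 := (convex_segment e.1 e.2).segment_subset hw hz hm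
      have hmx : m.1 = 2*(i:ℝ)+2 := strip_y (hsub hmseg) (by linarith) (by linarith)
      have := seg_const_x hw hmseg (hwx.trans hmx.symm) (by rw [hw2, hm1]; norm_num) z hz
      rw [this, hwx]

end GapConstruction

namespace GapConstruction

lemma conn_lb {k : ℕ} {hk : 1 ≤ k} {S : Finset (Pt × Pt)}
    (hS : IsConnSkeleton (obstacle k hk) S) : 2*k - 1 ≤ S.card := by
  classical
  obtain ⟨hskel, hconn⟩ := hS
  have hsubK : ∀ e ∈ S, segment ℝ e.1 e.2 ⊆ K k := fun e he y hy =>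
    hskel.1 (mem_segUnion.mpr ⟨e, he, hy⟩)
  have hch := chord_point hskel
  choose f hfS z hzseg hz2 hz3 hz4 using hch
  have hzA : ∀ (i) (hi : i < k), z i hi ∈ segUnion S := fun i hi =>
    mem_segUnion.mpr ⟨f i hi, hfS i hi, hzseg i hi⟩
  have hpre : IsPreconnected (segUnion S) := hconn.isPreconnected
  have hgapH : ∀ i : ℕ, i + 1 < k → ∃ e ∈ S,
      (∃ w ∈ segment ℝ e.1 e.2, w.1 = 2*(i:ℝ)+3/2) ∧
      ∀ y ∈ segment ℝ e.1 e.2, y.2 = 2*(i:ℝ)+1 := by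
    intro i hik1
    have hik : i < k := by omega
    have h1 : (z i hik).1 ≤ 2*(i:ℝ)+3/2 := by linarith [hz4 i hik]
    have h2 : 2*(i:ℝ)+3/2 ≤ (z (i+1) hik1).1 := by
      have := hz3 (i+1) hik1
      push_cast at this
      linarith
    have himg : IsPreconnected (Prod.fst '' segUnion S) :=
      hpre.image _ continuous_fst.continuousOn
    obtain ⟨w, hwA, hw1⟩ := himg.ordConnected.out ⟨z i hik, hzA i hik, rfl⟩
      ⟨z (i+1) hik1, hzA (i+1) hik1, rfl⟩ ⟨h1, h2⟩
    rcases mem_segUnion.mp hwA with ⟨e, heS, hwe⟩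
    exact ⟨e, heS, ⟨w, hwe, hw1⟩, seg_horiz_strip (hsubK e heS) hwe hw1⟩
  have hgapV : ∀ i : ℕ, i + 1 < k → ∃ e ∈ S,
      (∃ w ∈ segment ℝ e.1 e.2, w.2 = 2*(i:ℝ)+3/2) ∧
      ∀ y ∈ segment ℝ e.1 e.2, y.1 = 2*(i:ℝ)+2 := by
    intro i hik1
    have hik : i < k := by omega
    have h1 : (z i hik).2 ≤ 2*(i:ℝ)+3/2 := by linarith [hz2 i hik]
    have h2 : 2*(i:ℝ)+3/2 ≤ (z (i+1) hik1).2 := by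
      have := hz2 (i+1) hik1
      push_cast at this
      linarith
    have himg : IsPreconnected (Prod.snd '' segUnion S) :=
      hpre.image _ continuous_snd.continuousOn
    obtain ⟨w, hwA, hw2⟩ := himg.ordConnected.out ⟨z i hik, hzA i hik, rfl⟩
      ⟨z (i+1) hik1, hzA (i+1) hik1, rfl⟩ ⟨h1, h2⟩
    rcases mem_segUnion.mp hwA with ⟨e, heS, hwe⟩
    exact ⟨e, heS, ⟨w, hwe, hw2⟩, seg_vert_strip (hsubK e heS) hwe hw2⟩
  choose sH hsH1 hsH2 hsH3 using hgapH
  choose sV hsV1 hsV2 hsV3 using hgapV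
  have hk0 : 0 < k := hk
  set G : ℕ → Pt × Pt := fun m =>
    if h : m + 1 < k then sH m h
    else if h2 : m < 2*(k-1) then sV (m-(k-1)) (by omega)
    else f 0 hk0 with hG
  have hmaps : ∀ m ∈ Finset.range (2*k-1), G m ∈ S := by
    intro m _
    by_cases h : m + 1 < k
    · simp only [hG, dif_pos h]
      exact hsH1 m h
    · by_cases h2 : m < 2*(k-1)
      · simp only [hG, dif_neg h, dif_pos h2]
        exact hsV1 _ _
      · simp only [hG, dif_neg h, dif_neg h2]
        exact hfS 0 hk0
  have distHH : ∀ (a b : ℕ) (ha : a+1<k) (hb : b+1<k), sH a ha = sH b hb → a = b := by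
    intro a b ha hb he
    obtain ⟨w, hw, hw1⟩ := hsH2 b hb
    have e1 : w.2 = 2*(b:ℝ)+1 := hsH3 b hb w hw
    have e2 : w.2 = 2*(a:ℝ)+1 := hsH3 a ha w (by rw [he]; exact hw)
    have : (2*a+1:ℕ) = 2*b+1 := ncast'' (by push_cast; linarith)
    omega
  have distVV : ∀ (a b : ℕ) (ha : a+1<k) (hb : b+1<k), sV a ha = sV b hb → a = b := by
    intro a b ha hb he
    obtain ⟨w, hw, hw2⟩ := hsV2 b hb
    have e1 : w.1 = 2*(b:ℝ)+2 := hsV3 b hb w hw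
    have e2 : w.1 = 2*(a:ℝ)+2 := hsV3 a ha w (by rw [he]; exact hw)
    have : (2*a+2:ℕ) = 2*b+2 := ncast'' (by push_cast; linarith)
    omega
  have distHV : ∀ (a b : ℕ) (ha : a+1<k) (hb : b+1<k), sH a ha ≠ sV b hb := by
    intro a b ha hb he
    obtain ⟨w, hw, hw1⟩ := hsH2 a ha
    have e1 : w.1 = 2*(b:ℝ)+2 := hsV3 b hb w (by rw [← he]; exact hw)
    have : (4*a+3:ℕ) = 4*b+4 := ncast'' (by push_cast; linarith)
    omega
  have distHU : ∀ (a : ℕ) (ha : a+1<k), sH a ha ≠ f 0 hk0 := by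
    intro a ha he
    have hm : z 0 hk0 ∈ segment ℝ (sH a ha).1 (sH a ha).2 := by
      rw [he]; exact hzseg 0 hk0
    have e1 : (z 0 hk0).2 = 2*(a:ℝ)+1 := hsH3 a ha _ hm
    have e2 := hz2 0 hk0
    push_cast at e2
    have : (1:ℕ) = 4*a+2 := ncast'' (by push_cast; linarith)
    omega
  have distVU : ∀ (a : ℕ) (ha : a+1<k), sV a ha ≠ f 0 hk0 := by
    intro a ha he
    have hm : z 0 hk0 ∈ segment ℝ (sV a ha).1 (sV a ha).2 := by
      rw [he]; exact hzseg 0 hk0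
    have e1 : (z 0 hk0).1 = 2*(a:ℝ)+2 := hsV3 a ha _ hm
    have e2 := hz4 0 hk0
    push_cast at e2
    have : (2*a+2:ℕ) ≤ 1 := ncast (by push_cast; linarith)
    omega
  have hinj : Set.InjOn G (Finset.range (2*k-1)) := by
    intro a ha b hb hab
    by_contra hne
    by_cases h1 : a + 1 < k <;> by_cases h2 : b + 1 < k
    · simp only [hG, dif_pos h1, dif_pos h2] at hab
      exact hne (distHH a b h1 h2 hab)
    · by_cases h3 : b < 2*(k-1)
      · simp only [hG, dif_pos h1, dif_neg h2, dif_pos h3] at hab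
        exact distHV a _ h1 _ hab
      · simp only [hG, dif_pos h1, dif_neg h2, dif_neg h3] at hab
        exact distHU a h1 hab
    · by_cases h3 : a < 2*(k-1)
      · simp only [hG, dif_neg h1, dif_pos h3, dif_pos h2] at hab
        exact distHV b _ h2 _ hab.symm
      · simp only [hG, dif_neg h1, dif_neg h3, dif_pos h2] at hab
        exact distHU b h2 hab.symm
    · by_cases h3 : a < 2*(k-1) <;> by_cases h4 : b < 2*(k-1)
      · simp only [hG, dif_neg h1, dif_neg h2, dif_pos h3, dif_pos h4] at hab
        have := distVV _ _ (by omega) (by omega) hab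
        omega
      · simp only [hG, dif_neg h1, dif_neg h2, dif_pos h3, dif_neg h4] at hab
        exact distVU _ _ hab
      · simp only [hG, dif_neg h1, dif_neg h2, dif_neg h3, dif_pos h4] at hab
        exact distVU _ _ hab.symm
      · have haR := Finset.mem_range.mp ha
        have hbR := Finset.mem_range.mp hb
        omega
  have hcard := Finset.card_le_card_of_injOn G hmaps hinj
  rwa [Finset.card_range] at hcard

end GapConstruction

open GapConstruction

/-- for every `k ≥ 1` there is a rectilinearly-convex obstacle whose
minimum skeleton `S₁` and minimum connected skeleton `S₂` satisfy `|S₁| ≥ k` and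
`|S₂| ≥ 2|S₁| - 1`; in particular the difference is unbounded. -/
theorem connected_skeleton_gap_unbounded :
    ∀ k : ℕ, 1 ≤ k →
      ∃ (ω : RectObstacle) (S₁ S₂ : Finset (Pt × Pt)),
        ω.IsMinSkeleton S₁ ∧ IsMinConnSkeleton ω S₂ ∧
        k ≤ S₁.card ∧ 2 * S₁.card - 1 ≤ S₂.card := by
  intro k hk
  classical
  have hP : ∃ n : ℕ, ∃ S : Finset (Pt × Pt), IsConnSkeleton (obstacle k hk) S ∧ S.card = n :=
    ⟨(SCF k).card, SCF k, SCF_connSkeleton k hk, rfl⟩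
  obtain ⟨S₂, hS₂, hcard⟩ := Nat.find_spec hP
  refine ⟨obstacle k hk, S1F k, S₂, S1_min k hk, ⟨hS₂, ?_⟩, ?_, ?_⟩
  · intro T hT
    rw [hcard]
    exact Nat.find_min' hP ⟨T, hT, rfl⟩
  · exact (S1F_card k).ge
  · rw [S1F_card]
    exact conn_lb hS₂
end
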